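/- arXiv:2505.11193 — 4 statements merged into one kernel-verified Lean document; each statement's English description precedes it below -/
import Mathlib

section
/- Let T be a finite tree that is not a path graph, and let S be the set of vertices obtained by choosing, for each exterior major vertex of T, all of its leaves except one. Let v_1 be a vertex of T that lies on a shortest path between two vertices of S and is not an exterior major vertex. Then for every vertex v_2 of T with v_2 ≠ v_1 and every integer α, Φ_T(v_1,S) ≠ Φ_T(v_2,S) + α·1, where 1 is the all-ones vector of length |S|. -/
open SimpleGraph

/-- The number of neighbours of `v` (in `G`) that lie in the vertex set `A`:
the degree of `v` in the subgraph of `G` induced by `A`. -/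
def degIn {V : Type*} [DecidableEq V] (G : SimpleGraph V) [DecidableRel G.Adj]
    (A : Finset V) (v : V) : ℕ :=
  (A.filter fun w => G.Adj v w).card

/-- Iterated stemming of the vertex set `A`: at each step remove the vertices of
(induced) degree at most 1. -/
def stemIter {V : Type*} [DecidableEq V] (G : SimpleGraph V) [DecidableRel G.Adj]
    (A : Finset V) : ℕ → Finset V
  | 0 => A
  | r + 1 => (stemIter G A r).filter fun v => 1 < degIn G (stemIter G A r) v

/-- The vertex set of `Stem_r(G)`. -/
def stemSet {V : Type*} [Fintype V] [DecidableEq V] (G : SimpleGraph V) [DecidableRel G.Adj]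
    (r : ℕ) : Finset V :=
  stemIter G Finset.univ r

/-- Iterated down-stemming of the vertex set `A` of a rooted graph: at each step remove
the vertices of (induced) degree at most 1, but always keep the root. -/
def downStemIter {V : Type*} [DecidableEq V] (G : SimpleGraph V) [DecidableRel G.Adj]
    (root : V) (A : Finset V) : ℕ → Finset V
  | 0 => A
  | r + 1 => (downStemIter G root A r).filter
      fun v => v = root ∨ 1 < degIn G (downStemIter G root A r) v

/-- In the subgraph of `G` induced by `A`, there is a leaf path from `v` to the leaf `u`:
a path from `v` to `u` inside `A`, all of whose internal vertices have induced degree 2,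
ending at a vertex `u` of induced degree 1. -/
def IsLeafPathIn {V : Type*} [DecidableEq V] (G : SimpleGraph V) [DecidableRel G.Adj]
    (A : Finset V) (v u : V) : Prop :=
  ∃ p : G.Walk v u, p.IsPath ∧ 0 < p.length ∧ (∀ w ∈ p.support, w ∈ A) ∧
    degIn G A u = 1 ∧ ∀ w ∈ p.support, w ≠ v → w ≠ u → degIn G A w = 2

/-- `v` is an exterior major vertex of the subgraph of `G` induced by `A`:
it has induced degree at least 3 and at least one adjacent leaf path. -/
def IsExtMajorIn {V : Type*} [DecidableEq V] (G : SimpleGraph V) [DecidableRel G.Adj]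
    (A : Finset V) (v : V) : Prop :=
  v ∈ A ∧ 3 ≤ degIn G A v ∧ ∃ u, IsLeafPathIn G A v u

/-- The number of exterior major vertices of the subgraph of `G` induced by `A`. -/
noncomputable def exIn {V : Type*} [DecidableEq V] (G : SimpleGraph V) [DecidableRel G.Adj]
    (A : Finset V) : ℕ :=
  {v | IsExtMajorIn G A v}.ncard

/-- The leaves (vertices of induced degree 1) of the subgraph of `G` induced by `A`. -/
def leavesIn {V : Type*} [DecidableEq V] (G : SimpleGraph V) [DecidableRel G.Adj]
    (A : Finset V) : Finset V :=
  A.filter fun v => degIn G A v = 1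

/-- The number of leaves of the subgraph of `G` induced by `A`. -/
def sigmaIn {V : Type*} [DecidableEq V] (G : SimpleGraph V) [DecidableRel G.Adj]
    (A : Finset V) : ℕ :=
  (leavesIn G A).card

/-- The subgraph of `G` induced by `A` is a path graph (possibly empty). -/
def IsPathGraphOn {V : Type*} (G : SimpleGraph V) (A : Finset V) : Prop :=
  ∃ n, Nonempty ((G.induce (A : Set V)) ≃g pathGraph n)

/-- `S` is a `k`-relaxed resolving set of `G`: any two vertices with the same
identification vector (distances to the vertices of `S`) are at distance at most `k`. -/
def IsRelaxedResolving {V : Type*} (G : SimpleGraph V) (k : ℕ) (S : Set V) : Prop :=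
  ∀ u v : V, (∀ s ∈ S, G.dist u s = G.dist v s) → G.dist u v ≤ k

/-- The `k`-relaxed metric dimension of `G`: the minimum cardinality of a `k`-relaxed
resolving set. -/
noncomputable def MDk {V : Type*} (G : SimpleGraph V) (k : ℕ) : ℕ :=
  sInf {n | ∃ S : Finset V, IsRelaxedResolving G k ↑S ∧ S.card = n}

/-- The set of descendants of `v` in the tree `G` rooted at `root` (including `v` itself):
the vertices `w` such that `v` lies on the path from `root` to `w`. -/
noncomputable def descSet {V : Type*} [Fintype V] (G : SimpleGraph V) (root v : V) :
    Finset V :=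
  Finset.univ.filter fun w => G.dist root v + G.dist v w = G.dist root w

/-- The height of the subtree `T_v` of the tree `G` rooted at `root`:
the maximal distance from `v` to one of its descendants. -/
noncomputable def heightAt {V : Type*} [Fintype V] (G : SimpleGraph V) (root v : V) : ℕ :=
  (descSet G root v).sup (G.dist v)

/-- `N^L_r(T)`: the number of vertices `v` whose subtree `T_v` has height exactly `r`. -/
noncomputable def NL {V : Type*} [Fintype V] (G : SimpleGraph V) (root : V) (r : ℕ) : ℕ :=
  (Finset.univ.filter fun v => heightAt G root v = r).card

/-- The subtree property `P^E_r` at `v`: in `Down-Stem_r(T_v)` the root `v` has degree at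
least two, and at least one of its child subtrees is a path to a leaf. -/
noncomputable def NEprop {V : Type*} [Fintype V] [DecidableEq V] (G : SimpleGraph V)
    [DecidableRel G.Adj] (root : V) (r : ℕ) (v : V) : Prop :=
  2 ≤ degIn G (downStemIter G v (descSet G root v) r) v ∧
    ∃ u, IsLeafPathIn G (downStemIter G v (descSet G root v) r) v u

/-- `N^E_r(T)`: the number of vertices satisfying the subtree property `P^E_r`. -/
noncomputable def NE {V : Type*} [Fintype V] [DecidableEq V] (G : SimpleGraph V)
    [DecidableRel G.Adj] (root : V) (r : ℕ) : ℕ :=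
  {v | NEprop G root r v}.ncard

namespace Stmt8Aux
set_option linter.unusedSectionVars false
set_option maxHeartbeats 1000000

variable {V : Type*} [DecidableEq V] {T : SimpleGraph V}
lemma isPath_of_length_eq_dist {u v : V} {p : T.Walk u v} (h : p.length = T.dist u v) :
    p.IsPath := by
  have h1 : p.length ≤ p.bypass.length := h ▸ SimpleGraph.dist_le p.bypass
  have h2 := p.bypass_eq_self_of_length_le h1
  rw [← h2]
  exact p.bypass_isPath

lemma path_length (hT : T.IsTree) {u v : V} {p : T.Walk u v} (hp : p.IsPath) :
    p.length = T.dist u v := by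
  obtain ⟨g, hg⟩ := hT.isConnected.exists_walk_length_eq_dist u v
  have hgp := isPath_of_length_eq_dist hg
  rw [(hT.existsUnique_path u v).unique hp hgp, hg]

lemma dist_getVert_le (hc : T.Connected) {u v : V} (p : T.Walk u v) :
    ∀ i, T.dist u (p.getVert i) ≤ i := by
  induction p with
  | nil => intro i; simp [SimpleGraph.Walk.getVert, SimpleGraph.dist_self]
  | @cons a b c h q ih =>
      intro i
      cases i with
      | zero => simp [SimpleGraph.Walk.getVert_zero, SimpleGraph.dist_self]
      | succ i =>
          rw [SimpleGraph.Walk.getVert_cons_succ]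
          calc T.dist a (q.getVert i) ≤ T.dist a b + T.dist b (q.getVert i) :=
                hc.dist_triangle
            _ ≤ 1 + i := by
                have h1 : T.dist a b = 1 := SimpleGraph.dist_eq_one_iff_adj.mpr h
                have := ih i
                omega
            _ = i + 1 := by omega

lemma getVert_dist_le (hc : T.Connected) {u v : V} (p : T.Walk u v) :
    ∀ i, T.dist (p.getVert i) v ≤ p.length - i := by
  induction p with
  | nil => intro i; simp [SimpleGraph.Walk.getVert, SimpleGraph.dist_self]
  | @cons a b c h q ih =>
      intro i
      cases i with
      | zero =>
          simp only [SimpleGraph.Walk.getVert_zero, SimpleGraph.Walk.length_cons]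
          calc T.dist a c ≤ T.dist a b + T.dist b c := hc.dist_triangle
            _ ≤ 1 + q.length := by
                have h1 : T.dist a b = 1 := SimpleGraph.dist_eq_one_iff_adj.mpr h
                have := SimpleGraph.dist_le q
                omega
            _ = q.length + 1 - 0 := by omega
      | succ i =>
          rw [SimpleGraph.Walk.getVert_cons_succ]
          have := ih i
          simpa [SimpleGraph.Walk.length_cons] using this

lemma geo_getVert (hc : T.Connected) {u v : V} {p : T.Walk u v}
    (hp : p.length = T.dist u v) {i : ℕ} (hi : i ≤ p.length) :
    T.dist u (p.getVert i) = i ∧ T.dist (p.getVert i) v = p.length - i := by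
  have h1 := dist_getVert_le hc p i
  have h2 := getVert_dist_le hc p i
  have h3 : T.dist u v ≤ T.dist u (p.getVert i) + T.dist (p.getVert i) v :=
    hc.dist_triangle
  omega

lemma fact1 (hT : T.IsTree) {a c x y : V}
    (hx : T.dist a x + T.dist x c = T.dist a c)
    (hy : T.dist a y + T.dist y c = T.dist a c)
    (hxy : T.dist a x = T.dist a y) : x = y := by
  obtain ⟨p1, hp1⟩ := hT.isConnected.exists_walk_length_eq_dist a x
  obtain ⟨p2, hp2⟩ := hT.isConnected.exists_walk_length_eq_dist x c
  obtain ⟨q1, hq1⟩ := hT.isConnected.exists_walk_length_eq_dist a y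
  obtain ⟨q2, hq2⟩ := hT.isConnected.exists_walk_length_eq_dist y c
  have hW1 : (p1.append p2).length = T.dist a c := by
    rw [SimpleGraph.Walk.length_append, hp1, hp2, hx]
  have hW2 : (q1.append q2).length = T.dist a c := by
    rw [SimpleGraph.Walk.length_append, hq1, hq2, hy]
  have hWP1 := isPath_of_length_eq_dist hW1
  have hWP2 := isPath_of_length_eq_dist hW2
  have heq := (hT.existsUnique_path a c).unique hWP1 hWP2
  have e1 : (p1.append p2).getVert (T.dist a x) = x := by
    rw [SimpleGraph.Walk.getVert_append]
    simp [hp1]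
  have e2 : (q1.append q2).getVert (T.dist a x) = y := by
    rw [SimpleGraph.Walk.getVert_append]
    simp [hq1, hxy]
  rw [← e1, heq, e2]

lemma isPath_append {a b c : V} {p : T.Walk a b} {q : T.Walk b c}
    (hp : p.IsPath) (hq : q.IsPath)
    (hint : ∀ z, z ∈ p.support → z ∈ q.support → z = b) :
    (p.append q).IsPath := by
  rw [SimpleGraph.Walk.isPath_def, SimpleGraph.Walk.support_append]
  apply List.Nodup.append hp.support_nodup
  · have := hq.support_nodup
    rw [q.support_eq_cons] at this
    exact this.of_cons
  · intro z hz1 hz2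
    have hz2' : z ∈ q.support := List.mem_of_mem_tail hz2
    have hzb := hint z hz1 hz2'
    subst hzb
    have := hq.support_nodup
    rw [q.support_eq_cons] at this
    exact (List.nodup_cons.mp this).1 hz2

lemma adj_dist_ne (hT : T.IsTree) {r x y : V} (h : T.Adj x y) :
    T.dist r x ≠ T.dist r y := by
  intro heq
  obtain ⟨p, hp⟩ := hT.isConnected.exists_walk_length_eq_dist r x
  have hpp := isPath_of_length_eq_dist hp
  have hy : y ∉ p.support := by
    intro hy
    obtain ⟨i, hiv, hil⟩ := SimpleGraph.Walk.mem_support_iff_exists_getVert.mp hy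
    have := (geo_getVert hT.isConnected hp hil).1
    rw [hiv] at this
    have : i = p.length := by omega
    rw [this, SimpleGraph.Walk.getVert_length] at hiv
    exact (h.ne hiv).elim
  have hq : (SimpleGraph.Walk.cons h (SimpleGraph.Walk.nil)).IsPath := by
    simp [SimpleGraph.Walk.isPath_def, h.ne]
  have hcp : (p.concat h).IsPath := by
    rw [SimpleGraph.Walk.concat_eq_append]
    apply isPath_append hpp hq
    intro z hz1 hz2
    simp only [SimpleGraph.Walk.support_cons, SimpleGraph.Walk.support_nil,
      List.mem_cons, List.mem_singleton, List.not_mem_nil, or_false] at hz2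
    rcases hz2 with rfl | rfl
    · rfl
    · exact absurd hz1 hy
  have := path_length hT hcp
  rw [SimpleGraph.Walk.length_concat, hp, ← heq] at this
  omega

/-- first step on a geodesic from r to x -/
lemma exists_first (hc : T.Connected) {r x : V} (h : r ≠ x) :
    ∃ n, T.Adj r n ∧ T.dist r n = 1 ∧ T.dist r x = 1 + T.dist n x := by
  obtain ⟨p, hp⟩ := hc.exists_walk_length_eq_dist r x
  have hk : 0 < p.length := by
    rcases Nat.eq_zero_or_pos p.length with h0 | h1
    · exact absurd (SimpleGraph.Walk.eq_of_length_eq_zero h0) h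
    · exact h1
  refine ⟨p.getVert 1, ?_, ?_, ?_⟩
  · have := p.adj_getVert_succ (i := 0) hk
    simpa using this
  · exact (geo_getVert hc hp (by omega)).1
  · have := (geo_getVert hc hp (i := 1) (by omega)).2
    omega

/-- last step on a geodesic from r to x (parent of x) -/
lemma exists_parent (hc : T.Connected) {r x : V} (h : r ≠ x) :
    ∃ n, T.Adj n x ∧ T.dist r n + 1 = T.dist r x := by
  obtain ⟨p, hp⟩ := hc.exists_walk_length_eq_dist r x
  have hk : 0 < p.length := by
    rcases Nat.eq_zero_or_pos p.length with h0 | h1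
    · exact absurd (SimpleGraph.Walk.eq_of_length_eq_zero h0) h
    · exact h1
  refine ⟨p.getVert (p.length - 1), ?_, ?_⟩
  · have := p.adj_getVert_succ (i := p.length - 1) (by omega)
    have he : p.length - 1 + 1 = p.length := by omega
    rw [he, SimpleGraph.Walk.getVert_length] at this
    exact this
  · have := (geo_getVert hc hp (i := p.length - 1) (by omega)).1
    omega

lemma median (hT : T.IsTree) (x y z : V) :
    ∃ m, T.dist x y = T.dist x m + T.dist m y ∧ T.dist x z = T.dist x m + T.dist m z ∧
      T.dist y z = T.dist y m + T.dist m z := by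
  classical
  obtain ⟨p, hp⟩ := hT.isConnected.exists_walk_length_eq_dist y z
  have hpp := isPath_of_length_eq_dist hp
  have hne : p.support.toFinset.Nonempty :=
    ⟨y, List.mem_toFinset.mpr p.start_mem_support⟩
  obtain ⟨m, hm, hmin⟩ := Finset.exists_min_image p.support.toFinset (T.dist x) hne
  have hmsup : m ∈ p.support := List.mem_toFinset.mp hm
  have hmin' : ∀ w ∈ p.support, T.dist x m ≤ T.dist x w := fun w hw =>
    hmin w (List.mem_toFinset.mpr hw)
  obtain ⟨A, hA⟩ := hT.isConnected.exists_walk_length_eq_dist x m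
  have hAp := isPath_of_length_eq_dist hA
  -- key: any vertex on A and on p equals m
  have hkey : ∀ w, w ∈ A.support → w ∈ p.support → w = m := by
    intro w hwA hwp
    obtain ⟨i, hiv, hil⟩ := SimpleGraph.Walk.mem_support_iff_exists_getVert.mp hwA
    have hgv := geo_getVert hT.isConnected hA hil
    rw [hiv] at hgv
    have h1 : T.dist x w = i := hgv.1
    have h2 : T.dist w m = A.length - i := hgv.2
    have h3 := hmin' w hwp
    have : T.dist w m = 0 := by omega
    exact (hT.isConnected.dist_eq_zero_iff).mp this
  set B1 := p.takeUntil m hmsup with hB1def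
  set B2 := p.dropUntil m hmsup with hB2def
  have hB1p : B1.IsPath := hpp.takeUntil hmsup
  have hB2p : B2.IsPath := hpp.dropUntil hmsup
  have hB1sub : ∀ w ∈ B1.support, w ∈ p.support := fun w hw =>
    p.support_takeUntil_subset hmsup hw
  have hB2sub : ∀ w ∈ B2.support, w ∈ p.support := fun w hw =>
    p.support_dropUntil_subset hmsup hw
  have hlen : B1.length + B2.length = p.length := by
    have := congrArg SimpleGraph.Walk.length (p.take_spec hmsup)
    rw [SimpleGraph.Walk.length_append] at this
    exact this
  have hB1len : B1.length = T.dist y m := path_length hT hB1p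
  have hB2len : B2.length = T.dist m z := path_length hT hB2p
  -- walk x -> z through m
  have hW2 : (A.append B2).IsPath := by
    apply isPath_append hAp hB2p
    intro w hw1 hw2
    exact hkey w hw1 (hB2sub w hw2)
  have hdxz : T.dist x z = T.dist x m + T.dist m z := by
    have := path_length hT hW2
    rw [SimpleGraph.Walk.length_append, hA, hB2len] at this
    omega
  -- walk x -> y through m
  have hW1 : (A.append B1.reverse).IsPath := by
    apply isPath_append hAp hB1p.reverse
    intro w hw1 hw2
    rw [SimpleGraph.Walk.support_reverse, List.mem_reverse] at hw2
    exact hkey w hw1 (hB1sub w hw2)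
  have hdxy : T.dist x y = T.dist x m + T.dist m y := by
    have := path_length hT hW1
    rw [SimpleGraph.Walk.length_append, hA, SimpleGraph.Walk.length_reverse, hB1len] at this
    have hmy : T.dist y m = T.dist m y := SimpleGraph.dist_comm ..
    omega
  have hdyz : T.dist y z = T.dist y m + T.dist m z := by
    rw [← hp, ← hlen, hB1len, hB2len]
  exact ⟨m, hdxy, hdxz, hdyz⟩


variable [Fintype V] [DecidableRel T.Adj]

lemma two_le_degIn {w y₁ y₂ : V} (h1 : T.Adj w y₁) (h2 : T.Adj w y₂) (hne : y₁ ≠ y₂) :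
    2 ≤ degIn T Finset.univ w := by
  have : 1 < (Finset.univ.filter fun y => T.Adj w y).card :=
    Finset.one_lt_card.mpr ⟨y₁, by simp [h1], y₂, by simp [h2], hne⟩
  exact this

lemma main (hT : T.IsTree) (S : Finset V) (f : V → V)
    (hS : ∀ x : V, x ∉ S → ∀ v', IsExtMajorIn T Finset.univ v' →
      IsLeafPathIn T Finset.univ v' x → x = f v') (r : V) :
    ∀ N : ℕ, ∀ v b : V, T.Adj v b → T.dist r b = T.dist r v + 1 →
      (Finset.univ.filter (fun y => T.dist r y = T.dist r b + T.dist b y)).card ≤ N →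
      (∀ s ∈ S, T.dist r s ≠ T.dist r b + T.dist b s) →
      ∃ x, T.dist r x = T.dist r b + T.dist b x ∧ IsLeafPathIn T Finset.univ v x := by
  have hc := hT.isConnected
  intro N
  induction N with
  | zero =>
      intro v b hadj hrb hcard _
      exfalso
      have hb : b ∈ Finset.univ.filter (fun y => T.dist r y = T.dist r b + T.dist b y) := by
        simp [SimpleGraph.dist_self]
      have := Finset.card_pos.mpr ⟨b, hb⟩
      omega
  | succ N ih =>
      intro v b hadj hrb hcard hSnot
      set D := Finset.univ.filter (fun y => T.dist r y = T.dist r b + T.dist b y) with hDdef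
      have hmemD : ∀ y, y ∈ D ↔ T.dist r y = T.dist r b + T.dist b y := by
        intro y; simp [hDdef]
      have hbD : b ∈ D := (hmemD b).mpr (by simp [SimpleGraph.dist_self])
      -- pick the farthest element of D
      obtain ⟨ℓ, hℓD, hℓmax⟩ := Finset.exists_max_image D (T.dist r) ⟨b, hbD⟩
      have hℓanc : T.dist r ℓ = T.dist r b + T.dist b ℓ := (hmemD ℓ).mp hℓD
      have hrbpos : 1 ≤ T.dist r b := by omega
      -- every neighbor of ℓ is strictly closer to r
      have hleafnb : ∀ y, T.Adj ℓ y → T.dist r y + 1 = T.dist r ℓ := by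
        intro y hy
        have hne := adj_dist_ne hT (r := r) hy
        have h1 : T.dist ℓ y = 1 := SimpleGraph.dist_eq_one_iff_adj.mpr hy
        have t1 : T.dist r y ≤ T.dist r ℓ + T.dist ℓ y := hc.dist_triangle
        have t2 : T.dist r ℓ ≤ T.dist r y + T.dist y ℓ := hc.dist_triangle
        have h1' : T.dist y ℓ = 1 := by rwa [SimpleGraph.dist_comm] at h1
        -- rule out dist r y = dist r ℓ + 1
        by_contra hcon
        have hup : T.dist r y = T.dist r ℓ + 1 := by omega
        have hyD : y ∈ D := by
          rw [hmemD]
          have tb1 : T.dist b y ≤ T.dist b ℓ + 1 := by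
            have := hc.dist_triangle (u := b) (v := ℓ) (w := y)
            omega
          have tb2 : T.dist r y ≤ T.dist r b + T.dist b y := hc.dist_triangle
          omega
        have := hℓmax y hyD
        omega
      -- ℓ is a leaf
      have hℓr : ℓ ≠ r := by
        intro h
        rw [h, SimpleGraph.dist_self] at hℓanc
        omega
      obtain ⟨pa, hpaadj, hpadist⟩ := exists_parent hc (Ne.symm hℓr)
      have hnbeq : ∀ y, T.Adj ℓ y → y = pa := by
        intro y hy
        have h1 := hleafnb y hy
        apply fact1 hT (a := r) (c := ℓ)
        · have : T.dist y ℓ = 1 := SimpleGraph.dist_eq_one_iff_adj.mpr hy.symm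
          omega
        · have : T.dist pa ℓ = 1 := SimpleGraph.dist_eq_one_iff_adj.mpr hpaadj
          omega
        · have h2 := hleafnb pa hpaadj.symm
          omega
      have hdegℓ : degIn T Finset.univ ℓ = 1 := by
        have : (Finset.univ.filter fun y => T.Adj ℓ y) = {pa} := by
          apply Finset.eq_singleton_iff_unique_mem.mpr
          exact ⟨by simp [hpaadj.symm], fun y hy => hnbeq y (by simpa using hy)⟩
        simp [degIn, this]
      -- the geodesic from v to ℓ through b
      have hvl : T.dist v ℓ = 1 + T.dist b ℓ := by
        have t1 : T.dist v ℓ ≤ T.dist v b + T.dist b ℓ := hc.dist_triangle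
        have t2 : T.dist r ℓ ≤ T.dist r v + T.dist v ℓ := hc.dist_triangle
        have h1 : T.dist v b = 1 := SimpleGraph.dist_eq_one_iff_adj.mpr hadj
        omega
      obtain ⟨gb, hgb⟩ := hc.exists_walk_length_eq_dist b ℓ
      set p := SimpleGraph.Walk.cons hadj gb with hpdef
      have hplen : p.length = T.dist v ℓ := by
        rw [hpdef, SimpleGraph.Walk.length_cons, hgb]; omega
      have hpp : p.IsPath := isPath_of_length_eq_dist hplen
      set L := p.length with hLdef
      have hL1 : 1 ≤ L := by
        rw [hLdef, hpdef, SimpleGraph.Walk.length_cons]; omega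
      have hrl : T.dist r ℓ = T.dist r v + L := by omega
      -- getVert facts
      have hgv : ∀ i ≤ L, T.dist r (p.getVert i) = T.dist r v + i := by
        intro i hi
        obtain ⟨g1, g2⟩ := geo_getVert hc hplen hi
        have t1 : T.dist r (p.getVert i) ≤ T.dist r v + i := by
          have := hc.dist_triangle (u := r) (v := v) (w := p.getVert i)
          omega
        have t2 : T.dist r ℓ ≤ T.dist r (p.getVert i) + T.dist (p.getVert i) ℓ :=
          hc.dist_triangle
        omega
      have hgvb : ∀ i, 1 ≤ i → i ≤ L → T.dist b (p.getVert i) = i - 1 := by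
        intro i h1 hi
        obtain ⟨j, rfl⟩ : ∃ j, i = j + 1 := ⟨i - 1, by omega⟩
        have : p.getVert (j+1) = gb.getVert j := by
          rw [hpdef, SimpleGraph.Walk.getVert_cons_succ]
        rw [this]
        have hj : j ≤ gb.length := by
          have : gb.length = L - 1 := by rw [hLdef, hpdef, SimpleGraph.Walk.length_cons]; omega
          omega
        have := (geo_getVert hc hgb hj).1
        omega
      have hgvD : ∀ i, 1 ≤ i → i ≤ L → (p.getVert i) ∈ D := by
        intro i h1 hi
        rw [hmemD, hgv i hi, hgvb i h1 hi]
        omega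
      -- degree two for internal vertices above a threshold
      have hdeg2 : ∀ i, 1 ≤ i → i + 1 ≤ L → ¬ (3 ≤ degIn T Finset.univ (p.getVert i)) →
          degIn T Finset.univ (p.getVert i) = 2 := by
        intro i h1 hi h3
        have ha1 : T.Adj (p.getVert i) (p.getVert (i-1)) := by
          have := p.adj_getVert_succ (i := i - 1) (by omega)
          have he : i - 1 + 1 = i := by omega
          rw [he] at this
          exact this.symm
        have ha2 : T.Adj (p.getVert i) (p.getVert (i+1)) := p.adj_getVert_succ (by omega)
        have hne : p.getVert (i-1) ≠ p.getVert (i+1) := by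
          intro h
          have e1 := hgv (i-1) (by omega)
          have e2 := hgv (i+1) (by omega)
          rw [h] at e1
          omega
        have := two_le_degIn ha1 ha2 hne
        omega
      -- the set of interior high-degree indices
      set Ifin := (Finset.range (L+1)).filter
        (fun i => 1 ≤ i ∧ i + 1 ≤ L ∧ 3 ≤ degIn T Finset.univ (p.getVert i)) with hIdef
      by_cases hI : Ifin.Nonempty
      · -- Case A : an interior major vertex exists; derive a contradiction
        exfalso
        obtain ⟨j, hjmem, hjmax⟩ : ∃ j ∈ Ifin, ∀ i ∈ Ifin, i ≤ j :=
          ⟨Ifin.max' hI, Ifin.max'_mem hI, fun i hi => Finset.le_max' Ifin i hi⟩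
        rw [hIdef, Finset.mem_filter, Finset.mem_range] at hjmem
        obtain ⟨hjr, hj1, hjL, hj3⟩ := hjmem
        set v' := p.getVert j with hv'def
        have hjtop : ∀ i, j < i → i + 1 ≤ L → degIn T Finset.univ (p.getVert i) = 2 := by
          intro i hji hiL
          apply hdeg2 i (by omega) hiL
          intro h3'
          have : i ∈ Ifin := by
            rw [hIdef, Finset.mem_filter, Finset.mem_range]
            exact ⟨by omega, by omega, hiL, h3'⟩
          have := hjmax i this
          omega
        have hv'sup : v' ∈ p.support :=
          SimpleGraph.Walk.mem_support_iff_exists_getVert.mpr ⟨j, rfl, by omega⟩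
        set w := p.dropUntil v' hv'sup with hwdef
        have hwp : w.IsPath := hpp.dropUntil hv'sup
        have hv'l : T.dist v' ℓ = L - j := (geo_getVert hc hplen (by omega : j ≤ L)).2
        have hwlen : w.length = L - j := by rw [path_length hT hwp, hv'l]
        have hwgeo : w.length = T.dist v' ℓ := by omega
        -- leaf path from v' to ℓ
        have hlp : IsLeafPathIn T Finset.univ v' ℓ := by
          refine ⟨w, hwp, by omega, fun _ _ => Finset.mem_univ _, hdegℓ, ?_⟩
          intro z hz hzv hzl
          obtain ⟨t, htv, htl⟩ := SimpleGraph.Walk.mem_support_iff_exists_getVert.mp hz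
          have hgt := geo_getVert hc hwgeo htl
          rw [htv] at hgt
          have hzp : z ∈ p.support := p.support_dropUntil_subset hv'sup hz
          obtain ⟨i, hiv, hil⟩ := SimpleGraph.Walk.mem_support_iff_exists_getVert.mp hzp
          have hgi := geo_getVert hc hplen hil
          rw [hiv] at hgi
          have ht0 : t ≠ 0 := by
            intro h
            rw [h, SimpleGraph.Walk.getVert_zero] at htv
            exact hzv htv.symm
          have hiL : i ≠ L := by
            intro h
            rw [h] at hgi
            have : T.dist z ℓ = 0 := by omega
            exact hzl (hc.dist_eq_zero_iff.mp this)
          have hij : i = j + t := by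
            have e1 : T.dist z ℓ = L - j - t := by omega
            have e2 : T.dist z ℓ = L - i := hgi.2
            omega
          rw [← hiv]
          exact hjtop i (by omega) (by omega)
        have hext : IsExtMajorIn T Finset.univ v' := ⟨Finset.mem_univ _, hj3, ℓ, hlp⟩
        have hℓS : ℓ ∉ S := fun h => hSnot ℓ h hℓanc
        have hℓf : ℓ = f v' := hS ℓ hℓS v' hext hlp
        have hpa' : T.dist r (p.getVert (j-1)) = T.dist r v + (j-1) := hgv (j-1) (by omega)
        have hch' : T.dist r (p.getVert (j+1)) = T.dist r v + (j+1) := hgv (j+1) (by omega)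
        have hv'r : T.dist r v' = T.dist r v + j := hgv j (by omega)
        have hpaadj' : T.Adj (p.getVert (j-1)) v' := by
          have := p.adj_getVert_succ (i := j - 1) (by omega)
          have he : j - 1 + 1 = j := by omega
          rw [he] at this
          exact this
        have hchadj : T.Adj v' (p.getVert (j+1)) := p.adj_getVert_succ (by omega)
        obtain ⟨b', hb'adj, hb'ne1, hb'ne2⟩ :
            ∃ b', T.Adj v' b' ∧ b' ≠ p.getVert (j-1) ∧ b' ≠ p.getVert (j+1) := by
          by_contra hcon
          push_neg at hcon
          have hsub : (Finset.univ.filter fun y => T.Adj v' y) ⊆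
              insert (p.getVert (j-1)) {p.getVert (j+1)} := by
            intro y hy
            simp only [Finset.mem_filter, Finset.mem_univ, true_and] at hy
            simp only [Finset.mem_insert, Finset.mem_singleton]
            by_cases h : y = p.getVert (j-1)
            · exact Or.inl h
            · exact Or.inr (hcon y hy h)
          have h1 := Finset.card_le_card hsub
          have h2 := Finset.card_insert_le (p.getVert (j-1)) ({p.getVert (j+1)} : Finset V)
          simp only [Finset.card_singleton] at h2
          have h3 : degIn T Finset.univ v' ≤ 2 := by
            have : degIn T Finset.univ v' = (Finset.univ.filter fun y => T.Adj v' y).card := rfl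
            omega
          omega
        have hb'v' : T.dist v' b' = 1 := SimpleGraph.dist_eq_one_iff_adj.mpr hb'adj
        have hb'dist : T.dist r b' = T.dist r v' + 1 := by
          have hne := adj_dist_ne hT (r := r) hb'adj
          have t1 : T.dist r b' ≤ T.dist r v' + T.dist v' b' := hc.dist_triangle
          have t2 : T.dist r v' ≤ T.dist r b' + T.dist b' v' := hc.dist_triangle
          have hb'v2 : T.dist b' v' = 1 := by rwa [SimpleGraph.dist_comm] at hb'v'
          by_contra hcon2
          have hdown : T.dist r b' + 1 = T.dist r v' := by omega
          apply hb'ne1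
          apply fact1 hT (a := r) (c := v')
          · omega
          · have hpav : T.dist (p.getVert (j-1)) v' = 1 :=
              SimpleGraph.dist_eq_one_iff_adj.mpr hpaadj'
            omega
          · omega
        have hbv'd : T.dist b v' = j - 1 := hgvb j (by omega) (by omega)
        have hb'anc : T.dist r b' = T.dist r b + T.dist b b' := by
          have t1 : T.dist b b' ≤ T.dist b v' + T.dist v' b' := hc.dist_triangle
          have t2 : T.dist r b' ≤ T.dist r b + T.dist b b' := hc.dist_triangle
          omega
        have hsub' : ∀ y, T.dist r y = T.dist r b' + T.dist b' y →
            T.dist r y = T.dist r b + T.dist b y := by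
          intro y hy
          have t1 : T.dist b y ≤ T.dist b b' + T.dist b' y := hc.dist_triangle
          have t2 : T.dist r y ≤ T.dist r b + T.dist b y := hc.dist_triangle
          omega
        have hDsub : (Finset.univ.filter fun y => T.dist r y = T.dist r b' + T.dist b' y)
            ⊆ D := by
          intro y hy
          rw [Finset.mem_filter] at hy
          exact (hmemD y).mpr (hsub' y hy.2)
        have hℓnot : ℓ ∉ (Finset.univ.filter fun y =>
            T.dist r y = T.dist r b' + T.dist b' y) := by
          intro hmem
          rw [Finset.mem_filter] at hmem
          have hb'l : T.dist b' ℓ = L - j - 1 := by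
            have := hmem.2
            omega
          apply hb'ne2
          apply fact1 hT (a := v') (c := ℓ)
          · omega
          · have h1 : T.dist v' (p.getVert (j+1)) = 1 :=
              SimpleGraph.dist_eq_one_iff_adj.mpr hchadj
            have h2 : T.dist (p.getVert (j+1)) ℓ = L - (j+1) :=
              (geo_getVert hc hplen (by omega : j + 1 ≤ L)).2
            omega
          · have h1 : T.dist v' (p.getVert (j+1)) = 1 :=
              SimpleGraph.dist_eq_one_iff_adj.mpr hchadj
            omega
        have hcard' : (Finset.univ.filter fun y =>
            T.dist r y = T.dist r b' + T.dist b' y).card ≤ N := by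
          have hss : (Finset.univ.filter fun y =>
              T.dist r y = T.dist r b' + T.dist b' y) ⊂ D :=
            ⟨hDsub, fun hcon => hℓnot (hcon hℓD)⟩
          have := Finset.card_lt_card hss
          omega
        have hSnot' : ∀ s ∈ S, T.dist r s ≠ T.dist r b' + T.dist b' s :=
          fun s hs h => hSnot s hs (hsub' s h)
        obtain ⟨x, hxanc, hxlp⟩ := ih v' b' hb'adj (by omega) hcard' hSnot'
        have hxS : x ∉ S := fun h => hSnot x h (hsub' x hxanc)
        have hxf : x = f v' := hS x hxS v' hext hxlp
        have hxl : x = ℓ := by rw [hxf, hℓf]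
        rw [hxl] at hxanc
        exact hℓnot (Finset.mem_filter.mpr ⟨Finset.mem_univ _, hxanc⟩)
      · -- Case B : pendant path, ℓ is a leaf reachable by a leaf path from v
        refine ⟨ℓ, hℓanc, p, hpp, by omega, fun _ _ => Finset.mem_univ _, hdegℓ, ?_⟩
        intro z hz hzv hzl
        obtain ⟨i, hiv, hil⟩ := SimpleGraph.Walk.mem_support_iff_exists_getVert.mp hz
        have hi0 : i ≠ 0 := by
          intro h
          rw [h, SimpleGraph.Walk.getVert_zero] at hiv
          exact hzv hiv.symm
        have hiL : i ≠ L := by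
          intro h
          rw [h, hLdef, SimpleGraph.Walk.getVert_length] at hiv
          exact hzl hiv.symm
        rw [← hiv]
        apply hdeg2 i (by omega) (by omega)
        intro h3
        exact hI ⟨i, by
          rw [hIdef, Finset.mem_filter, Finset.mem_range]
          exact ⟨by omega, by omega, by omega, h3⟩⟩

end Stmt8Aux

open Stmt8Aux

/-- Let `T` be a finite tree that is not a path graph, and let `S` be
obtained by choosing, for each exterior major vertex of `T`, all of its leaves except one
(the exception being given by the choice function `f`). If `v₁` lies on a shortest path
between two vertices of `S` and is not an exterior major vertex, then the identification
vector of `v₁` does not differ from the identification vector of any other vertex of `T`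
by a constant shift `α·1`. -/
theorem stmt_8 {V : Type*} [Fintype V] [DecidableEq V] (T : SimpleGraph V)
    [DecidableRel T.Adj] (hT : T.IsTree) (hnp : ¬ IsPathGraphOn T Finset.univ)
    (S : Finset V) (f : V → V)
    (hf : ∀ v : V, IsExtMajorIn T Finset.univ v → IsLeafPathIn T Finset.univ v (f v))
    (hSdef : ∀ x : V, x ∈ S ↔ ∃ v : V, IsExtMajorIn T Finset.univ v ∧
      IsLeafPathIn T Finset.univ v x ∧ x ≠ f v)
    (v₁ q q' : V) (hq : q ∈ S) (hq' : q' ∈ S)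
    (hon : T.dist q v₁ + T.dist v₁ q' = T.dist q q')
    (hnotext : ¬ IsExtMajorIn T Finset.univ v₁) :
    ∀ v₂ : V, v₂ ≠ v₁ → ∀ α : ℤ,
      ¬ (∀ s ∈ S, (T.dist v₁ s : ℤ) = (T.dist v₂ s : ℤ) + α) := by
  intro v₂ hv₂ α H
  have hc := hT.isConnected
  have hcomm : ∀ a b : V, T.dist a b = T.dist b a := fun a b => SimpleGraph.dist_comm ..
  have hS' : ∀ x : V, x ∉ S → ∀ v', IsExtMajorIn T Finset.univ v' →
      IsLeafPathIn T Finset.univ v' x → x = f v' := by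
    intro x hx v' h1 h2
    by_contra hne
    exact hx ((hSdef x).mpr ⟨v', h1, h2, hne⟩)
  have Hq := H q hq
  have Hq' := H q' hq'
  have tri : T.dist q q' ≤ T.dist q v₂ + T.dist v₂ q' := hc.dist_triangle
  have cq : T.dist v₁ q = T.dist q v₁ := hcomm ..
  have cq' : T.dist v₂ q = T.dist q v₂ := hcomm ..
  have hα : α ≤ 0 := by omega
  rcases lt_or_eq_of_le hα with hneg | h0
  · -- α < 0
    set n := (-α).toNat with hndef
    have hn : (n : ℤ) = -α := Int.toNat_of_nonneg (by omega)
    have hn1 : 1 ≤ n := by omega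
    have Hs : ∀ s ∈ S, T.dist v₂ s = T.dist v₁ s + n := by
      intro s hs
      have := H s hs
      omega
    obtain ⟨m, med1, med2, med3⟩ := median hT v₂ q q'
    have hdv2q := Hs q hq
    have hdv2q' := Hs q' hq'
    have cm : T.dist q m = T.dist m q := hcomm ..
    have hmv : m = v₁ := by
      apply fact1 hT (a := q) (c := q')
      · omega
      · exact hon
      · omega
    rw [hmv] at med1
    have cv12 : T.dist v₂ v₁ = T.dist v₁ v₂ := hcomm ..
    have hD : T.dist v₁ v₂ = n := by omega
    have hv₁v₂ : v₁ ≠ v₂ := fun h => hv₂ h.symm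
    obtain ⟨c, hcadj, hcd1, hcd2⟩ := exists_first hc hv₁v₂
    have hSD : ∀ s ∈ S, T.dist v₁ s ≠ T.dist v₁ c + T.dist c s := by
      intro s hs heq
      have h1 := Hs s hs
      have t1 : T.dist v₂ s ≤ T.dist v₂ c + T.dist c s := hc.dist_triangle
      have h2 : T.dist v₂ c = T.dist c v₂ := hcomm ..
      omega
    obtain ⟨x, hxanc, hxlp⟩ := main hT S f hS' v₁ _ v₁ c hcadj
      (by rw [SimpleGraph.dist_self]; omega) le_rfl hSD
    have hdegv₁ : ¬ 3 ≤ degIn T Finset.univ v₁ := fun h3 =>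
      hnotext ⟨Finset.mem_univ _, h3, x, hxlp⟩
    by_cases hqv : q = v₁
    · -- q = v₁ : v₁ is in S, hence a leaf; then S = {v₁}
      have hv₁S : v₁ ∈ S := hqv ▸ hq
      obtain ⟨u', hu'ext, hu'lp, hu'ne⟩ := (hSdef v₁).mp hv₁S
      obtain ⟨pw, -, -, -, hdeg1, -⟩ := id hu'lp
      have huniq : ∀ y, T.Adj v₁ y → y = c := by
        intro y hy
        by_contra hne
        have := two_le_degIn hy hcadj hne
        omega
      have hSv₁ : ∀ s ∈ S, s = v₁ := by
        intro s hs
        by_contra hne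
        obtain ⟨ns, hnsadj, hns1, hns2⟩ := exists_first hc (fun h => hne h.symm)
        have hnsc := huniq ns hnsadj
        rw [hnsc] at hns2
        exact hSD s hs (by omega)
      obtain ⟨-, hu'deg, -⟩ := hu'ext
      have hu'v₁ : u' ≠ v₁ := by
        intro h
        rw [h] at hu'deg
        omega
      set Nu := Finset.univ.filter (fun y => T.Adj u' y) with hNudef
      set Cu := Nu.filter (fun y => T.dist v₁ y = T.dist v₁ u' + 1) with hCudef
      have hmemNu : ∀ y, y ∈ Nu ↔ T.Adj u' y := by intro y; simp [hNudef]
      have hNC : ∀ y ∈ Nu, y ∉ Cu → T.dist v₁ y + 1 = T.dist v₁ u' := by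
        intro y hy hyc
        have hadjy : T.Adj u' y := (hmemNu y).mp hy
        have hne := adj_dist_ne hT (r := v₁) hadjy
        have h1 : T.dist u' y = 1 := SimpleGraph.dist_eq_one_iff_adj.mpr hadjy
        have t1 : T.dist v₁ y ≤ T.dist v₁ u' + T.dist u' y := hc.dist_triangle
        have t2 : T.dist v₁ u' ≤ T.dist v₁ y + T.dist y u' := hc.dist_triangle
        have h2 : T.dist y u' = 1 := by rwa [hcomm] at h1
        have hnotup : T.dist v₁ y ≠ T.dist v₁ u' + 1 := by
          intro h
          exact hyc (by rw [hCudef, Finset.mem_filter]; exact ⟨hy, h⟩)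
        omega
      have hcard1 : (Nu \ Cu).card ≤ 1 := by
        apply Finset.card_le_one.mpr
        intro a ha b hb
        rw [Finset.mem_sdiff] at ha hb
        have e1 := hNC a ha.1 ha.2
        have e2 := hNC b hb.1 hb.2
        have ha1 : T.dist a u' = 1 :=
          SimpleGraph.dist_eq_one_iff_adj.mpr ((hmemNu a).mp ha.1).symm
        have hb1 : T.dist b u' = 1 :=
          SimpleGraph.dist_eq_one_iff_adj.mpr ((hmemNu b).mp hb.1).symm
        apply fact1 hT (a := v₁) (c := u') <;> omega
      have hCu2 : 2 ≤ Cu.card := by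
        have hsub : Cu ⊆ Nu := Finset.filter_subset _ _
        have := Finset.card_sdiff_add_card_eq_card hsub
        have hNu3 : 3 ≤ Nu.card := hu'deg
        omega
      obtain ⟨b₁, hb₁, b₂, hb₂, hbne⟩ := Finset.one_lt_card.mp hCu2
      have hfu := hf u' ⟨Finset.mem_univ _, hu'deg, v₁, hu'lp⟩
      have hbgood : ∃ b'' ∈ Cu, ¬ (T.dist v₁ (f u') = T.dist v₁ b'' + T.dist b'' (f u')) := by
        by_contra hcon
        push_neg at hcon
        have h1 := hcon b₁ hb₁
        have h2 := hcon b₂ hb₂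
        have hd1 : T.dist v₁ b₁ = T.dist v₁ u' + 1 :=
          (Finset.mem_filter.mp hb₁).2
        have hd2 : T.dist v₁ b₂ = T.dist v₁ u' + 1 :=
          (Finset.mem_filter.mp hb₂).2
        exact hbne (fact1 hT (a := v₁) (c := f u') (by omega) (by omega) (by omega))
      obtain ⟨b'', hb''Cu, hb''not⟩ := hbgood
      have hb''adj : T.Adj u' b'' := (hmemNu b'').mp (Finset.mem_filter.mp hb''Cu).1
      have hb''d : T.dist v₁ b'' = T.dist v₁ u' + 1 := (Finset.mem_filter.mp hb''Cu).2
      have hb''pos : 1 ≤ T.dist v₁ b'' := by omega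
      obtain ⟨x', hx'anc, hx'lp⟩ := main hT S f hS' v₁ _ u' b'' hb''adj hb''d le_rfl
        (by
          intro s hs h
          have hsv := hSv₁ s hs
          rw [hsv, SimpleGraph.dist_self] at h
          omega)
      have hx'S : x' ∉ S := by
        intro h
        have := hSv₁ x' h
        rw [this, SimpleGraph.dist_self] at hx'anc
        omega
      have hx'f := hS' x' hx'S u' ⟨Finset.mem_univ _, hu'deg, v₁, hu'lp⟩ hx'lp
      rw [hx'f] at hx'anc
      exact hb''not hx'anc
    · -- q ≠ v₁
      obtain ⟨nq, hnqadj, hnq1, hnq2⟩ := exists_first hc (fun h => hqv h.symm)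
      have hnqc : nq ≠ c := by
        intro h
        rw [h] at hnq2
        exact hSD q hq (by omega)
      have hq'v : q' ≠ v₁ := by
        intro h
        have hv₁S : v₁ ∈ S := h ▸ hq'
        obtain ⟨u', -, hu'lp, -⟩ := (hSdef v₁).mp hv₁S
        obtain ⟨pw, -, -, -, hdeg1, -⟩ := id hu'lp
        have := two_le_degIn hnqadj hcadj hnqc
        omega
      obtain ⟨nq', hnq'adj, hnq'1, hnq'2⟩ := exists_first hc (fun h => hq'v h.symm)
      have hnq'c : nq' ≠ c := by
        intro h
        rw [h] at hnq'2
        exact hSD q' hq' (by omega)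
      have hnqq : nq' = nq := by
        by_contra hne
        apply hdegv₁
        have hsub : ({c, nq, nq'} : Finset V) ⊆ Finset.univ.filter (fun y => T.Adj v₁ y) := by
          intro y hy
          simp only [Finset.mem_insert, Finset.mem_singleton] at hy
          rcases hy with rfl | rfl | rfl <;>
            simp [hcadj, hnqadj, hnq'adj]
        have hcard3 : ({c, nq, nq'} : Finset V).card = 3 := by
          rw [Finset.card_insert_of_notMem (by simp [Ne.symm hnqc, Ne.symm hnq'c]),
            Finset.card_insert_of_notMem (by simp [Ne.symm hne]),
            Finset.card_singleton]
        have := Finset.card_le_card hsub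
        rw [hcard3] at this
        exact this
      rw [hnqq] at hnq'2
      have t : T.dist q q' ≤ T.dist q nq + T.dist nq q' := hc.dist_triangle
      have c1 : T.dist q nq = T.dist nq q := hcomm ..
      have c2 : T.dist nq q = T.dist q nq := hcomm ..
      omega
  · -- α = 0
    have e1 : T.dist v₁ q = T.dist v₂ q := by omega
    have e2 : T.dist v₁ q' = T.dist v₂ q' := by omega
    have cq2 : T.dist v₂ q' = T.dist q' v₂ := hcomm ..
    have hfct := fact1 hT (a := q) (c := q') (x := v₁) (y := v₂) hon (by omega) (by omega)
    exact hv₂ hfct.symm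
end

section
/- Let T' be a finite tree, T a subtree of T' that is not a path graph, and r a nonnegative integer such that every vertex of T' is at distance at most r from some vertex of T. Let S be the set obtained by choosing, for each exterior major vertex of T, all of its leaves (in T) except one. Let u, v be vertices of T' with d(u,v) > 2r, and suppose that the closest vertices u_T and v_T of T to u and v lie on paths from two distinct exterior major vertices of T to leaves of T not in S. Then Φ_{T'}(u,S) ≠ Φ_{T'}(v,S), i.e. u and v are distinguished by S. -/
open SimpleGraph

section TreeLemmas

set_option linter.unusedSectionVars false

variable {V : Type*} [DecidableEq V] {T' : SimpleGraph V}

lemma tpath_eq (hT : T'.IsTree) {a b : V} {p q : T'.Walk a b} (hp : p.IsPath)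
    (hq : q.IsPath) : p = q := by
  exact ((hT.existsUnique_path a b).unique hp hq)

lemma texists_path (hT : T'.IsTree) (a b : V) : ∃ p : T'.Walk a b, p.IsPath := by
  obtain ⟨w, -⟩ := hT.isConnected.exists_walk_length_eq_dist a b
  exact ⟨w.bypass, w.bypass_isPath⟩

lemma tpath_length (hT : T'.IsTree) {a b : V} {p : T'.Walk a b} (hp : p.IsPath) :
    p.length = T'.dist a b := by
  obtain ⟨w, hw⟩ := hT.isConnected.exists_walk_length_eq_dist a b
  have h1 : p = w.bypass := tpath_eq hT hp w.bypass_isPath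
  exact le_antisymm (h1 ▸ (w.length_bypass_le.trans hw.le)) (SimpleGraph.dist_le p)

lemma tsplit (hT : T'.IsTree) {a b c : V} {p : T'.Walk a b} (hp : p.IsPath)
    (hc : c ∈ p.support) : T'.dist a c + T'.dist c b = T'.dist a b := by
  have h1 : (p.takeUntil c hc).length = T'.dist a c := tpath_length hT (hp.takeUntil hc)
  have h2 : (p.dropUntil c hc).length = T'.dist c b := tpath_length hT (hp.dropUntil hc)
  have h3 := congrArg Walk.length (p.take_spec hc)
  rw [Walk.length_append, h1, h2, tpath_length hT hp] at h3
  exact h3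

lemma tappend_path {a b c : V} {p : T'.Walk a b} {q : T'.Walk b c} (hp : p.IsPath)
    (hq : q.IsPath) (hdisj : ∀ z ∈ p.support, z ∈ q.support → z = b) :
    (p.append q).IsPath := by
  rw [Walk.isPath_def, Walk.support_append]
  have hq' : q.support = b :: q.support.tail := q.support_eq_cons
  have hqn : q.support.Nodup := hq.support_nodup
  rw [hq'] at hqn
  rcases List.nodup_cons.mp hqn with ⟨hbnot, htail⟩
  refine List.Nodup.append hp.support_nodup htail ?_
  intro z hz1 hz2
  have hz2' : z ∈ q.support := by rw [hq']; exact List.mem_cons_of_mem _ hz2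
  have := hdisj z hz1 hz2'
  subst this
  exact hbnot hz2

lemma tdist_ne (hT : T'.IsTree) {x y : V} (h : T'.Adj x y) (a : V) :
    T'.dist a x ≠ T'.dist a y := by
  obtain ⟨p, hp⟩ := texists_path hT a x
  by_cases hy : y ∈ p.support
  · have hs := tsplit hT hp hy
    have h1 : T'.dist y x = 1 := dist_eq_one_iff_adj.mpr h.symm
    omega
  · have hcons : (Walk.cons h Walk.nil : T'.Walk x y).IsPath := by
      simp [Walk.cons_isPath_iff, h.ne]
    have hap : (p.append (Walk.cons h Walk.nil)).IsPath := by
      refine tappend_path hp hcons ?_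
      intro z hz1 hz2
      simp [Walk.support_cons, Walk.support_nil] at hz2
      rcases hz2 with rfl | rfl
      · rfl
      · exact absurd hz1 hy
    have := tpath_length hT hap
    rw [Walk.length_append] at this
    have hl := tpath_length hT hp
    simp [Walk.length_cons, Walk.length_nil] at this
    omega

lemma tadj_le (hT : T'.IsTree) {x y : V} (h : T'.Adj x y) (a : V) :
    T'.dist a y ≤ T'.dist a x + 1 := by
  have := hT.isConnected.dist_triangle (u := a) (v := x) (w := y)
  rw [dist_eq_one_iff_adj.mpr h] at this
  exact this

lemma tsec (hT : T'.IsTree) {w z : V} (h : w ≠ z) :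
    ∃ y, T'.Adj w y ∧ T'.dist w z = 1 + T'.dist y z ∧
      ∀ (p : T'.Walk w z), p.IsPath → y ∈ p.support := by
  obtain ⟨p, hp⟩ := texists_path hT w z
  cases p with
  | nil => exact absurd rfl h
  | @cons _ y _ hadj q =>
    have hq : q.IsPath := ((Walk.cons_isPath_iff hadj q).mp hp).1
    refine ⟨y, hadj, ?_, ?_⟩
    · have h1 := tpath_length hT hp
      have h2 := tpath_length hT hq
      rw [Walk.length_cons] at h1
      omega
    · intro p' hp'
      rw [tpath_eq hT hp' hp]
      rw [Walk.support_cons]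
      exact List.mem_cons_of_mem _ q.start_mem_support

end TreeLemmas

section TreeLemmas2
set_option linter.unusedSectionVars false
variable {V : Type*} [DecidableEq V] {T' : SimpleGraph V}

lemma tpath_eq' (hT : T'.IsTree) {a b : V} {p q : T'.Walk a b} (hp : p.IsPath)
    (hq : q.IsPath) : p = q := ((hT.existsUnique_path a b).unique hp hq)

-- support of any path between vertices of A stays in A
lemma tsupportA (hT : T'.IsTree) {A : Finset V}
    (hsub : (T'.induce ((A : Finset V) : Set V)).Connected) {a b : V} (ha : a ∈ A) (hb : b ∈ A)
    {p : T'.Walk a b} (hp : p.IsPath) : ∀ z ∈ p.support, z ∈ A := by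
  have hreach : (T'.induce ((A : Finset V) : Set V)).Reachable ⟨a, by simpa using ha⟩ ⟨b, by simpa using hb⟩ :=
    hsub.preconnected _ _
  obtain ⟨W⟩ := hreach
  -- convert to a walk in T' with support in A
  have key : ∀ (x y : ((A : Finset V) : Set V)) (W : (T'.induce ((A : Finset V) : Set V)).Walk x y),
      ∃ q : T'.Walk x.1 y.1, ∀ z ∈ q.support, z ∈ A := by
    intro x y W
    induction W with
    | nil =>
      refine ⟨Walk.nil, ?_⟩
      intro z hz
      simp only [Walk.support_nil, List.mem_singleton] at hz
      subst hz
      simpa using x.2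
    | @cons c d e h q ih =>
      obtain ⟨q', hq'⟩ := ih
      refine ⟨Walk.cons (by simpa using h) q', ?_⟩
      intro z hz
      rw [Walk.support_cons] at hz
      rcases List.mem_cons.mp hz with rfl | hz
      · simpa using c.2
      · exact hq' z hz
  obtain ⟨q, hq⟩ := key _ _ W
  have hbp : q.bypass.IsPath := q.bypass_isPath
  have : p = q.bypass := tpath_eq' hT hp hbp
  intro z hz
  exact hq z (q.support_bypass_subset (this ▸ hz))

lemma tN4 (hT : T'.IsTree) {w y x c : V} (hadj : T'.Adj w y)
    (hx : T'.dist w x = 1 + T'.dist y x) {p : T'.Walk w x} (hp : p.IsPath)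
    (hc : c ∈ p.support) (hcw : c ≠ w) : T'.dist w c = 1 + T'.dist y c := by
  obtain ⟨r, hr⟩ := texists_path hT y x
  have hwr : w ∉ r.support := by
    intro hw
    have := tsplit hT hr hw
    have h1 : T'.dist y w = 1 := dist_eq_one_iff_adj.mpr hadj.symm
    omega
  have hcons : (Walk.cons hadj r).IsPath := (Walk.cons_isPath_iff hadj r).mpr ⟨hr, hwr⟩
  have hpe : p = Walk.cons hadj r := tpath_eq' hT hp hcons
  have hcr : c ∈ r.support := by
    rw [hpe, Walk.support_cons] at hc
    rcases List.mem_cons.mp hc with rfl | hc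
    · exact absurd rfl hcw
    · exact hc
  have h1 := tsplit hT hr hcr
  have h2 := tsplit hT hp hc
  omega

lemma tU1 (hT : T'.IsTree) {w z y0 y1 : V} (h0 : T'.Adj w y0) (h1 : T'.Adj w y1)
    (hne : y0 ≠ y1) (e0 : T'.dist w z = 1 + T'.dist y0 z)
    (e1 : T'.dist w z = 1 + T'.dist y1 z) : False := by
  obtain ⟨r0, hr0⟩ := texists_path hT y0 z
  obtain ⟨r1, hr1⟩ := texists_path hT y1 z
  have hw0 : w ∉ r0.support := by
    intro hw
    have := tsplit hT hr0 hw
    have hd : T'.dist y0 w = 1 := dist_eq_one_iff_adj.mpr h0.symm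
    omega
  have hw1 : w ∉ r1.support := by
    intro hw
    have := tsplit hT hr1 hw
    have hd : T'.dist y1 w = 1 := dist_eq_one_iff_adj.mpr h1.symm
    omega
  have hc0 : (Walk.cons h0 r0).IsPath := (Walk.cons_isPath_iff h0 r0).mpr ⟨hr0, hw0⟩
  have hc1 : (Walk.cons h1 r1).IsPath := (Walk.cons_isPath_iff h1 r1).mpr ⟨hr1, hw1⟩
  have he : Walk.cons h0 r0 = Walk.cons h1 r1 := tpath_eq' hT hc0 hc1
  have hs := congrArg Walk.support he
  rw [Walk.support_cons, Walk.support_cons, r0.support_eq_cons, r1.support_eq_cons] at hs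
  simp only [List.cons.injEq] at hs
  exact hne hs.2.1

lemma tN3 (hT : T'.IsTree) {w y x z : V} (hadj : T'.Adj w y)
    (hx : T'.dist w x = 1 + T'.dist y x) (hz : ¬ T'.dist w z = 1 + T'.dist y z) :
    T'.dist x z = T'.dist x w + T'.dist w z := by
  by_cases hzw : z = w
  · subst hzw
    simp [SimpleGraph.dist_self]
  have hxw : x ≠ w := by
    intro h; subst h; rw [SimpleGraph.dist_self] at hx; omega
  obtain ⟨p1, hp1⟩ := texists_path hT w x
  obtain ⟨p2, hp2⟩ := texists_path hT w z
  have hdisj : ∀ c ∈ p1.reverse.support, c ∈ p2.support → c = w := by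
    intro c hc1 hc2
    rw [Walk.support_reverse, List.mem_reverse] at hc1
    by_contra hcw
    have hbr : T'.dist w c = 1 + T'.dist y c := tN4 hT hadj hx hp1 hc1 hcw
    have hsp := tsplit hT hp2 hc2
    have htri : T'.dist y z ≤ T'.dist y c + T'.dist c z := hT.isConnected.dist_triangle
    have htri2 : T'.dist w z ≤ 1 + T'.dist y z := by
      have := hT.isConnected.dist_triangle (u := w) (v := y) (w := z)
      rw [dist_eq_one_iff_adj.mpr hadj] at this
      exact this
    omega
  have hap : (p1.reverse.append p2).IsPath := tappend_path hp1.reverse hp2 hdisj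
  have hl := tpath_length hT hap
  rw [Walk.length_append, Walk.length_reverse] at hl
  rw [tpath_length hT hp1, tpath_length hT hp2] at hl
  rw [← hl, SimpleGraph.dist_comm (u := w) (v := x)]

lemma tbtwMem (hT : T'.IsTree) {a b c : V} (h : T'.dist a c + T'.dist c b = T'.dist a b)
    {p : T'.Walk a b} (hp : p.IsPath) : c ∈ p.support := by
  obtain ⟨q1, hq1⟩ := texists_path hT a c
  obtain ⟨q2, hq2⟩ := texists_path hT c b
  have hdisj : ∀ z ∈ q1.support, z ∈ q2.support → z = c := by
    intro z hz1 hz2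
    have h1 := tsplit hT hq1 hz1
    have h2 := tsplit hT hq2 hz2
    have htri : T'.dist a b ≤ T'.dist a z + T'.dist z b := hT.isConnected.dist_triangle
    have hzc : T'.dist z c = 0 := by omega
    exact ((hT.isConnected.dist_eq_zero_iff).mp hzc)
  have hap : (q1.append q2).IsPath := tappend_path hq1 hq2 hdisj
  have : p = q1.append q2 := tpath_eq' hT hp hap
  rw [this, Walk.mem_support_append_iff]
  exact Or.inl q1.end_mem_support

lemma tbrAdj (hT : T'.IsTree) {w y c c' : V} (hadj : T'.Adj w y)
    (hc : T'.dist w c = 1 + T'.dist y c) (hcc' : T'.Adj c c') (hne : c' ≠ w) :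
    T'.dist w c' = 1 + T'.dist y c' := by
  have hne1 : T'.dist w c' ≠ T'.dist w c := (tdist_ne hT hcc' w).symm
  have hle1 : T'.dist w c' ≤ T'.dist w c + 1 := tadj_le hT hcc' w
  have hle2 : T'.dist w c ≤ T'.dist w c' + 1 := tadj_le hT hcc'.symm w
  have hyle1 : T'.dist y c' ≤ T'.dist y c + 1 := tadj_le hT hcc' y
  have htri : T'.dist w c' ≤ 1 + T'.dist y c' := by
    have := hT.isConnected.dist_triangle (u := w) (v := y) (w := c')
    rw [dist_eq_one_iff_adj.mpr hadj] at this
    exact this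
  rcases Nat.lt_or_ge (T'.dist w c') (T'.dist w c) with hlt | hge
  · -- c' closer: c' on path w → c
    have hdc : T'.dist w c = T'.dist w c' + 1 := by omega
    obtain ⟨p', hp'⟩ := texists_path hT w c'
    have hcnot : c ∉ p'.support := by
      intro hmem
      have := tsplit hT hp' hmem
      omega
    have hap : (p'.append (Walk.cons hcc'.symm Walk.nil)).IsPath := by
      refine tappend_path hp' ?_ ?_
      · simp [Walk.cons_isPath_iff, hcc'.ne']
      · intro z hz1 hz2
        simp [Walk.support_cons, Walk.support_nil] at hz2
        rcases hz2 with rfl | rfl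
        · rfl
        · exact absurd hz1 hcnot
    have hc'mem : c' ∈ (p'.append (Walk.cons hcc'.symm Walk.nil)).support := by
      rw [Walk.mem_support_append_iff]; exact Or.inl p'.end_mem_support
    exact tN4 hT hadj hc hap hc'mem hne
  · omega

lemma tbrWalk (hT : T'.IsTree) {w y : V} (hadj : T'.Adj w y) :
    ∀ {c z : V} (W : T'.Walk c z), T'.dist w c = 1 + T'.dist y c → w ∉ W.support →
      T'.dist w z = 1 + T'.dist y z := by
  intro c z W
  induction W with
  | nil => intro hc _; exact hc
  | @cons u v z h q ih =>
    intro hc hw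
    rw [Walk.support_cons] at hw
    have hwu : w ≠ u := fun he => hw (he ▸ List.mem_cons_self)
    have hwq : w ∉ q.support := fun he => hw (List.mem_cons_of_mem _ he)
    have hvw : v ≠ w := by
      intro he
      exact hwq (he ▸ q.start_mem_support)
    exact ih (tbrAdj hT hadj hc h hvw) hwq

end TreeLemmas2

section TreeLemmas3
set_option linter.unusedSectionVars false
variable {V : Type*} [DecidableEq V] {T' : SimpleGraph V} [DecidableRel T'.Adj] {A : Finset V}

-- PLACEHOLDER_PREV

lemma tsecA (hT : T'.IsTree) (hsub : (T'.induce ((A : Finset V) : Set V)).Connected)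
    {w z : V} (hw : w ∈ A) (hz : z ∈ A) (h : w ≠ z) :
    ∃ y, y ∈ A ∧ T'.Adj w y ∧ T'.dist w z = 1 + T'.dist y z ∧
      ∀ (p : T'.Walk w z), p.IsPath → y ∈ p.support := by
  obtain ⟨y, hadj, hd, hmem⟩ := tsec hT h
  obtain ⟨p, hp⟩ := texists_path hT w z
  exact ⟨y, tsupportA hT hsub hw hz hp y (hmem p hp), hadj, hd, hmem⟩

lemma tgate (hT : T'.IsTree) (hsub : (T'.induce ((A : Finset V) : Set V)).Connected)
    {u uT : V} (huT : uT ∈ A) (hmin : ∀ w ∈ A, T'.dist u uT ≤ T'.dist u w) :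
    ∀ s ∈ A, T'.dist u s = T'.dist u uT + T'.dist uT s := by
  suffices H : ∀ n, ∀ s ∈ A, T'.dist uT s ≤ n → T'.dist u s = T'.dist u uT + T'.dist uT s by
    intro s hs; exact H _ s hs le_rfl
  intro n
  induction n with
  | zero =>
    intro s hs h0
    have : T'.dist uT s = 0 := Nat.le_zero.mp h0
    have heq : uT = s := (hT.isConnected.dist_eq_zero_iff).mp this
    subst heq
    simp [SimpleGraph.dist_self]
  | succ n ih =>
    intro s hs hle
    by_cases heq : s = uT
    · subst heq; simp [SimpleGraph.dist_self]
    have hne : s ≠ uT := heq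
    obtain ⟨y, hyA, hadj, hsec, hmem⟩ := tsecA hT hsub hs huT hne
    have hcomm1 : T'.dist s uT = T'.dist uT s := SimpleGraph.dist_comm
    have hcomm2 : T'.dist y uT = T'.dist uT y := SimpleGraph.dist_comm
    have hdy : T'.dist uT y + 1 = T'.dist uT s := by omega
    have ihy : T'.dist u y = T'.dist u uT + T'.dist uT y := ih y hyA (by omega)
    have hupper : T'.dist u s ≤ T'.dist u y + 1 := tadj_le hT hadj.symm u
    by_cases hgood : T'.dist u s = T'.dist u y + 1
    · omega
    · exfalso
      have hlow : T'.dist u y ≤ T'.dist u s + 1 := tadj_le hT hadj u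
      have hneq : T'.dist u s ≠ T'.dist u y := tdist_ne hT hadj u
      have hbad : T'.dist u y = T'.dist u s + 1 := by omega
      obtain ⟨R, hR⟩ := texists_path hT u uT
      obtain ⟨Qp, hQp⟩ := texists_path hT uT y
      have hQA : ∀ z ∈ Qp.support, z ∈ A := tsupportA hT hsub huT hyA hQp
      have hRQ : (R.append Qp).IsPath := by
        refine tappend_path hR hQp ?_
        intro z hz1 hz2
        by_contra hzu
        have hzA : z ∈ A := hQA z hz2
        have hspl := tsplit hT hR hz1
        have hzuT : T'.dist z uT ≠ 0 := fun h0 => hzu ((hT.isConnected.dist_eq_zero_iff).mp h0)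
        have := hmin z hzA
        omega
      have hsmem : s ∈ (R.append Qp).support := by
        obtain ⟨P, hP⟩ := texists_path hT u s
        have hyP : y ∉ P.support := by
          intro hy
          have := tsplit hT hP hy
          have h1 : T'.dist y s = 1 := dist_eq_one_iff_adj.mpr hadj.symm
          omega
        have hPy : (P.append (Walk.cons hadj Walk.nil)).IsPath := by
          refine tappend_path hP ?_ ?_
          · simp [Walk.cons_isPath_iff, hadj.ne]
          · intro z hz1 hz2
            simp [Walk.support_cons, Walk.support_nil] at hz2
            rcases hz2 with rfl | rfl
            · rfl
            · exact absurd hz1 hyP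
        have heqw : P.append (Walk.cons hadj Walk.nil) = R.append Qp := tpath_eq' hT hPy hRQ
        rw [← heqw, Walk.mem_support_append_iff]
        exact Or.inl P.end_mem_support
      rcases (Walk.mem_support_append_iff _ _).mp hsmem with hsR | hsQ
      · have := tsplit hT hR hsR
        have hns : T'.dist s uT ≠ 0 := fun h0 => hne ((hT.isConnected.dist_eq_zero_iff).mp h0)
        have := hmin s hs
        omega
      · have := tsplit hT hQp hsQ
        have h1 : T'.dist s y = 1 := dist_eq_one_iff_adj.mpr hadj
        omega

lemma tchain (hT : T'.IsTree) (hsub : (T'.induce ((A : Finset V) : Set V)).Connected)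
    {x t₀ : V} (hxA : x ∈ A) (hdx : 3 ≤ degIn T' A x) (ht₀A : t₀ ∈ A)
    (ht₀ : degIn T' A t₀ = 1) :
    ∀ n : ℕ, ∀ t (Q : T'.Walk t t₀), T'.dist x t ≤ n → Q.IsPath →
      (∀ z ∈ Q.support, z ∈ A) →
      (∀ z ∈ Q.support, z ≠ t → z ≠ t₀ → degIn T' A z = 2) →
      (t = t₀ ∨ degIn T' A t = 2) →
      T'.dist x t + T'.dist t t₀ = T'.dist x t₀ →
      ∃ w', IsLeafPathIn T' A w' t₀ ∧ 3 ≤ degIn T' A w' ∧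
        T'.dist x w' + T'.dist w' t₀ = T'.dist x t₀ := by
  intro n
  induction n with
  | zero =>
    intro t Q hle hQ hQA hQint hdisj hbtw
    exfalso
    have : T'.dist x t = 0 := Nat.le_zero.mp hle
    have heq : x = t := (hT.isConnected.dist_eq_zero_iff).mp this
    subst heq
    rcases hdisj with h | h
    · subst h; omega
    · omega
  | succ n ih =>
    intro t Q hle hQ hQA hQint hdisj hbtw
    have htA : t ∈ A := hQA t Q.start_mem_support
    have hxt : x ≠ t := by
      intro h; subst h
      rcases hdisj with h | h
      · subst h; omega
      · omega
    obtain ⟨y₁, hy₁A, hady, hsecd, -⟩ := tsecA hT hsub htA hxA hxt.symm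
    have hcx : T'.dist x t = T'.dist t x := SimpleGraph.dist_comm
    have hcy : T'.dist x y₁ = T'.dist y₁ x := SimpleGraph.dist_comm
    have hxtpos : 1 ≤ T'.dist x t := by omega
    have hy₁Q : y₁ ∉ Q.support := by
      intro hmem
      have hspl := tsplit hT hQ hmem
      have h1 : T'.dist t y₁ = 1 := dist_eq_one_iff_adj.mpr hady
      have htri : T'.dist x t₀ ≤ T'.dist x y₁ + T'.dist y₁ t₀ := hT.isConnected.dist_triangle
      omega
    have hQ' : (Walk.cons hady.symm Q).IsPath := (Walk.cons_isPath_iff _ _).mpr ⟨hQ, hy₁Q⟩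
    have hQ'A : ∀ z ∈ (Walk.cons hady.symm Q).support, z ∈ A := by
      intro z hz
      rw [Walk.support_cons] at hz
      rcases List.mem_cons.mp hz with rfl | hz
      · exact hy₁A
      · exact hQA z hz
    have hQ'len : T'.dist y₁ t₀ = T'.dist t t₀ + 1 := by
      have h1 := tpath_length hT hQ'
      have h2 := tpath_length hT hQ
      rw [Walk.length_cons] at h1
      omega
    have hbtw' : T'.dist x y₁ + T'.dist y₁ t₀ = T'.dist x t₀ := by omega
    have hQ'int : ∀ z ∈ (Walk.cons hady.symm Q).support, z ≠ y₁ → z ≠ t₀ →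
        degIn T' A z = 2 := by
      intro z hz hz1 hz2
      rw [Walk.support_cons] at hz
      rcases List.mem_cons.mp hz with rfl | hz
      · exact absurd rfl hz1
      · by_cases hzt : z = t
        · subst hzt
          rcases hdisj with h | h
          · exact absurd h hz2
          · exact h
        · exact hQint z hz hzt hz2
    by_cases h2 : degIn T' A y₁ = 2
    · exact ih y₁ (Walk.cons hady.symm Q) (by omega) hQ' hQ'A hQ'int (Or.inr h2) hbtw'
    · refine ⟨y₁, ⟨Walk.cons hady.symm Q, hQ', by simp, hQ'A, ht₀, hQ'int⟩, ?_, hbtw'⟩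
      by_cases hxy : y₁ = x
      · subst hxy; exact hdx
      · obtain ⟨y₂, hy₂A, hady₂, e₂, -⟩ := tsecA hT hsub hy₁A hxA hxy
        have hty₂ : t ≠ y₂ := by
          intro h; subst h; omega
        have h2le : 1 < degIn T' A y₁ := by
          rw [degIn]
          refine Finset.one_lt_card.mpr ⟨t, ?_, y₂, ?_, hty₂⟩
          · exact Finset.mem_filter.mpr ⟨htA, hady.symm⟩
          · exact Finset.mem_filter.mpr ⟨hy₂A, hady₂⟩
        omega

end TreeLemmas3

section TreeLemmas4
set_option linter.unusedSectionVars false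
variable {V : Type*} [DecidableEq V] {T' : SimpleGraph V} [DecidableRel T'.Adj] {A : Finset V}

/-- The branch of `w` in direction of its neighbour `y`, within `A`. -/
noncomputable def brSet (T' : SimpleGraph V) (A : Finset V) (w y : V) : Finset V :=
  A.filter fun z => T'.dist w z = 1 + T'.dist y z

lemma mem_brSet {w y z : V} :
    z ∈ brSet T' A w y ↔ z ∈ A ∧ T'.dist w z = 1 + T'.dist y z := Finset.mem_filter

/-- The branch of a leaf path is contained in the leaf path. -/
lemma tBrLP (hT : T'.IsTree) (hsub : (T'.induce ((A : Finset V) : Set V)).Connected)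
    {w l y0 : V} {P : T'.Walk w l} (hP : P.IsPath) (hPA : ∀ z ∈ P.support, z ∈ A)
    (hlen : 0 < P.length) (hdegl : degIn T' A l = 1)
    (hint : ∀ z ∈ P.support, z ≠ w → z ≠ l → degIn T' A z = 2)
    (hady0 : T'.Adj w y0) (e0 : T'.dist w l = 1 + T'.dist y0 l) :
    ∀ z ∈ A, T'.dist w z = 1 + T'.dist y0 z → z ∈ P.support := by
  have hwA : w ∈ A := hPA w P.start_mem_support
  have hlA : l ∈ A := hPA l P.end_mem_support
  have hwl : w ≠ l := by
    intro h
    subst h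
    have := Walk.isPath_iff_eq_nil.mp hP
    rw [this] at hlen
    simp at hlen
  suffices H : ∀ n, ∀ z ∈ A, T'.dist w z ≤ n → T'.dist w z = 1 + T'.dist y0 z →
      z ∈ P.support by
    intro z hz hd; exact H _ z hz le_rfl hd
  intro n
  induction n with
  | zero => intro z hz h0 hd; omega
  | succ n ih =>
    intro z hzA hle hd
    by_cases h1 : T'.dist w z = 1
    · have hy0z : y0 = z := by
        have : T'.dist y0 z = 0 := by omega
        exact (hT.isConnected.dist_eq_zero_iff).mp this
      subst hy0z
      have hb : T'.dist w y0 + T'.dist y0 l = T'.dist w l := by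
        have : T'.dist w y0 = 1 := dist_eq_one_iff_adj.mpr hady0
        omega
      exact tbtwMem hT hb hP
    · have hge2 : 2 ≤ T'.dist w z := by omega
      have hzw : z ≠ w := by
        intro h; subst h; rw [SimpleGraph.dist_self] at hge2; omega
      obtain ⟨z', hz'A, hadz', ez', hmz'⟩ := tsecA hT hsub hzA hwA hzw
      have hcz : T'.dist z w = T'.dist w z := SimpleGraph.dist_comm
      have hcz' : T'.dist z' w = T'.dist w z' := SimpleGraph.dist_comm
      have hwz' : T'.dist w z' + 1 = T'.dist w z := by omega
      obtain ⟨p, hp⟩ := texists_path hT w z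
      have hz'p : z' ∈ p.support := by
        have := hmz' p.reverse hp.reverse
        rwa [Walk.support_reverse, List.mem_reverse] at this
      have hz'w : z' ≠ w := by
        intro h; subst h; rw [SimpleGraph.dist_self] at hwz'; omega
      have hz'br : T'.dist w z' = 1 + T'.dist y0 z' := tN4 hT hady0 hd hp hz'p hz'w
      have hz'P : z' ∈ P.support := ih z' hz'A (by omega) hz'br
      by_cases hz'l : z' = l
      · exfalso
        obtain ⟨c, hcA, hadc, ec, -⟩ := tsecA hT hsub hlA hwA (Ne.symm hwl)
        have hfilter : (A.filter fun v => T'.Adj l v).card = 1 := hdegl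
        have hadlz : T'.Adj l z := by rw [← hz'l]; exact hadz'.symm
        have hzmem : z ∈ A.filter fun v => T'.Adj l v :=
          Finset.mem_filter.mpr ⟨hzA, hadlz⟩
        have hcmem : c ∈ A.filter fun v => T'.Adj l v :=
          Finset.mem_filter.mpr ⟨hcA, hadc⟩
        have hzc : z = c := Finset.card_le_one.mp hfilter.le z hzmem c hcmem
        have hcw : T'.dist l w = 1 + T'.dist z w := hzc ▸ ec
        have hwl2 : T'.dist w z' = T'.dist w l := by rw [hz'l]
        have hc3 : T'.dist l w = T'.dist w l := SimpleGraph.dist_comm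
        omega
      · have hdeg2 : degIn T' A z' = 2 := hint z' hz'P hz'w hz'l
        obtain ⟨n1, hn1A, hadn1, en1, -⟩ := tsecA hT hsub hz'A hwA hz'w
        obtain ⟨n2, hn2A, hadn2, en2, -⟩ := tsecA hT hsub hz'A hlA hz'l
        have hsplit := tsplit hT hP hz'P
        have hn12 : n1 ≠ n2 := by
          intro h
          subst h
          have htri : T'.dist w l ≤ T'.dist w n1 + T'.dist n1 l := hT.isConnected.dist_triangle
          have hc1 : T'.dist w n1 = T'.dist n1 w := SimpleGraph.dist_comm
          have hc2 : T'.dist w z' = T'.dist z' w := SimpleGraph.dist_comm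
          omega
        have hpair : ({n1, n2} : Finset V) ⊆ A.filter fun v => T'.Adj z' v := by
          intro v hv
          rcases Finset.mem_insert.mp hv with rfl | hv
          · exact Finset.mem_filter.mpr ⟨hn1A, hadn1⟩
          · rw [Finset.mem_singleton] at hv
            subst hv
            exact Finset.mem_filter.mpr ⟨hn2A, hadn2⟩
        have hcard2 : ({n1, n2} : Finset V).card = 2 := by
          rw [Finset.card_insert_of_notMem (by simpa using hn12), Finset.card_singleton]
        have hfeq : ({n1, n2} : Finset V) = A.filter fun v => T'.Adj z' v :=
          Finset.eq_of_subset_of_card_le hpair (by rw [hcard2]; exact hdeg2.le)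
        have hzmem : z ∈ A.filter fun v => T'.Adj z' v :=
          Finset.mem_filter.mpr ⟨hzA, hadz'.symm⟩
        rw [← hfeq] at hzmem
        rcases Finset.mem_insert.mp hzmem with rfl | hzmem
        · exfalso
          have hc1 : T'.dist z' w = T'.dist w z' := SimpleGraph.dist_comm
          have hc2 : T'.dist z w = T'.dist w z := SimpleGraph.dist_comm
          omega
        · rw [Finset.mem_singleton] at hzmem
          subst hzmem
          have hbz : T'.dist w z + T'.dist z l = T'.dist w l := by omega
          exact tbtwMem hT hbz hP

end TreeLemmas4

section TreeLemmas5
set_option linter.unusedSectionVars false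
variable {V : Type*} [DecidableEq V] {T' : SimpleGraph V} [DecidableRel T'.Adj] {A : Finset V}

lemma trecMain (hT : T'.IsTree) (hsub : (T'.induce ((A : Finset V) : Set V)).Connected)
    {S : Finset V} {f : V → V}
    (hSdef : ∀ x : V, x ∈ S ↔ ∃ w : V, IsExtMajorIn T' A w ∧
      IsLeafPathIn T' A w x ∧ x ≠ f w) :
    ∀ n : ℕ, ∀ w y : V, IsExtMajorIn T' A w → y ∈ A → T'.Adj w y →
    f w ∉ brSet T' A w y → (brSet T' A w y).card ≤ n →
    ∃ s ∈ S, s ∈ brSet T' A w y := by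
  intro n
  induction n using Nat.strong_induction_on with
  | _ n IH =>
  intro w y hw hyA hadj hfw hcard
  obtain ⟨hwA, hw3, -⟩ := id hw
  have hyBr : y ∈ brSet T' A w y := mem_brSet.mpr ⟨hyA, by
    rw [dist_eq_one_iff_adj.mpr hadj, SimpleGraph.dist_self]⟩
  obtain ⟨t, htBr, hmax⟩ := Finset.exists_max_image (brSet T' A w y) (T'.dist w) ⟨y, hyBr⟩
  obtain ⟨htA, htd⟩ := mem_brSet.mp htBr
  have htw : t ≠ w := by
    intro h; subst h; rw [SimpleGraph.dist_self] at htd; omega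
  obtain ⟨y', hy'A, hady', ey', -⟩ := tsecA hT hsub htA hwA htw
  have hdeg1 : degIn T' A t = 1 := by
    rw [degIn]
    have hkey : ∀ c ∈ A.filter (fun v => T'.Adj t v), T'.dist t w = 1 + T'.dist c w := by
      intro c hc
      obtain ⟨hcA, hadc⟩ := Finset.mem_filter.mp hc
      by_cases hcw : c = w
      · subst hcw
        rw [SimpleGraph.dist_self, dist_eq_one_iff_adj.mpr hadc]
      · have hcbr : T'.dist w c = 1 + T'.dist y c := tbrAdj hT hadj htd hadc hcw
        have hcBr : c ∈ brSet T' A w y := mem_brSet.mpr ⟨hcA, hcbr⟩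
        have hle := hmax c hcBr
        have hne := tdist_ne hT hadc w
        have h1 := tadj_le hT hadc w
        have h2 := tadj_le hT hadc.symm w
        have hc1 : T'.dist t w = T'.dist w t := SimpleGraph.dist_comm
        have hc2 : T'.dist c w = T'.dist w c := SimpleGraph.dist_comm
        omega
    refine le_antisymm (Finset.card_le_one.mpr ?_)
      (Finset.card_pos.mpr ⟨y', Finset.mem_filter.mpr ⟨hy'A, hady'⟩⟩)
    intro a ha b hb
    by_contra hab
    exact tU1 hT ((Finset.mem_filter.mp ha).2) ((Finset.mem_filter.mp hb).2) hab
      (hkey a ha) (hkey b hb)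
  obtain ⟨w', hlp, hw'3, hbtw⟩ := tchain hT hsub hwA hw3 htA hdeg1 (T'.dist w t) t Walk.nil
    le_rfl Walk.IsPath.nil
    (by intro z hz; simp only [Walk.support_nil, List.mem_singleton] at hz; subst hz; exact htA)
    (by intro z hz h1 h2
        simp only [Walk.support_nil, List.mem_singleton] at hz; exact absurd hz h1)
    (Or.inl rfl) (by simp [SimpleGraph.dist_self])
  have hw'A : w' ∈ A := by
    obtain ⟨p, hp, hl, hpA, -, -⟩ := hlp
    exact hpA w' p.start_mem_support
  by_cases hft : t = f w'
  · -- recurse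
    have hw'w : w' ≠ w := by
      intro h
      have h2 := htBr
      rw [hft, h] at h2
      exact hfw h2
    have hw'Br : w' ∈ brSet T' A w y := by
      obtain ⟨p, hp⟩ := texists_path hT w t
      have hw'p : w' ∈ p.support := tbtwMem hT hbtw hp
      exact mem_brSet.mpr ⟨hw'A, tN4 hT hadj htd hp hw'p hw'w⟩
    obtain ⟨y_w, hy_wA, hady_w, ey_w, -⟩ := tsecA hT hsub hw'A hwA hw'w
    have hw't : w' ≠ t := by
      intro h
      rw [h, hdeg1] at hw'3
      omega
    obtain ⟨y_f, hy_fA, hady_f, ey_f, -⟩ := tsecA hT hsub hw'A htA hw't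
    have hww'pos : T'.dist w w' ≠ 0 :=
      fun h => hw'w (((hT.isConnected.dist_eq_zero_iff).mp h).symm)
    have hy_wf : y_w ≠ y_f := by
      intro h
      subst h
      have htri : T'.dist w t ≤ T'.dist w y_w + T'.dist y_w t := hT.isConnected.dist_triangle
      have hc1 : T'.dist w' w = T'.dist w w' := SimpleGraph.dist_comm
      have hc2 : T'.dist y_w w = T'.dist w y_w := SimpleGraph.dist_comm
      omega
    have herase : 1 ≤ (((A.filter fun v => T'.Adj w' v).erase y_w).erase y_f).card := by
      have e1 : ((A.filter fun v => T'.Adj w' v).erase y_w).card - 1 ≤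
          (((A.filter fun v => T'.Adj w' v).erase y_w).erase y_f).card :=
        Finset.pred_card_le_card_erase
      have e2 : (A.filter fun v => T'.Adj w' v).card - 1 ≤
          ((A.filter fun v => T'.Adj w' v).erase y_w).card :=
        Finset.pred_card_le_card_erase
      have e3 : 3 ≤ (A.filter fun v => T'.Adj w' v).card := hw'3
      omega
    obtain ⟨y1, hy1mem⟩ := Finset.card_pos.mp (by omega : 0 < (((A.filter fun v => T'.Adj w' v).erase y_w).erase y_f).card)
    have hy1f : y1 ≠ y_f := (Finset.mem_erase.mp hy1mem).1
    have hy1w : y1 ≠ y_w := (Finset.mem_erase.mp (Finset.mem_erase.mp hy1mem).2).1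
    have hy1fil := (Finset.mem_erase.mp (Finset.mem_erase.mp hy1mem).2).2
    have hy1A : y1 ∈ A := (Finset.mem_filter.mp hy1fil).1
    have hady1 : T'.Adj w' y1 := (Finset.mem_filter.mp hy1fil).2
    have hfw' : f w' ∉ brSet T' A w' y1 := by
      intro hmem
      obtain ⟨-, hd1⟩ := mem_brSet.mp hmem
      have hd2 : T'.dist w' (f w') = 1 + T'.dist y_f (f w') := by rw [← hft]; exact ey_f
      exact tU1 hT hady1 hady_f hy1f hd1 hd2
    have hextw' : IsExtMajorIn T' A w' := ⟨hw'A, hw'3, t, hlp⟩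
    have hsubBr : brSet T' A w' y1 ⊆ brSet T' A w y := by
      intro z hz
      obtain ⟨hzA, hzd⟩ := mem_brSet.mp hz
      obtain ⟨pz, hpz⟩ := texists_path hT w' z
      by_cases hwpz : w ∈ pz.support
      · exfalso
        have hd1 := tN4 hT hady1 hzd hpz hwpz hw'w.symm
        exact tU1 hT hady1 hady_w hy1w hd1 ey_w
      · obtain ⟨-, hw'd⟩ := mem_brSet.mp hw'Br
        exact mem_brSet.mpr ⟨hzA, tbrWalk hT hadj pz hw'd hwpz⟩
    have htnot : t ∉ brSet T' A w' y1 := by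
      intro hmem
      obtain ⟨-, hd1⟩ := mem_brSet.mp hmem
      exact tU1 hT hady1 hady_f hy1f hd1 ey_f
    have hss : brSet T' A w' y1 ⊂ brSet T' A w y :=
      ⟨hsubBr, fun hsup => htnot (hsup htBr)⟩
    have hlt : (brSet T' A w' y1).card < n := lt_of_lt_of_le (Finset.card_lt_card hss) hcard
    obtain ⟨s, hsS, hsBr⟩ := IH _ hlt w' y1 hextw' hy1A hady1 hfw' le_rfl
    exact ⟨s, hsS, hsubBr hsBr⟩
  · exact ⟨t, (hSdef t).mpr ⟨w', ⟨hw'A, hw'3, ⟨t, hlp⟩⟩, hlp, hft⟩, htBr⟩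

end TreeLemmas5

section TreeLemmas6
set_option linter.unusedSectionVars false
variable {V : Type*} [DecidableEq V] {T' : SimpleGraph V} [DecidableRel T'.Adj] {A : Finset V}

lemma thalf (hT : T'.IsTree) (hsub : (T'.induce ((A : Finset V) : Set V)).Connected)
    {S : Finset V} {f : V → V}
    (hSdef : ∀ x : V, x ∈ S ↔ ∃ w : V, IsExtMajorIn T' A w ∧
      IsLeafPathIn T' A w x ∧ x ≠ f w)
    {w l w2 l2 z z2 : V} (hww2 : w ≠ w2)
    (hw : IsExtMajorIn T' A w) (hl : IsLeafPathIn T' A w l) (hlS : l ∉ S)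
    (hbz : T'.dist w z + T'.dist z l = T'.dist w l)
    (hw2 : IsExtMajorIn T' A w2) (hl2 : IsLeafPathIn T' A w2 l2) (hl2S : l2 ∉ S)
    (hbz2 : T'.dist w2 z2 + T'.dist z2 l2 = T'.dist w2 l2) :
    ∃ s ∈ S, T'.dist s z = T'.dist s w + T'.dist w z ∧
      T'.dist s z2 = T'.dist s w + T'.dist w w2 + T'.dist w2 z2 := by
  have hfw : l = f w := by
    by_contra hne
    exact hlS ((hSdef l).mpr ⟨w, hw, hl, hne⟩)
  obtain ⟨hwA, hw3, -⟩ := id hw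
  obtain ⟨hw2A, hw23, -⟩ := id hw2
  obtain ⟨P, hP, hPlen, hPA, hdegl, hPint⟩ := id hl
  have hlA : l ∈ A := hPA l P.end_mem_support
  have hwl : w ≠ l := by
    intro h
    subst h
    rw [Walk.isPath_iff_eq_nil.mp hP] at hPlen
    simp at hPlen
  obtain ⟨y0, hy0A, hady0, e0, -⟩ := tsecA hT hsub hwA hlA hwl
  have hzP : z ∈ P.support := tbtwMem hT hbz hP
  obtain ⟨yv, hyvA, hadyv, ev, -⟩ := tsecA hT hsub hwA hw2A hww2
  -- pick a third direction y1 at w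
  have herase : 1 ≤ (((A.filter fun v => T'.Adj w v).erase y0).erase yv).card := by
    have e1 : ((A.filter fun v => T'.Adj w v).erase y0).card - 1 ≤
        (((A.filter fun v => T'.Adj w v).erase y0).erase yv).card :=
      Finset.pred_card_le_card_erase
    have e2 : (A.filter fun v => T'.Adj w v).card - 1 ≤
        ((A.filter fun v => T'.Adj w v).erase y0).card :=
      Finset.pred_card_le_card_erase
    have e3 : 3 ≤ (A.filter fun v => T'.Adj w v).card := hw3
    omega
  obtain ⟨y1, hy1mem⟩ := Finset.card_pos.mp (by omega :
    0 < (((A.filter fun v => T'.Adj w v).erase y0).erase yv).card)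
  have hy1v : y1 ≠ yv := (Finset.mem_erase.mp hy1mem).1
  have hy10 : y1 ≠ y0 := (Finset.mem_erase.mp (Finset.mem_erase.mp hy1mem).2).1
  have hy1fil := (Finset.mem_erase.mp (Finset.mem_erase.mp hy1mem).2).2
  have hy1A : y1 ∈ A := (Finset.mem_filter.mp hy1fil).1
  have hady1 : T'.Adj w y1 := (Finset.mem_filter.mp hy1fil).2
  have hfwBr : f w ∉ brSet T' A w y1 := by
    intro hmem
    rw [← hfw] at hmem
    obtain ⟨-, hd1⟩ := mem_brSet.mp hmem
    exact tU1 hT hady1 hady0 hy10 hd1 e0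
  obtain ⟨s, hsS, hsBr⟩ := trecMain hT hsub hSdef (brSet T' A w y1).card w y1 hw hy1A
    hady1 hfwBr le_rfl
  obtain ⟨hsA, hsd⟩ := mem_brSet.mp hsBr
  refine ⟨s, hsS, ?_, ?_⟩
  · -- d s z = d s w + d w z
    by_cases hzw : z = w
    · subst hzw; simp [SimpleGraph.dist_self]
    · have hz0 : T'.dist w z = 1 + T'.dist y0 z := tN4 hT hady0 e0 hP hzP hzw
      have hznot : ¬ T'.dist w z = 1 + T'.dist y1 z := by
        intro hd1
        exact tU1 hT hady1 hady0 hy10 hd1 hz0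
      exact tN3 hT hady1 hsd hznot
  · -- d s z2 = d s w + d w w2 + d w2 z2
    have hw2not : ¬ T'.dist w w2 = 1 + T'.dist y1 w2 := by
      intro hd1
      exact tU1 hT hady1 hadyv hy1v hd1 ev
    have b1 : T'.dist s w2 = T'.dist s w + T'.dist w w2 := tN3 hT hady1 hsd hw2not
    obtain ⟨Q, hQ, hQlen, hQA, hdegl2, hQint⟩ := id hl2
    have hl2A : l2 ∈ A := hQA l2 Q.end_mem_support
    have hw2l2 : w2 ≠ l2 := by
      intro h
      subst h
      rw [Walk.isPath_iff_eq_nil.mp hQ] at hQlen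
      simp at hQlen
    obtain ⟨y0', hy0'A, hady0', e0', -⟩ := tsecA hT hsub hw2A hl2A hw2l2
    have hz2Q : z2 ∈ Q.support := tbtwMem hT hbz2 hQ
    by_cases hz2w2 : z2 = w2
    · subst hz2w2
      rw [b1]
      simp [SimpleGraph.dist_self]
    · have hz2br : T'.dist w2 z2 = 1 + T'.dist y0' z2 := tN4 hT hady0' e0' hQ hz2Q hz2w2
      have hsnot : ¬ T'.dist w2 s = 1 + T'.dist y0' s := by
        intro hmem
        have hsQ : s ∈ Q.support := tBrLP hT hsub hQ hQA hQlen hdegl2 hQint hady0' e0' s hsA hmem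
        obtain ⟨ws, hwse, hlps, -⟩ := (hSdef s).mp hsS
        obtain ⟨ps, hps, hpslen, hpsA, hdegs, -⟩ := hlps
        by_cases hs1 : s = w2
        · rw [hs1] at hdegs
          omega
        by_cases hs2 : s = l2
        · exact hl2S (hs2 ▸ hsS)
        · have h2 := hQint s hsQ hs1 hs2
          omega
      have b2 : T'.dist z2 s = T'.dist z2 w2 + T'.dist w2 s := tN3 hT hady0' hz2br hsnot
      have c1 : T'.dist z2 s = T'.dist s z2 := SimpleGraph.dist_comm
      have c2 : T'.dist z2 w2 = T'.dist w2 z2 := SimpleGraph.dist_comm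
      have c3 : T'.dist w2 s = T'.dist s w2 := SimpleGraph.dist_comm
      omega

end TreeLemmas6

/-- Let `T'` be a finite tree, `T` a subtree (given by its vertex set `A`)
that is not a path graph, `r` such that every vertex of `T'` is within distance `r` of
`T`, and `S` the set obtained by choosing, for each exterior major vertex of `T`, all of
its leaves in `T` except one (given by the choice function `f`). If `u, v` are vertices
of `T'` with `d(u,v) > 2r` whose closest vertices `uT, vT` in `T` lie on paths from two
distinct exterior major vertices of `T` to leaves of `T` not in `S`, then `u` and `v`
are distinguished by `S`. -/
theorem stmt_9 {V : Type*} [Fintype V] [DecidableEq V] (T' : SimpleGraph V)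
    [DecidableRel T'.Adj] (hT' : T'.IsTree) (A : Finset V)
    (hsub : (T'.induce ((A : Finset V) : Set V)).Connected)
    (hnp : ¬ IsPathGraphOn T' A) (r : ℕ)
    (hr : ∀ x : V, ∃ w ∈ A, T'.dist x w ≤ r)
    (S : Finset V) (f : V → V)
    (hf : ∀ w : V, IsExtMajorIn T' A w → IsLeafPathIn T' A w (f w))
    (hSdef : ∀ x : V, x ∈ S ↔ ∃ w : V, IsExtMajorIn T' A w ∧
      IsLeafPathIn T' A w x ∧ x ≠ f w)
    (u v uT vT : V) (hd : 2 * r < T'.dist u v)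
    (huT : uT ∈ A) (huTc : ∀ w ∈ A, T'.dist u uT ≤ T'.dist u w)
    (hvT : vT ∈ A) (hvTc : ∀ w ∈ A, T'.dist v vT ≤ T'.dist v w)
    (wu wv lu lv : V) (hwne : wu ≠ wv)
    (hwu : IsExtMajorIn T' A wu) (hlu : IsLeafPathIn T' A wu lu) (hluS : lu ∉ S)
    (huOn : T'.dist wu uT + T'.dist uT lu = T'.dist wu lu)
    (hwv : IsExtMajorIn T' A wv) (hlv : IsLeafPathIn T' A wv lv) (hlvS : lv ∉ S)
    (hvOn : T'.dist wv vT + T'.dist vT lv = T'.dist wv lv) :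
    ∃ s ∈ S, T'.dist u s ≠ T'.dist v s := by
  by_contra hcon
  push_neg at hcon
  have hSA : ∀ s ∈ S, s ∈ A := by
    intro s hs
    obtain ⟨w, -, ⟨p, hp, -, hpA, -, -⟩, -⟩ := (hSdef s).mp hs
    exact hpA s p.end_mem_support
  have gateu := tgate hT' hsub huT huTc
  have gatev := tgate hT' hsub hvT hvTc
  obtain ⟨s, hsS, ha, hb⟩ := thalf hT' hsub hSdef hwne hwu hlu hluS huOn hwv hlv hlvS hvOn
  obtain ⟨s', hs'S, ha', hb'⟩ :=
    thalf hT' hsub hSdef hwne.symm hwv hlv hlvS hvOn hwu hlu hluS huOn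
  have h1 : T'.dist u s = T'.dist v s := hcon s hsS
  have h2 : T'.dist u s' = T'.dist v s' := hcon s' hs'S
  have gus := gateu s (hSA s hsS)
  have gvs := gatev s (hSA s hsS)
  have gus' := gateu s' (hSA s' hs'S)
  have gvs' := gatev s' (hSA s' hs'S)
  have c1 : T'.dist uT s = T'.dist s uT := SimpleGraph.dist_comm
  have c2 : T'.dist vT s = T'.dist s vT := SimpleGraph.dist_comm
  have c3 : T'.dist uT s' = T'.dist s' uT := SimpleGraph.dist_comm
  have c4 : T'.dist vT s' = T'.dist s' vT := SimpleGraph.dist_comm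
  have c5 : T'.dist wv wu = T'.dist wu wv := SimpleGraph.dist_comm
  have hzero : T'.dist wu wv = 0 := by omega
  exact hwne ((hT'.isConnected.dist_eq_zero_iff).mp hzero)
end

section
/- Let T be a finite rooted tree and r a positive integer such that 2r < diam(T). Then the subgraph of Down-Stem_r(T) induced by the vertices of Down-Stem_r(T) that are not in Stem_r(T) is a path graph (possibly empty). -/
open SimpleGraph
set_option linter.unusedSectionVars false
set_option linter.unusedVariables false

section Aux
variable {V : Type*} [DecidableEq V] {T : SimpleGraph V} [DecidableRel T.Adj]

lemma degIn_mono {A B : Finset V} (h : A ⊆ B) (v : V) : degIn T A v ≤ degIn T B v :=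
  Finset.card_le_card (Finset.filter_subset_filter _ h)

lemma two_le_degIn {A : Finset V} {v x y : V} (hxy : x ≠ y) (hx : x ∈ A) (hy : y ∈ A)
    (ax : T.Adj v x) (ay : T.Adj v y) : 1 < degIn T A v :=
  Finset.one_lt_card.mpr ⟨x, by simp [hx, ax], y, by simp [hy, ay], hxy⟩

lemma internal_two_nbrs : ∀ {u v w : V} (p : T.Walk u v), p.IsPath → w ∈ p.support →
    w ≠ u → w ≠ v → ∃ x y, x ≠ y ∧ x ∈ p.support ∧ y ∈ p.support ∧ T.Adj w x ∧ T.Adj w y := by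
  intro u v w p
  induction p with
  | nil =>
    intro _ hw hwu _
    simp only [SimpleGraph.Walk.support_nil, List.mem_singleton] at hw
    exact absurd hw hwu
  | @cons u a v h q ih =>
    intro hp hw hwu hwv
    rw [SimpleGraph.Walk.support_cons, List.mem_cons] at hw
    rcases hw with rfl | hw
    · exact absurd rfl hwu
    rw [SimpleGraph.Walk.cons_isPath_iff] at hp
    by_cases hwa : w = a
    · subst hwa
      cases q with
      | nil => exact absurd rfl hwv
      | @cons a b v h' q' =>
        refine ⟨u, b, ?_, by simp, ?_, h.symm, h'⟩
        · intro hu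
          exact hp.2 (by rw [hu]; simp)
        · simp
    · obtain ⟨x, y, hxy, hx, hy, ax, ay⟩ := ih hp.1 hw hwa hwv
      exact ⟨x, y, hxy, by simp [hx], by simp [hy], ax, ay⟩

/-- `A` is tree-convex. -/
def TConv (T : SimpleGraph V) [DecidableRel T.Adj] (A : Finset V) : Prop :=
  ∀ ⦃u v : V⦄, u ∈ A → v ∈ A → ∀ p : T.Walk u v, p.IsPath → ∀ w ∈ p.support, w ∈ A

lemma internal_mem_filter {A : Finset V} {u v w : V} (p : T.Walk u v) (hp : p.IsPath)
    (hs : ∀ x ∈ p.support, x ∈ A) (hw : w ∈ p.support) (hwu : w ≠ u) (hwv : w ≠ v) :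
    1 < degIn T A w := by
  obtain ⟨x, y, hxy, hx, hy, ax, ay⟩ := internal_two_nbrs p hp hw hwu hwv
  exact two_le_degIn hxy (hs x hx) (hs y hy) ax ay

lemma tconv_filter {A : Finset V} (hA : TConv T A) :
    TConv T (A.filter fun v => 1 < degIn T A v) := by
  intro u v hu hv p hp w hw
  have hu' := (Finset.mem_filter.mp hu).1
  have hv' := (Finset.mem_filter.mp hv).1
  have hs : ∀ x ∈ p.support, x ∈ A := fun x hx => hA hu' hv' p hp x hx
  by_cases hwu : w = u
  · subst hwu; exact hu
  by_cases hwv : w = v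
  · subst hwv; exact hv
  exact Finset.mem_filter.mpr ⟨hs w hw, internal_mem_filter p hp hs hw hwu hwv⟩

lemma tconv_stemIter [Fintype V] : ∀ k, TConv T (stemIter T Finset.univ k)
  | 0 => fun u v _ _ _ _ w _ => Finset.mem_univ w
  | (k+1) => tconv_filter (tconv_stemIter k)

lemma pair_step {A : Finset V} {u v : V} (p : T.Walk u v) (hp : p.IsPath)
    (hs : ∀ w ∈ p.support, w ∈ A) (hl : 2 ≤ p.length) :
    ∃ (u' v' : V) (p' : T.Walk u' v'), p'.IsPath ∧
      (∀ w ∈ p'.support, w ∈ A.filter fun x => 1 < degIn T A x) ∧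
      p.length = p'.length + 2 := by
  cases p with
  | nil => simp at hl
  | @cons u a v h₁ p₁ =>
    cases p₁ with
    | nil => simp at hl
    | @cons a b v h₂ p₂ =>
      obtain ⟨x, q, h', heq⟩ := SimpleGraph.Walk.exists_cons_eq_concat h₂ p₂
      refine ⟨a, x, q, ?_, ?_, ?_⟩
      · have : (q.concat h').IsPath := by
          rw [← heq]; exact hp.of_cons
        rw [SimpleGraph.Walk.concat_eq_append] at this
        exact this.of_append_left
      · intro w hw
        have hwp : w ∈ (SimpleGraph.Walk.cons h₁ (SimpleGraph.Walk.cons h₂ p₂)).support := by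
          rw [heq, SimpleGraph.Walk.support_cons, SimpleGraph.Walk.support_concat]
          exact List.mem_cons_of_mem _ (by simp [hw])
        have hwu : w ≠ u := by
          rintro rfl
          have := (SimpleGraph.Walk.cons_isPath_iff h₁ _).mp hp
          apply this.2
          rw [heq, SimpleGraph.Walk.support_concat]
          simp [hw]
        have hwv : w ≠ v := by
          rintro rfl
          have hcp : (q.concat h').IsPath := by rw [← heq]; exact hp.of_cons
          have := hcp.2
          rw [SimpleGraph.Walk.support_concat] at this
          simp only [List.concat_eq_append, List.nodup_append] at this
          exact this.2.2 w hw w (by simp) rfl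
        exact Finset.mem_filter.mpr ⟨hs w hwp, internal_mem_filter _ hp hs hwp hwu hwv⟩
      · have : (SimpleGraph.Walk.cons h₂ p₂).length = (q.concat h').length := by rw [heq]
        rw [SimpleGraph.Walk.length_concat] at this
        simp [SimpleGraph.Walk.length_cons, this]

lemma pair_iter [Fintype V] {u v : V} (p : T.Walk u v) (hp : p.IsPath) :
    ∀ k, 2 * k ≤ p.length →
    ∃ (u' v' : V) (p' : T.Walk u' v'), p'.IsPath ∧
      (∀ w ∈ p'.support, w ∈ stemIter T Finset.univ k) ∧ p.length = p'.length + 2 * k := by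
  intro k
  induction k with
  | zero => exact fun _ => ⟨u, v, p, hp, fun w _ => Finset.mem_univ w, by simp⟩
  | succ k ih =>
    intro hk
    obtain ⟨u', v', p', hp', hs', hl'⟩ := ih (by omega)
    have h2 : 2 ≤ p'.length := by omega
    obtain ⟨u'', v'', p'', hp'', hs'', hl''⟩ := pair_step p' hp' hs' h2
    exact ⟨u'', v'', p'', hp'', hs'', by omega⟩

lemma walk_unique (hac : T.IsAcyclic) {u v : V} (p q : T.Walk u v)
    (hp : p.IsPath) (hq : q.IsPath) : p = q := by
  have := (isAcyclic_iff_path_unique.mp hac) ⟨p, hp⟩ ⟨q, hq⟩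
  exact congrArg Subtype.val this

lemma adj_start_iff (hac : T.IsAcyclic) {a a' b v : V} (h : T.Adj a a') (q : T.Walk a' b)
    (hp : (SimpleGraph.Walk.cons h q).IsPath) (hv : v ∈ q.support) : T.Adj a v ↔ v = a' := by
  constructor
  · intro hav
    by_contra hne
    have hq : q.IsPath := hp.of_cons
    have hna : a ∉ q.support := ((SimpleGraph.Walk.cons_isPath_iff h q).mp hp).2
    obtain ⟨t, htp, hts⟩ : ∃ t : T.Walk a' v, t.IsPath ∧ ∀ x ∈ t.support, x ∈ q.support :=
      ⟨q.takeUntil v hv, hq.takeUntil hv, fun x hx => q.support_takeUntil_subset hv hx⟩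
    have haw : a ∉ t.support := fun hx => hna (hts a hx)
    cases t with
    | nil => exact hne rfl
    | @cons a' c v h2 t2 =>
      have hw1 : (SimpleGraph.Walk.cons h (SimpleGraph.Walk.cons h2 t2)).IsPath :=
        (SimpleGraph.Walk.cons_isPath_iff _ _).mpr ⟨htp, haw⟩
      have hw2 : (SimpleGraph.Walk.cons hav SimpleGraph.Walk.nil).IsPath := by
        rw [SimpleGraph.Walk.cons_isPath_iff]
        exact ⟨SimpleGraph.Walk.IsPath.nil, by simp [hav.ne]⟩
      have heq := walk_unique hac _ _ hw1 hw2
      have := congrArg SimpleGraph.Walk.length heq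
      simp [SimpleGraph.Walk.length_cons] at this
  · rintro rfl; exact h

lemma exists_adj_filter (hac : T.IsAcyclic) (hconn : T.Connected) {A : Finset V}
    (hA : TConv T A)
    (hpair : ∃ (u v : V) (p : T.Walk u v), p.IsPath ∧ (∀ w ∈ p.support, w ∈ A) ∧ 2 ≤ p.length)
    {c : V} (hc : c ∈ A) (hc' : c ∉ A.filter fun x => 1 < degIn T A x) :
    ∃ d, T.Adj c d ∧ d ∈ A.filter fun x => 1 < degIn T A x := by
  -- find some element of the filter
  obtain ⟨u, v, p, hp, hs, hl⟩ := hpair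
  obtain ⟨m, hm⟩ : ∃ m, m ∈ A.filter fun x => 1 < degIn T A x := by
    cases p with
    | nil => simp at hl
    | @cons u a v h₁ p₁ =>
      cases p₁ with
      | nil => simp at hl
      | @cons a b v h₂ p₂ =>
        refine ⟨a, Finset.mem_filter.mpr ⟨hs a (by simp), ?_⟩⟩
        have hau : a ≠ u := by
          rintro rfl
          exact ((SimpleGraph.Walk.cons_isPath_iff h₁ _).mp hp).2 (by simp)
        have hav : a ≠ v := by
          rintro rfl
          exact ((SimpleGraph.Walk.cons_isPath_iff h₂ p₂).mp hp.of_cons).2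
            (SimpleGraph.Walk.end_mem_support p₂)
        exact internal_mem_filter _ hp hs (by simp) hau hav
    -- walk from c to m
  have hmA : m ∈ A := (Finset.mem_filter.mp hm).1
  have hcm : c ≠ m := by rintro rfl; exact hc' hm
  obtain ⟨q0⟩ := hconn c m
  obtain ⟨q, hqpath⟩ := q0.toPath
  have hsq : ∀ x ∈ q.support, x ∈ A := fun x hx => hA hc hmA q hqpath x hx
  clear hc'
  cases q with
  | nil => exact absurd rfl hcm
  | @cons c d m h qt =>
    refine ⟨d, h, ?_⟩
    cases qt with
    | nil => exact hm
    | @cons d e m h3 q3 =>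
      have hdc : d ≠ c := by
        rintro rfl
        exact ((SimpleGraph.Walk.cons_isPath_iff _ _).mp hqpath).2 (by simp)
      have hdm : d ≠ m := by
        rintro rfl
        exact ((SimpleGraph.Walk.cons_isPath_iff _ _).mp hqpath.of_cons).2
          (SimpleGraph.Walk.end_mem_support q3)
      exact Finset.mem_filter.mpr ⟨hsq d (by simp),
        internal_mem_filter _ hqpath hsq (by simp) hdc hdm⟩

lemma main_inv [Fintype V] (hT : T.IsTree) (root : V) {u₀ v₀ : V}
    (p₀ : T.Walk u₀ v₀) (hp₀ : p₀.IsPath) {r : ℕ} (hl₀ : 2 * r < p₀.length) :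
    ∀ k, k ≤ r → ∃ (c : V) (p : T.Walk root c), p.IsPath ∧ c ∈ stemIter T Finset.univ k ∧
      (∀ w ∈ p.support, w ≠ c → w ∉ stemIter T Finset.univ k) ∧
      downStemIter T root Finset.univ k = stemIter T Finset.univ k ∪ p.support.toFinset := by
  intro k
  induction k with
  | zero =>
    intro _
    refine ⟨root, SimpleGraph.Walk.nil, SimpleGraph.Walk.IsPath.nil, Finset.mem_univ _, ?_, ?_⟩
    · intro w hw hwr
      simp only [SimpleGraph.Walk.support_nil, List.mem_singleton] at hw
      exact absurd hw hwr
    · simp [stemIter, downStemIter]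
  | succ k ih =>
    intro hk1
    obtain ⟨c, p, hp, hcA, hnot, hBeq⟩ := ih (by omega)
    set A : Finset V := stemIter T Finset.univ k with hAdef
    set B : Finset V := downStemIter T root Finset.univ k with hBdef
    have hstepA : stemIter T Finset.univ (k+1) = A.filter fun v => 1 < degIn T A v := rfl
    have hstepB : downStemIter T root Finset.univ (k+1)
        = B.filter fun v => v = root ∨ 1 < degIn T B v := rfl
    set A' : Finset V := A.filter fun v => 1 < degIn T A v with hA'def
    have hAB : A ⊆ B := by rw [hBeq]; exact Finset.subset_union_left
    have hsuppB : ∀ w ∈ p.support, w ∈ B := by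
      intro w hw; rw [hBeq]; exact Finset.mem_union_right _ (List.mem_toFinset.mpr hw)
    have hA'A : A' ⊆ A := Finset.filter_subset _ _
    have hconv : TConv T A := tconv_stemIter k
    have hrootp : root ∈ p.support := SimpleGraph.Walk.start_mem_support p
    -- pair of far-apart vertices surviving in A
    have hpair : ∃ (u v : V) (p1 : T.Walk u v), p1.IsPath ∧
        (∀ w ∈ p1.support, w ∈ A) ∧ 2 ≤ p1.length := by
      obtain ⟨u', v', p1, hp1, hs1, hl1⟩ := pair_iter p₀ hp₀ k (by omega)
      exact ⟨u', v', p1, hp1, hs1, by omega⟩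
    -- key: a vertex of A off the path has all its B-neighbours in A
    have hBnbr : ∀ v, v ∈ A → v ∉ p.support → ∀ w, T.Adj v w → w ∈ B → w ∈ A := by
      intro v hv hvp w hadj hwB
      rw [hBeq, Finset.mem_union] at hwB
      rcases hwB with hwA | hwS
      · exact hwA
      · rw [List.mem_toFinset] at hwS
        by_contra hwA
        have hwc : w ≠ c := by rintro rfl; exact hwA hcA
        have hdrop : (p.dropUntil w hwS).IsPath := hp.dropUntil hwS
        have hvd : v ∉ (p.dropUntil w hwS).support :=
          fun hx => hvp (p.support_dropUntil_subset hwS hx)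
        have hw2 : (SimpleGraph.Walk.cons hadj (p.dropUntil w hwS)).IsPath :=
          (SimpleGraph.Walk.cons_isPath_iff _ _).mpr ⟨hdrop, hvd⟩
        exact hwA (hconv hv hcA _ hw2 w (by simp))
    have hdegA : ∀ v, v ∈ A → v ∉ p.support → 1 < degIn T B v → 1 < degIn T A v := by
      intro v hv hvp hd
      refine lt_of_lt_of_le hd (Finset.card_le_card ?_)
      intro x hx
      rw [Finset.mem_filter] at hx ⊢
      exact ⟨hBnbr v hv hvp x hx.2 hx.1, hx.2⟩
    -- case split on whether c survives
    by_cases hcA' : c ∈ A'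
    · -- same path works
      refine ⟨c, p, hp, hcA', fun w hw hwc => fun hx => hnot w hw hwc (hA'A hx), ?_⟩
      rw [hstepB]
      apply Finset.ext
      intro x
      simp only [Finset.mem_filter, Finset.mem_union]
      constructor
      · rintro ⟨hxB, hcond⟩
        by_cases hxp : x ∈ p.support
        · exact Or.inr (List.mem_toFinset.mpr hxp)
        · have hxA : x ∈ A := by
            rw [hBeq, Finset.mem_union] at hxB
            rcases hxB with h1 | h1
            · exact h1
            · exact absurd (List.mem_toFinset.mp h1) hxp
          rcases hcond with rfl | hdeg
          · exact absurd hrootp hxp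
          · exact Or.inl (Finset.mem_filter.mpr ⟨hxA, hdegA x hxA hxp hdeg⟩)
      · rintro (hxA' | hxS)
        · have hxA := hA'A hxA'
          exact ⟨hAB hxA, Or.inr (lt_of_lt_of_le (Finset.mem_filter.mp hxA').2
            (degIn_mono hAB x))⟩
        · rw [List.mem_toFinset] at hxS
          refine ⟨hsuppB x hxS, ?_⟩
          by_cases hxr : x = root
          · exact Or.inl hxr
          by_cases hxc : x = c
          · subst hxc
            refine Or.inr (lt_of_lt_of_le (Finset.mem_filter.mp hcA').2 (degIn_mono hAB x))
          · exact Or.inr (internal_mem_filter p hp hsuppB hxS hxr hxc)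
    · -- extend the path by one edge into A'
      have hcd : ∃ d, T.Adj c d ∧ d ∈ A' := by
        rw [hA'def]
        exact exists_adj_filter hT.2 hT.1 hconv hpair hcA (by rw [← hA'def]; exact hcA')
      obtain ⟨d, hadj, hdA'⟩ := hcd
      have hdA : d ∈ A := hA'A hdA'
      have hdp : d ∉ p.support := by
        intro hdp
        by_cases hdc : d = c
        · exact hadj.ne' hdc
        · exact hnot d hdp hdc hdA
      set p' : T.Walk root d := p.concat hadj with hp'def
      have hp'path : p'.IsPath := by
        rw [hp'def, SimpleGraph.Walk.isPath_def, SimpleGraph.Walk.support_concat]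
        simp only [List.concat_eq_append, List.nodup_append, List.nodup_cons,
          List.not_mem_nil, not_false_iff, List.nodup_nil, and_true, true_and]
        refine ⟨hp.support_nodup, ?_⟩
        intro a ha b hb hab
        rw [List.mem_singleton] at hb
        subst hb
        subst hab
        exact hdp ha
      have hsupp' : p'.support = p.support ++ [d] := by
        rw [hp'def, SimpleGraph.Walk.support_concat]
      refine ⟨d, p', hp'path, hdA', ?_, ?_⟩
      · intro w hw hwd
        rw [hsupp', List.mem_append, List.mem_singleton] at hw
        rcases hw with hw | hw
        · by_cases hwc : w = c
          · subst hwc; intro hx; exact hcA' hx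
          · exact fun hx => hnot w hw hwc (hA'A hx)
        · exact absurd hw hwd
      · rw [hstepB]
        apply Finset.ext
        intro x
        have hsupp'F : p'.support.toFinset = insert d p.support.toFinset := by
          rw [hsupp']; ext y; simp [or_comm]
        simp only [Finset.mem_filter, Finset.mem_union, hsupp'F, Finset.mem_insert]
        constructor
        · rintro ⟨hxB, hcond⟩
          by_cases hxp : x ∈ p.support
          · exact Or.inr (Or.inr (List.mem_toFinset.mpr hxp))
          · have hxA : x ∈ A := by
              rw [hBeq, Finset.mem_union] at hxB
              rcases hxB with h1 | h1
              · exact h1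
              · exact absurd (List.mem_toFinset.mp h1) hxp
            rcases hcond with rfl | hdeg
            · exact absurd hrootp hxp
            · exact Or.inl (Finset.mem_filter.mpr ⟨hxA, hdegA x hxA hxp hdeg⟩)
        · rintro (hxA' | rfl | hxS)
          · have hxA := hA'A hxA'
            exact ⟨hAB hxA, Or.inr (lt_of_lt_of_le (Finset.mem_filter.mp hxA').2
              (degIn_mono hAB x))⟩
          · refine ⟨hAB hdA, Or.inr ?_⟩
            exact lt_of_lt_of_le (Finset.mem_filter.mp hdA').2 (degIn_mono hAB x)
          · rw [List.mem_toFinset] at hxS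
            refine ⟨hsuppB x hxS, ?_⟩
            by_cases hxr : x = root
            · exact Or.inl hxr
            by_cases hxc : x = c
            · subst hxc
              -- c has neighbours d and (previous vertex on p) in B
              refine Or.inr ?_
              cases p with
              | nil => exact absurd rfl hxr
              | @cons root y c h₀ p₀ =>
                obtain ⟨z, q, hz, heq⟩ := SimpleGraph.Walk.exists_cons_eq_concat h₀ p₀
                have hzp : z ∈ (SimpleGraph.Walk.cons h₀ p₀).support := by
                  rw [heq, SimpleGraph.Walk.support_concat]
                  exact List.mem_append_left _ (SimpleGraph.Walk.end_mem_support q)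
                have hzd : z ≠ d := by rintro rfl; exact hdp hzp
                exact two_le_degIn hzd (hsuppB z hzp) (hAB hdA) hz.symm hadj
            · exact Or.inr (internal_mem_filter p hp hsuppB hxS hxr hxc)

lemma iso_aux (hac : T.IsAcyclic) : ∀ {a b : V} (q : T.Walk a b), q.IsPath →
    ∃ f : (T.induce {w | w ∈ q.support}) ≃g pathGraph (q.length + 1),
      (f ⟨a, q.start_mem_support⟩ : Fin (q.length + 1)) = 0 := by
  intro a b q
  induction q with
  | nil =>
    rename_i u
    intro _
    refine ⟨⟨⟨fun _ => 0, fun _ => ⟨u, by simp⟩, ?_, ?_⟩, ?_⟩, rfl⟩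
    · intro x
      refine Subtype.ext ?_
      have := x.2
      simp only [SimpleGraph.Walk.support_nil, Set.mem_setOf_eq, List.mem_singleton] at this
      exact this.symm
    · intro i
      have h2 := i.2
      simp only [SimpleGraph.Walk.length_nil] at h2
      apply Fin.ext
      simp only [Equiv.coe_fn_mk]
      show (0 : Fin _).val = _
      simp only [Fin.val_zero]
      omega
    · intro x y
      constructor
      · intro hadj
        rw [pathGraph_adj] at hadj
        simp at hadj
      · intro hadj
        have h1 : (x : V) = u := by simpa using x.2
        have h2 : (y : V) = u := by simpa using y.2
        have h3 : T.Adj (x : V) (y : V) := hadj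
        rw [h1, h2] at h3
        exact absurd h3 (T.irrefl)
  | @cons a a' b h q' ih =>
    intro hq
    show ∃ f : (T.induce {w | w ∈ (SimpleGraph.Walk.cons h q').support}) ≃g
        pathGraph (q'.length + 1 + 1),
      (f ⟨a, SimpleGraph.Walk.start_mem_support _⟩ : Fin (q'.length + 1 + 1)) = 0
    obtain ⟨g, hg0⟩ := ih hq.of_cons
    have ha : a ∉ q'.support := ((SimpleGraph.Walk.cons_isPath_iff h q').mp hq).2
    have hmem : ∀ x : {w | w ∈ (SimpleGraph.Walk.cons h q').support},
        (x : V) = a ∨ (x : V) ∈ {w | w ∈ q'.support} := fun x => by simpa using x.2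
    have hmem' : ∀ (x : V), x ∈ q'.support → x ∈ {w | w ∈ (SimpleGraph.Walk.cons h q').support} :=
      fun x hx => by simp [hx]
    refine ⟨⟨⟨fun x => if hx : (x : V) = a then 0
        else (g ⟨(x : V), (hmem x).resolve_left hx⟩).succ,
      fun i => Fin.cases ⟨a, by simp⟩ (fun j => ⟨((g.symm j : {w | w ∈ q'.support}) : V),
        hmem' _ (g.symm j).2⟩) i,
      ?_, ?_⟩, ?_⟩, dif_pos rfl⟩
    · intro x
      by_cases hx : (x : V) = a
      · simp only [dif_pos hx, Fin.cases_zero]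
        exact Subtype.ext hx.symm
      · simp only [dif_neg hx, Fin.cases_succ]
        simp only [RelIso.symm_apply_apply, Subtype.coe_eta]
    · intro i
      induction i using Fin.cases with
      | zero => simp
      | succ j =>
        simp only [Fin.cases_succ]
        have hja : ((g.symm j : {w | w ∈ q'.support}) : V) ≠ a :=
          fun hh => ha (hh ▸ (g.symm j).2)
        refine (dif_neg hja).trans ?_
        rw [Subtype.coe_eta, g.apply_symm_apply]
    · intro x y
      by_cases hx : (x : V) = a <;> by_cases hy : (y : V) = a
      · simp only [Equiv.coe_fn_mk, dif_pos hx, dif_pos hy]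
        constructor
        · intro hadj
          rw [pathGraph_adj] at hadj
          simp at hadj
        · intro hadj
          have h2 : T.Adj (x : V) (y : V) := hadj
          rw [hx, hy] at h2
          exact absurd h2 (T.irrefl)
      · -- x = a, y ≠ a
        have hy' : (y : V) ∈ q'.support := (hmem y).resolve_left hy
        simp only [Equiv.coe_fn_mk, dif_pos hx, dif_neg hy]
        rw [pathGraph_adj]
        constructor
        · rintro (hc | hc)
          · have h0 : (g ⟨(y : V), hy'⟩) = 0 := by
              apply Fin.ext
              simp only [Fin.val_succ, Fin.val_zero] at hc ⊢
              omega
            rw [← hg0] at h0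
            have h1 := g.toEquiv.injective (by exact h0)
            have hya' : (y : V) = a' := congrArg Subtype.val h1
            show T.Adj (x : V) (y : V)
            rw [hx, hya']
            exact h
          · exfalso
            simp only [Fin.val_succ, Fin.val_zero] at hc
            omega
        · intro hadj
          have h2 : T.Adj (x : V) (y : V) := hadj
          rw [hx] at h2
          have hya' : (y : V) = a' := (adj_start_iff hac h q' hq hy').mp h2
          left
          have h3 : (⟨(y : V), hy'⟩ : {w | w ∈ q'.support}) = ⟨a', q'.start_mem_support⟩ :=
            Subtype.ext hya'
          rw [h3, hg0]
          simp
      · -- x ≠ a, y = a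
        have hx' : (x : V) ∈ q'.support := (hmem x).resolve_left hx
        simp only [Equiv.coe_fn_mk, dif_neg hx, dif_pos hy]
        rw [pathGraph_adj]
        constructor
        · rintro (hc | hc)
          · exfalso
            simp only [Fin.val_succ, Fin.val_zero] at hc
            omega
          · have h0 : (g ⟨(x : V), hx'⟩) = 0 := by
              apply Fin.ext
              simp only [Fin.val_succ, Fin.val_zero] at hc ⊢
              omega
            rw [← hg0] at h0
            have h1 := g.toEquiv.injective (by exact h0)
            have hxa' : (x : V) = a' := congrArg Subtype.val h1
            show T.Adj (x : V) (y : V)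
            rw [hy, hxa']
            exact h.symm
        · intro hadj
          have h2 : T.Adj (x : V) (y : V) := hadj
          rw [hy] at h2
          have hxa' : (x : V) = a' := (adj_start_iff hac h q' hq hx').mp h2.symm
          right
          have h3 : (⟨(x : V), hx'⟩ : {w | w ∈ q'.support}) = ⟨a', q'.start_mem_support⟩ :=
            Subtype.ext hxa'
          rw [h3, hg0]
          simp
      · -- both ≠ a
        have hx' : (x : V) ∈ q'.support := (hmem x).resolve_left hx
        have hy' : (y : V) ∈ q'.support := (hmem y).resolve_left hy
        simp only [Equiv.coe_fn_mk, dif_neg hx, dif_neg hy]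
        constructor
        · intro hc
          rw [pathGraph_adj] at hc
          simp only [Fin.val_succ] at hc
          have h3 : (pathGraph (q'.length + 1)).Adj (g ⟨(x : V), hx'⟩) (g ⟨(y : V), hy'⟩) := by
            rw [pathGraph_adj]; omega
          exact g.map_rel_iff.mp h3
        · intro hadj
          have h2 : (T.induce {w | w ∈ q'.support}).Adj ⟨(x : V), hx'⟩ ⟨(y : V), hy'⟩ := hadj
          have h3 := g.map_rel_iff.mpr h2
          rw [pathGraph_adj] at h3
          rw [pathGraph_adj]
          simp only [Fin.val_succ]
          omega

lemma isPathGraphOn_of_eq_empty (G : SimpleGraph V) {A : Finset V} (hA : A = ∅) :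
    IsPathGraphOn G A := by
  subst hA
  haveI h1 : IsEmpty ↥(((∅ : Finset V) : Set V)) := ⟨fun x => by simpa using x.2⟩
  exact ⟨0, ⟨⟨Equiv.equivOfIsEmpty _ _, fun {x y} => isEmptyElim x⟩⟩⟩

lemma isPathGraphOn_walkSupport (hac : T.IsAcyclic) {a b : V} (q : T.Walk a b)
    (hq : q.IsPath) {A : Finset V} (hA : A = q.support.toFinset) : IsPathGraphOn T A := by
  obtain ⟨f, _⟩ := iso_aux hac q hq
  refine ⟨q.length + 1, ⟨?_⟩⟩
  have hset : (A : Set V) = {w | w ∈ q.support} := by rw [hA]; ext x; simp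
  rw [hset]
  exact f

end Aux

/-- For a finite rooted tree `T` and a positive integer `r` with
`2r < diam(T)`, the subgraph of `Down-Stem_r(T)` induced by the vertices of
`Down-Stem_r(T)` not in `Stem_r(T)` is a path graph (possibly empty). -/
theorem stmt_11 {V : Type*} [Fintype V] [DecidableEq V] (T : SimpleGraph V)
    [DecidableRel T.Adj] (hT : T.IsTree) (root : V) (r : ℕ) (hr : 0 < r)
    (hdiam : 2 * r < T.diam) :
    IsPathGraphOn T (downStemIter T root Finset.univ r \ stemSet T r) := by
  have hconn := hT.1
  have hac := hT.2
  haveI : Nonempty V := hconn.nonempty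
  obtain ⟨u, v, huv⟩ := exists_dist_eq_diam (G := T)
  obtain ⟨w0, hw0⟩ := hconn.exists_walk_length_eq_dist u v
  have hl₀ : 2 * r < (w0.toPath : T.Walk u v).length := by
    have h1 : T.dist u v ≤ (w0.toPath : T.Walk u v).length := SimpleGraph.dist_le _
    omega
  obtain ⟨c, p, hp, hcA, hnot, hBeq⟩ := main_inv hT root (w0.toPath : T.Walk u v)
    w0.toPath.2 hl₀ r le_rfl
  rw [show stemSet T r = stemIter T Finset.univ r from rfl]
  cases p with
  | nil =>
    apply isPathGraphOn_of_eq_empty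
    rw [Finset.eq_empty_iff_forall_notMem]
    intro x hx
    rw [hBeq, Finset.mem_sdiff, Finset.mem_union, List.mem_toFinset] at hx
    rcases hx.1 with h1 | h1
    · exact hx.2 h1
    · simp only [SimpleGraph.Walk.support_nil, List.mem_singleton] at h1
      subst h1
      exact hx.2 hcA
  | @cons root y c h₀ p₀ =>
    obtain ⟨z, q, hz, heq⟩ := SimpleGraph.Walk.exists_cons_eq_concat h₀ p₀
    have hcp : (q.concat hz).IsPath := by rw [← heq]; exact hp
    have hqp : q.IsPath := by
      have h1 := hcp
      rw [SimpleGraph.Walk.concat_eq_append] at h1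
      exact h1.of_append_left
    apply isPathGraphOn_walkSupport hac q hqp
    have hsupp : (SimpleGraph.Walk.cons h₀ p₀).support = q.support ++ [c] := by
      rw [heq, SimpleGraph.Walk.support_concat]
    have hcq : c ∉ q.support := by
      have h1 := hcp
      rw [SimpleGraph.Walk.isPath_def, SimpleGraph.Walk.support_concat,
        List.nodup_append] at h1
      intro hc
      exact h1.2.2 c hc c (by simp) rfl
    ext x
    rw [hBeq]
    simp only [Finset.mem_sdiff, Finset.mem_union, List.mem_toFinset, hsupp, List.mem_append,
      List.mem_singleton]
    constructor
    · rintro ⟨h1 | h1, h2⟩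
      · exact absurd h1 h2
      · rcases h1 with h1 | rfl
        · exact h1
        · exact absurd hcA h2
    · intro hxq
      have hxs : x ∈ (SimpleGraph.Walk.cons h₀ p₀).support := by
        rw [hsupp]; exact List.mem_append_left _ hxq
      have hxc : x ≠ c := fun hh => hcq (hh ▸ hxq)
      exact ⟨Or.inr (Or.inl hxq), hnot x hxs hxc⟩
end

section
/- For any finite rooted tree T and nonnegative integer r, MD_{2r}(T) = N^L_r(T) − N^E_r(T) + ε for some ε ∈ {−1, 0, +1}; equivalently, |MD_{2r}(T) − (N^L_r(T) − N^E_r(T))| ≤ 1. -/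
open SimpleGraph

namespace StmtAux

variable {V : Type*} {T : SimpleGraph V}

lemma path_len (hT : T.IsTree) {u w : V} (p : T.Walk u w) (hp : p.IsPath) :
    p.length = T.dist u w := by
  obtain ⟨q, hq⟩ := hT.isConnected.exists_walk_length_eq_dist u w
  have hqp : q.IsPath := q.isPath_of_length_eq_dist hq
  have := (hT.existsUnique_path u w).unique hp hqp
  rw [this, hq]

lemma exists_geodesic (hT : T.IsTree) (u w : V) :
    ∃ p : T.Walk u w, p.IsPath ∧ p.length = T.dist u w := by
  obtain ⟨q, hq⟩ := hT.isConnected.exists_walk_length_eq_dist u w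
  exact ⟨q, q.isPath_of_length_eq_dist hq, hq⟩

lemma tri (hT : T.IsTree) (u x w : V) : T.dist u w ≤ T.dist u x + T.dist x w :=
  hT.isConnected.dist_triangle

lemma dist_zero (hT : T.IsTree) {u w : V} (h : T.dist u w = 0) : u = w :=
  (hT.isConnected.dist_eq_zero_iff.mp h)

/-- onPath x u w := dist u x + dist x w = dist u w -/
lemma onPath_mem_support (hT : T.IsTree) {u x w : V}
    (h : T.dist u x + T.dist x w = T.dist u w)
    (p : T.Walk u w) (hp : p.IsPath) : x ∈ p.support := by
  obtain ⟨q1, hq1, hl1⟩ := exists_geodesic hT u x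
  obtain ⟨q2, hq2, hl2⟩ := exists_geodesic hT x w
  have hW : (q1.append q2).length = T.dist u w := by
    rw [Walk.length_append, hl1, hl2, h]
  have hWp : (q1.append q2).IsPath := (q1.append q2).isPath_of_length_eq_dist hW
  have := (hT.existsUnique_path u w).unique hp hWp
  rw [this, Walk.mem_support_append_iff]
  exact Or.inl q1.end_mem_support

lemma mem_support_onPath (hT : T.IsTree) {u x w : V}
    (p : T.Walk u w) (hp : p.IsPath) (hx : x ∈ p.support) :
    T.dist u x + T.dist x w = T.dist u w := by
  obtain ⟨q, rr, hqr⟩ := Walk.mem_support_iff_exists_append.mp hx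
  subst hqr
  have h1 : q.IsPath := hp.of_append_left
  have h2 : rr.IsPath := hp.of_append_right
  rw [← path_len hT _ hp, Walk.length_append, path_len hT q h1, path_len hT rr h2]

lemma onPath_unique (hT : T.IsTree) {u w x y : V}
    (hx : T.dist u x + T.dist x w = T.dist u w)
    (hy : T.dist u y + T.dist y w = T.dist u w)
    (hd : T.dist u x = T.dist u y) : x = y := by
  obtain ⟨p, hp, hl⟩ := exists_geodesic hT u w
  have hxs := onPath_mem_support hT hx p hp
  obtain ⟨q, rr, hqr⟩ := Walk.mem_support_iff_exists_append.mp hxs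
  subst hqr
  have hys := onPath_mem_support hT hy _ hp
  rw [Walk.mem_support_append_iff] at hys
  have h1 : q.IsPath := hp.of_append_left
  have h2 : rr.IsPath := hp.of_append_right
  rcases hys with hyq | hyr
  · obtain ⟨a, b, hab⟩ := Walk.mem_support_iff_exists_append.mp hyq
    subst hab
    have ha : a.IsPath := h1.of_append_left
    have hb : b.IsPath := h1.of_append_right
    have : T.dist u y + T.dist y x = T.dist u x := by
      rw [← path_len hT _ h1, Walk.length_append, path_len hT a ha, path_len hT b hb]
    have hz : T.dist y x = 0 := by omega
    exact (dist_zero hT (by rwa [dist_comm] at hz))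
  · obtain ⟨a, b, hab⟩ := Walk.mem_support_iff_exists_append.mp hyr
    subst hab
    have ha : a.IsPath := h2.of_append_left
    have hb : b.IsPath := h2.of_append_right
    have hxw : T.dist x y + T.dist y w = T.dist x w := by
      rw [← path_len hT _ h2, Walk.length_append, path_len hT a ha, path_len hT b hb]
    have htri : T.dist u w ≤ T.dist u y + T.dist y w := tri hT u y w
    have hz : T.dist x y = 0 := by omega
    exact dist_zero hT hz

/-- arithmetic sandwich: x between u,w and y between x,w gives all relations -/
lemma sandwich (hT : T.IsTree) {u x y w : V}
    (hx : T.dist u x + T.dist x w = T.dist u w)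
    (hy : T.dist x y + T.dist y w = T.dist x w) :
    T.dist u x + T.dist x y = T.dist u y ∧ T.dist u y + T.dist y w = T.dist u w := by
  have t1 : T.dist u y ≤ T.dist u x + T.dist x y := tri hT u x y
  have t2 : T.dist u w ≤ T.dist u y + T.dist y w := tri hT u y w
  omega

lemma exists_at_dist_aux (hT : T.IsTree) {u w : V} (p : T.Walk u w) :
    p.length = T.dist u w → ∀ k, k ≤ T.dist u w →
    ∃ x, T.dist u x = k ∧ k + T.dist x w = T.dist u w := by
  induction p with
  | nil =>
    intro hl k hk
    have h0 : k = 0 := by rw [SimpleGraph.dist_self] at hk; omega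
    subst h0
    exact ⟨_, SimpleGraph.dist_self, by simp⟩
  | @cons a b c hadj q ih =>
    intro hl k hk
    rw [Walk.length_cons] at hl
    have hab1 : T.dist a b ≤ 1 := by
      have : T.dist a b ≤ (Walk.cons hadj Walk.nil).length := SimpleGraph.dist_le _
      simpa using this
    have hbc : T.dist b c = q.length := by
      have h1 : T.dist b c ≤ q.length := SimpleGraph.dist_le q
      have h2 : T.dist a c ≤ T.dist a b + T.dist b c := tri hT a b c
      omega
    rcases Nat.eq_zero_or_pos k with rfl | hpos
    · exact ⟨a, SimpleGraph.dist_self, by omega⟩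
    · obtain ⟨k', rfl⟩ := Nat.exists_eq_add_of_le hpos
      obtain ⟨x, hx1, hx2⟩ := ih hbc.symm k' (by omega)
      refine ⟨x, ?_, ?_⟩
      · have h1 : T.dist a x ≤ T.dist a b + T.dist b x := tri hT a b x
        have hlb : T.dist a c ≤ T.dist a x + T.dist x c := tri hT a x c
        omega
      · have h1 : T.dist a x ≤ T.dist a b + T.dist b x := tri hT a b x
        have hlb : T.dist a c ≤ T.dist a x + T.dist x c := tri hT a x c
        omega

lemma exists_at_dist (hT : T.IsTree) {u w : V} {k : ℕ} (hk : k ≤ T.dist u w) :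
    ∃ x, T.dist u x = k ∧ k + T.dist x w = T.dist u w := by
  obtain ⟨p, hp, hl⟩ := exists_geodesic hT u w
  exact exists_at_dist_aux hT p hl k hk

lemma append_isPath {a b c : V} {p : T.Walk a b} {q : T.Walk b c}
    (hp : p.IsPath) (hq : q.IsPath)
    (hdisj : ∀ x, x ∈ p.support → x ∈ q.support → x = b) :
    (p.append q).IsPath := by
  rw [Walk.isPath_def, Walk.support_append, List.nodup_append]
  refine ⟨hp.support_nodup, ?_, ?_⟩
  · exact (hq.support_nodup).sublist (List.tail_sublist _)
  · intro x hxp y hxq hxy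
    subst hxy
    have hxq' : x ∈ q.support := List.mem_of_mem_tail hxq
    have hxb := hdisj x hxp hxq'
    subst hxb
    have hcons := q.support_eq_cons
    have hnd := hq.support_nodup
    rw [hcons] at hnd
    exact (List.nodup_cons.mp hnd).1 hxq

lemma median (hT : T.IsTree) [DecidableEq V] (u w s : V) :
    ∃ g, T.dist u g + T.dist g w = T.dist u w ∧
         T.dist u g + T.dist g s = T.dist u s ∧
         T.dist w g + T.dist g s = T.dist w s := by
  obtain ⟨p, hp, hlp⟩ := exists_geodesic hT u w
  obtain ⟨q, hq, hlq⟩ := exists_geodesic hT u s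
  set I : Finset V := p.support.toFinset ∩ q.support.toFinset with hI
  have hune : u ∈ I := by
    simp [hI, List.mem_toFinset, Walk.start_mem_support]
  obtain ⟨g, hgI, hgmax⟩ := I.exists_max_image (fun x => T.dist u x) ⟨u, hune⟩
  simp only [hI, Finset.mem_inter, List.mem_toFinset] at hgI
  have hg1 : T.dist u g + T.dist g w = T.dist u w := mem_support_onPath hT p hp hgI.1
  have hg2 : T.dist u g + T.dist g s = T.dist u s := mem_support_onPath hT q hq hgI.2
  refine ⟨g, hg1, hg2, ?_⟩
  -- build path w → g → s
  obtain ⟨p1, hp1, hl1⟩ := exists_geodesic hT g w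
  obtain ⟨p2, hp2, hl2⟩ := exists_geodesic hT g s
  have key : ∀ x, x ∈ p1.support → x ∈ p2.support → x = g := by
    intro x hx1 hx2
    have o1 : T.dist g x + T.dist x w = T.dist g w := mem_support_onPath hT p1 hp1 hx1
    have o2 : T.dist g x + T.dist x s = T.dist g s := mem_support_onPath hT p2 hp2 hx2
    have t1 : T.dist u x ≤ T.dist u g + T.dist g x := tri hT u g x
    have t2 : T.dist u w ≤ T.dist u x + T.dist x w := tri hT u x w
    have hux : T.dist u x + T.dist x w = T.dist u w ∧ T.dist u x = T.dist u g + T.dist g x := by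
      omega
    have t3 : T.dist u s ≤ T.dist u x + T.dist x s := tri hT u x s
    have hux2 : T.dist u x + T.dist x s = T.dist u s := by omega
    have hxI : x ∈ I := by
      simp only [hI, Finset.mem_inter, List.mem_toFinset]
      exact ⟨onPath_mem_support hT hux.1 p hp, onPath_mem_support hT hux2 q hq⟩
    have := hgmax x hxI
    have : T.dist g x = 0 := by omega
    exact dist_zero hT (by rwa [dist_comm] at this)
  have hWp : (p1.reverse.append p2).IsPath := by
    refine append_isPath hp1.reverse hp2 ?_
    intro x hx1 hx2
    rw [Walk.support_reverse, List.mem_reverse] at hx1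
    exact key x hx1 hx2
  have := path_len hT _ hWp
  rw [Walk.length_append, Walk.length_reverse, hl1, hl2] at this
  rw [← this, dist_comm (u := g) (v := w)]


section Rooted

variable {V : Type*} {T : SimpleGraph V} {root : V}

/-- ancestor relation -/
def anc (T : SimpleGraph V) (root x y : V) : Prop :=
  T.dist root x + T.dist x y = T.dist root y

lemma anc_refl (x : V) : anc T root x x := by simp [anc]

lemma anc_root (hT : T.IsTree) (x : V) : anc T root root x := by simp [anc]

variable [Fintype V]

lemma mem_descSet {x y : V} : y ∈ descSet T root x ↔ anc T root x y := by
  simp [descSet, anc]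

lemma anc_trans (hT : T.IsTree) {x y z : V} (h1 : anc T root x y) (h2 : anc T root y z) :
    anc T root x z ∧ T.dist x y + T.dist y z = T.dist x z := by
  unfold anc at *
  have t1 : T.dist x z ≤ T.dist x y + T.dist y z := tri hT x y z
  have t2 : T.dist root z ≤ T.dist root x + T.dist x z := tri hT root x z
  constructor <;> omega

lemma anc_antisymm (hT : T.IsTree) {x y : V} (h1 : anc T root x y) (h2 : anc T root y x) :
    x = y := by
  unfold anc at *
  have hc : T.dist x y = T.dist y x := SimpleGraph.dist_comm
  have : T.dist x y = 0 := by omega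
  exact dist_zero hT this

lemma anc_depth_lt (hT : T.IsTree) {x y : V} (h1 : anc T root x y) (hne : x ≠ y) :
    T.dist root x < T.dist root y := by
  unfold anc at h1
  have : T.dist x y ≠ 0 := fun hc => hne (dist_zero hT hc)
  omega

lemma anc_comparable (hT : T.IsTree) {x y z : V} (hx : anc T root x z) (hy : anc T root y z)
    (hd : T.dist root x ≤ T.dist root y) : anc T root x y := by
  obtain ⟨p, hp, hl⟩ := exists_geodesic hT root z
  have hxs := onPath_mem_support hT hx p hp
  have hys := onPath_mem_support hT hy p hp
  obtain ⟨q, rr, hqr⟩ := Walk.mem_support_iff_exists_append.mp hys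
  subst hqr
  have h1 : q.IsPath := hp.of_append_left
  have h2 : rr.IsPath := hp.of_append_right
  rw [Walk.mem_support_append_iff] at hxs
  rcases hxs with hxq | hxr
  · exact mem_support_onPath hT q h1 hxq
  · have o : T.dist y x + T.dist x z = T.dist y z := mem_support_onPath hT rr h2 hxr
    unfold anc at *
    have t1 : T.dist root x ≤ T.dist root y + T.dist y x := tri hT root y x
    have hz : T.dist y x = 0 := by omega
    have := dist_zero hT hz
    subst this
    simp [anc]

/-- c is a child of x -/
def child (T : SimpleGraph V) (root x c : V) : Prop :=
  anc T root x c ∧ T.dist x c = 1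

lemma exists_child_toward (hT : T.IsTree) {x y : V} (hxy : anc T root x y) (hne : x ≠ y) :
    ∃ c, child T root x c ∧ anc T root c y ∧ 1 + T.dist c y = T.dist x y := by
  have hpos : 1 ≤ T.dist x y := by
    rcases Nat.eq_zero_or_pos (T.dist x y) with h | h
    · exact absurd (dist_zero hT h) hne
    · omega
  obtain ⟨c, hc1, hc2⟩ := exists_at_dist hT hpos
  have t1 : T.dist root c ≤ T.dist root x + T.dist x c := tri hT root x c
  have t2 : T.dist root y ≤ T.dist root c + T.dist c y := tri hT root c y
  unfold anc at hxy
  refine ⟨c, ⟨by unfold anc; omega, hc1⟩, by unfold anc; omega, by omega⟩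

lemma desc_nonempty (x : V) : x ∈ descSet T root x := mem_descSet.mpr (anc_refl x)

lemma le_height {x y : V} (h : y ∈ descSet T root x) : T.dist x y ≤ heightAt T root x :=
  Finset.le_sup h

lemma exists_height (x : V) : ∃ y, anc T root x y ∧ T.dist x y = heightAt T root x := by
  obtain ⟨y, hy, hy2⟩ := Finset.exists_mem_eq_sup (descSet T root x) ⟨x, desc_nonempty x⟩ (T.dist x)
  exact ⟨y, mem_descSet.mp hy, hy2.symm⟩

lemma height_anc_le (hT : T.IsTree) {v w : V} (h : anc T root v w) :
    heightAt T root w + T.dist v w ≤ heightAt T root v := by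
  obtain ⟨y, hy, hyd⟩ := exists_height (T := T) (root := root) w
  have h2 := anc_trans hT h hy
  have : y ∈ descSet T root v := mem_descSet.mpr h2.1
  have := le_height this
  omega

lemma exists_desc_at_dist (hT : T.IsTree) {v : V} {k : ℕ} (hk : k ≤ heightAt T root v) :
    ∃ x, anc T root v x ∧ T.dist v x = k ∧ heightAt T root v ≤ heightAt T root x + k := by
  obtain ⟨z, hz, hzd⟩ := exists_height (T := T) (root := root) v
  obtain ⟨x, hx1, hx2⟩ := exists_at_dist hT (show k ≤ T.dist v z by omega)
  have t1 : T.dist root x ≤ T.dist root v + T.dist v x := tri hT root v x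
  have t2 : T.dist root z ≤ T.dist root x + T.dist x z := tri hT root x z
  unfold anc at hz
  have hvx : anc T root v x := by unfold anc; omega
  have hxz : anc T root x z := by unfold anc; omega
  have : z ∈ descSet T root x := mem_descSet.mpr hxz
  have := le_height this
  exact ⟨x, hvx, hx1, by omega⟩

lemma height_succ_iff (hT : T.IsTree) {v : V} {k : ℕ} :
    k + 1 ≤ heightAt T root v ↔ ∃ c, child T root v c ∧ k ≤ heightAt T root c := by
  constructor
  · intro h
    obtain ⟨x, hx1, hx2, hx3⟩ := exists_desc_at_dist hT (show 1 ≤ heightAt T root v by omega)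
    exact ⟨x, ⟨hx1, hx2⟩, by omega⟩
  · rintro ⟨c, ⟨hc1, hc2⟩, hc3⟩
    have := height_anc_le hT hc1
    omega

lemma exists_parent (hT : T.IsTree) {v : V} (h : v ≠ root) :
    ∃ p, anc T root p v ∧ T.dist p v = 1 ∧ T.dist root p + 1 = T.dist root v := by
  have hpos : 1 ≤ T.dist root v := by
    rcases Nat.eq_zero_or_pos (T.dist root v) with h0 | h0
    · exact absurd (dist_zero hT h0).symm h
    · omega
  obtain ⟨x, hx1, hx2⟩ := exists_at_dist hT (Nat.sub_le (T.dist root v) 1)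
  refine ⟨x, ?_, ?_, ?_⟩ <;> (try unfold anc) <;> omega

lemma parent_unique (hT : T.IsTree) {p p' v : V}
    (h1 : anc T root p v) (h2 : T.dist p v = 1)
    (h3 : anc T root p' v) (h4 : T.dist p' v = 1) : p = p' := by
  have d1 : T.dist root p + 1 = T.dist root v := by unfold anc at h1; omega
  have d2 : T.dist root p' + 1 = T.dist root v := by unfold anc at h3; omega
  have hc : anc T root p p' := anc_comparable hT h1 h3 (by omega)
  exact anc_antisymm hT hc (anc_comparable hT h3 h1 (by omega))

lemma adj_depth (hT : T.IsTree) [DecidableEq V] {a b : V} (hadj : T.Adj a b) :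
    T.dist root a + 1 = T.dist root b ∨ T.dist root b + 1 = T.dist root a := by
  have hab : T.dist a b = 1 := SimpleGraph.dist_eq_one_iff_adj.mpr hadj
  have t1 : T.dist root b ≤ T.dist root a + T.dist a b := tri hT root a b
  have t2 : T.dist root a ≤ T.dist root b + T.dist b a := tri hT root b a
  have hba : T.dist b a = 1 := by rwa [SimpleGraph.dist_comm] at hab
  by_contra hcon
  push_neg at hcon
  have heq : T.dist root a = T.dist root b := by omega
  obtain ⟨p, hp, hl⟩ := exists_geodesic hT root a
  have hbns : b ∉ p.support := by
    intro hmem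
    have := mem_support_onPath hT p hp hmem
    omega
  have hepath : (Walk.cons hadj Walk.nil : T.Walk a b).IsPath := by
    rw [Walk.isPath_def]
    simp [hadj.ne]
  have hWp : (p.append (Walk.cons hadj Walk.nil)).IsPath := by
    refine append_isPath hp hepath ?_
    intro x hxp hxe
    simp only [Walk.support_cons, Walk.support_nil, List.mem_cons, List.mem_singleton] at hxe
    rcases hxe with rfl | hxe
    · rfl
    · simp at hxe
      subst hxe
      exact absurd hxp hbns
  have := path_len hT _ hWp
  rw [Walk.length_append] at this
  simp at this
  omega

lemma adj_cases (hT : T.IsTree) [DecidableEq V] {a b : V} (hadj : T.Adj a b) :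
    child T root a b ∨ child T root b a := by
  have hab : T.dist a b = 1 := SimpleGraph.dist_eq_one_iff_adj.mpr hadj
  have hba : T.dist b a = 1 := by rw [SimpleGraph.dist_comm (u := b) (v := a)]; exact hab
  rcases adj_depth (root := root) hT hadj with h | h
  · left
    refine ⟨?_, hab⟩
    show T.dist root a + T.dist a b = T.dist root b
    omega
  · right
    refine ⟨?_, hba⟩
    show T.dist root b + T.dist b a = T.dist root a
    omega

lemma child_adj (hT : T.IsTree) {a b : V} (h : child T root a b) : T.Adj a b :=
  SimpleGraph.dist_eq_one_iff_adj.mp h.2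

lemma desc_disjoint (hT : T.IsTree) {v w x : V} (h1 : ¬anc T root v w) (h2 : ¬anc T root w v)
    (hx : anc T root v x) (hy : anc T root w x) : False := by
  rcases le_total (T.dist root v) (T.dist root w) with h | h
  · exact h1 (anc_comparable hT hx hy h)
  · exact h2 (anc_comparable hT hy hx h)

lemma crossing (hT : T.IsTree) [DecidableEq V] {p c a b : V}
    (hpc : child T root p c) (hadj : T.Adj a b) (hb : anc T root c b) (ha : ¬anc T root c a) :
    b = c ∧ a = p := by
  rcases adj_cases (root := root) hT hadj with hab | hba
  · by_cases hbc : b = c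
    · subst hbc
      exact ⟨rfl, parent_unique hT hab.1 hab.2 hpc.1 hpc.2⟩
    · exfalso
      have hdcb : T.dist root c < T.dist root b := anc_depth_lt hT hb (fun h => hbc h.symm)
      have hda : T.dist root a + 1 = T.dist root b := by unfold child anc at hab; omega
      have : anc T root c a := anc_comparable hT hb hab.1 (by omega)
      exact ha this
  · exfalso
    exact ha (anc_trans hT hb hba.1).1

lemma gate_aux (hT : T.IsTree) [DecidableEq V] {p c : V} (hpc : child T root p c)
    {y x : V} (q : T.Walk y x) :
    q.length = T.dist y x → ¬anc T root c y → anc T root c x →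
    T.dist y p + 1 + T.dist c x = T.dist y x := by
  induction q with
  | nil => intro _ hy hx; exact absurd hx hy
  | @cons a b z hadj q ih =>
    intro hl hy hx
    rw [Walk.length_cons] at hl
    have hab : T.dist a b = 1 := SimpleGraph.dist_eq_one_iff_adj.mpr hadj
    have hbz : T.dist b z = q.length := by
      have h1 : T.dist b z ≤ q.length := SimpleGraph.dist_le q
      have h2 : T.dist a z ≤ T.dist a b + T.dist b z := tri hT a b z
      omega
    by_cases hcb : anc T root c b
    · obtain ⟨hbeq, haeq⟩ := crossing hT hpc hadj hcb hy
      have h0 : T.dist a p = 0 := by rw [haeq]; exact SimpleGraph.dist_self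
      have h1 : T.dist c z = T.dist b z := by rw [hbeq]
      omega
    · have hih := ih hbz.symm hcb hx
      have t1 : T.dist a p ≤ T.dist a b + T.dist b p := tri hT a b p
      have t2 : T.dist a z ≤ T.dist a p + T.dist p z := tri hT a p z
      have t3 : T.dist p z ≤ T.dist p c + T.dist c z := tri hT p c z
      have hpc2 : T.dist p c = 1 := hpc.2
      omega

lemma gate (hT : T.IsTree) [DecidableEq V] {p c y x : V} (hpc : child T root p c)
    (hx : anc T root c x) (hy : ¬anc T root c y) :
    T.dist y p + 1 + T.dist c x = T.dist y x := by
  obtain ⟨q, _, hql⟩ := exists_geodesic hT y x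
  exact gate_aux hT hpc q hql hy hx

end Rooted

section DownStem

open scoped Classical

variable {V : Type*} [Fintype V] {T : SimpleGraph V} {root : V}

/-- children of z (w.r.t. root) whose height is at least r -/
noncomputable def highChildren (T : SimpleGraph V) [Fintype V] (root : V) (r : ℕ) (z : V) :
    Finset V :=
  Finset.univ.filter (fun c => child T root z c ∧ r ≤ heightAt T root c)

lemma mem_highChildren {r : ℕ} {z c : V} :
    c ∈ highChildren T root r z ↔ child T root z c ∧ r ≤ heightAt T root c := by
  simp [highChildren]

lemma highChildren_card_pos_iff (hT : T.IsTree) {r : ℕ} {z : V} :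
    0 < (highChildren T root r z).card ↔ r + 1 ≤ heightAt T root z := by
  rw [Finset.card_pos]
  constructor
  · rintro ⟨c, hc⟩
    rw [mem_highChildren] at hc
    exact height_succ_iff hT |>.mpr ⟨c, hc.1, hc.2⟩
  · intro h'
    obtain ⟨c, hc1, hc2⟩ := (height_succ_iff hT).mp h'
    exact ⟨c, mem_highChildren.mpr ⟨hc1, hc2⟩⟩

variable [DecidableEq V] [DecidableRel T.Adj]

lemma anc_of_onPath (hT : T.IsTree) {v z u : V} (hvu : anc T root v u)
    (hz : T.dist v z + T.dist z u = T.dist v u) : anc T root v z ∧ anc T root z u := by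
  have t1 : T.dist root z ≤ T.dist root v + T.dist v z := tri hT root v z
  have t2 : T.dist root u ≤ T.dist root z + T.dist z u := tri hT root z u
  unfold anc at *
  constructor <;> omega

lemma mem_desc_ne_root (hT : T.IsTree) {v w : V} (hw : w ∈ descSet T root v) (hne : w ≠ v) :
    w ≠ root := by
  intro h
  subst h
  exact hne (anc_antisymm hT (anc_root hT v) (mem_descSet.mp hw))

/-- neighbours of v inside a subset of desc v of the standard form -/
lemma filter_adj_root (hT : T.IsTree) {v : V} {k : ℕ} :
    ((descSet T root v).filter (fun w => w = v ∨ k ≤ heightAt T root w)).filter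
      (fun w => T.Adj v w) = highChildren T root k v := by
  ext x
  simp only [Finset.mem_filter, mem_highChildren, mem_descSet]
  constructor
  · rintro ⟨⟨hxd, hxc⟩, hadj⟩
    have hxv : x ≠ v := fun h => by subst h; exact T.irrefl hadj
    have hchild : child T root v x := by
      rcases adj_cases (root := root) hT hadj with h | h
      · exact h
      · exact absurd (anc_antisymm hT hxd h.1).symm hxv
    exact ⟨hchild, by tauto⟩
  · rintro ⟨hc, hh⟩
    have hxv : x ≠ v := by
      intro h
      subst h
      have := hc.2
      simp [SimpleGraph.dist_self] at this
    exact ⟨⟨hc.1, Or.inr hh⟩, child_adj hT hc⟩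

lemma filter_adj_inner (hT : T.IsTree) {v w : V} {k : ℕ}
    (hw : w ∈ descSet T root v) (hne : w ≠ v) (hh : k ≤ heightAt T root w) :
    ∃ p, child T root p w ∧ p ∈ (descSet T root v).filter (fun z => z = v ∨ k ≤ heightAt T root z) ∧
    ((descSet T root v).filter (fun z => z = v ∨ k ≤ heightAt T root z)).filter
      (fun z => T.Adj w z) = insert p (highChildren T root k w) ∧
    p ∉ highChildren T root k w := by
  obtain ⟨p, hp1, hp2, hp3⟩ := exists_parent hT (mem_desc_ne_root hT hw hne)
  have hvw : anc T root v w := mem_descSet.mp hw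
  have hdvw : T.dist root v < T.dist root w := anc_depth_lt hT hvw hne.symm
  have hvp : anc T root v p := anc_comparable hT hvw hp1 (by omega)
  have hpA : p ∈ (descSet T root v).filter (fun z => z = v ∨ k ≤ heightAt T root z) := by
    rw [Finset.mem_filter]
    refine ⟨mem_descSet.mpr hvp, ?_⟩
    by_cases hpv : p = v
    · exact Or.inl hpv
    · right
      have := height_anc_le hT hp1
      omega
  have hpnc : p ∉ highChildren T root k w := by
    rw [mem_highChildren]
    rintro ⟨hc, -⟩
    have heq := anc_antisymm hT hc.1 hp1
    rw [← heq] at hp2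
    simp at hp2
  refine ⟨p, ⟨hp1, hp2⟩, hpA, ?_, hpnc⟩
  ext x
  simp only [Finset.mem_filter, Finset.mem_insert, mem_highChildren, mem_descSet]
  constructor
  · rintro ⟨⟨hxd, hxc⟩, hadj⟩
    rcases adj_cases (root := root) hT hadj with h | h
    · right
      refine ⟨h, ?_⟩
      rcases hxc with rfl | hxc
      · exact absurd (anc_antisymm hT h.1 hvw) hne
      · exact hxc
    · left
      exact parent_unique hT h.1 h.2 hp1 hp2
  · rintro (rfl | ⟨hc, hh'⟩)
    · have hm := Finset.mem_filter.mp hpA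
      exact ⟨⟨mem_descSet.mp hm.1, hm.2⟩, (child_adj hT ⟨hp1, hp2⟩).symm⟩
    · refine ⟨⟨(anc_trans hT hvw hc.1).1, Or.inr hh'⟩, child_adj hT hc⟩

/-- Characterization of iterated down-stemming of a subtree -/
lemma downStem_eq (hT : T.IsTree) (v : V) (k : ℕ) :
    downStemIter T v (descSet T root v) k =
      (descSet T root v).filter (fun w => w = v ∨ k ≤ heightAt T root w) := by
  induction k with
  | zero =>
    rw [downStemIter]
    symm
    apply Finset.filter_true_of_mem
    intro w _
    exact Or.inr (Nat.zero_le _)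
  | succ k ih =>
    rw [downStemIter, ih]
    ext w
    simp only [Finset.mem_filter]
    constructor
    · rintro ⟨⟨hwd, hwc⟩, hcond⟩
      refine ⟨hwd, ?_⟩
      rcases hcond with rfl | hdeg
      · exact Or.inl rfl
      · rcases hwc with rfl | hwh
        · exact Or.inl rfl
        · right
          by_cases hwv : w = v
          · subst hwv
            -- degIn at v: equals highChildren card
            unfold degIn at hdeg
            rw [filter_adj_root hT] at hdeg
            exact (highChildren_card_pos_iff hT).mp (by omega)
          · obtain ⟨p, hp, hpA, hfeq, hpnc⟩ := filter_adj_inner hT hwd hwv hwh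
            unfold degIn at hdeg
            rw [hfeq, Finset.card_insert_of_notMem hpnc] at hdeg
            exact (highChildren_card_pos_iff hT).mp (by omega)
    · rintro ⟨hwd, hwc⟩
      rcases hwc with rfl | hwh
      · exact ⟨⟨hwd, Or.inl rfl⟩, Or.inl rfl⟩
      · refine ⟨⟨hwd, Or.inr (by omega)⟩, ?_⟩
        by_cases hwv : w = v
        · exact Or.inl hwv
        · right
          obtain ⟨p, hp, hpA, hfeq, hpnc⟩ := filter_adj_inner (k := k) hT hwd hwv (by omega)
          unfold degIn
          rw [hfeq, Finset.card_insert_of_notMem hpnc]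
          have := (highChildren_card_pos_iff hT).mpr hwh
          omega

end DownStem

section NEchar

open scoped Classical

variable {V : Type*} [Fintype V] [DecidableEq V] {T : SimpleGraph V} [DecidableRel T.Adj]
  {root : V} {r : ℕ}

/-- structural pendant-chain predicate -/
def pend (T : SimpleGraph V) [Fintype V] (root : V) (r : ℕ) (v u : V) : Prop :=
  anc T root v u ∧ u ≠ v ∧ heightAt T root u = r ∧
  ∀ z, anc T root v z → anc T root z u → z ≠ v → z ≠ u → (highChildren T root r z).card = 1

lemma NEprop_iff (hT : T.IsTree) {v : V} :
    NEprop T root r v ↔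
      2 ≤ (highChildren T root r v).card ∧ ∃ u, pend T root r v u := by
  have hA := downStem_eq (root := root) hT v r
  have hdegv : degIn T (downStemIter T v (descSet T root v) r) v =
      (highChildren T root r v).card := by
    unfold degIn
    rw [hA, filter_adj_root hT]
  constructor
  · rintro ⟨hdeg, u, p, hp, hlen, hsupp, hdeg1, hdeg2⟩
    rw [hdegv] at hdeg
    refine ⟨hdeg, u, ?_⟩
    have huA := hsupp u p.end_mem_support
    rw [hA, Finset.mem_filter] at huA
    obtain ⟨hud, hcond⟩ := huA
    have hneuv : u ≠ v := by
      rintro rfl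
      rw [Walk.isPath_iff_eq_nil] at hp
      subst hp
      simp at hlen
    have hu_high : r ≤ heightAt T root u := by
      rcases hcond with h | h
      · exact absurd h hneuv
      · exact h
    obtain ⟨pu, hpu, hpuA, hfeq, hpnc⟩ := filter_adj_inner (k := r) hT hud hneuv hu_high
    unfold degIn at hdeg1
    rw [hA, hfeq, Finset.card_insert_of_notMem hpnc] at hdeg1
    have hczero : (highChildren T root r u).card = 0 := by omega
    have hhu : heightAt T root u = r := by
      have hnot : ¬ (r + 1 ≤ heightAt T root u) := by
        intro hcon
        have := (highChildren_card_pos_iff hT).mpr hcon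
        omega
      omega
    refine ⟨mem_descSet.mp hud, hneuv, hhu, ?_⟩
    intro z hvz hzu hznv hznu
    have honz : T.dist v z + T.dist z u = T.dist v u := (anc_trans hT hvz hzu).2
    have hzs : z ∈ p.support := by
      have hpl : p.length = T.dist v u := path_len hT p hp
      exact onPath_mem_support hT honz p hp
    have hdz := hdeg2 z hzs hznv hznu
    have hzd : z ∈ descSet T root v := mem_descSet.mpr hvz
    have hzh : r ≤ heightAt T root z := by
      have := height_anc_le hT hzu
      omega
    obtain ⟨pz, hpz, hpzA, hfeqz, hpncz⟩ := filter_adj_inner (k := r) hT hzd hznv hzh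
    unfold degIn at hdz
    rw [hA, hfeqz, Finset.card_insert_of_notMem hpncz] at hdz
    omega
  · rintro ⟨hdeg, u, hvu, hne, hhu, hchain⟩
    refine ⟨by rw [hdegv]; exact hdeg, u, ?_⟩
    obtain ⟨q, hq, hql⟩ := exists_geodesic hT v u
    have hdpos : 0 < T.dist v u := hT.isConnected.pos_dist_of_ne (fun h => hne h.symm)
    have hsupp : ∀ z ∈ q.support, z ∈ downStemIter T v (descSet T root v) r := by
      intro z hz
      have honz := mem_support_onPath hT q hq hz
      obtain ⟨hvz, hzu⟩ := anc_of_onPath hT hvu honz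
      rw [hA, Finset.mem_filter]
      refine ⟨mem_descSet.mpr hvz, ?_⟩
      by_cases hzv : z = v
      · exact Or.inl hzv
      · right
        have := height_anc_le hT hzu
        omega
    have hud : u ∈ descSet T root v := mem_descSet.mpr hvu
    obtain ⟨pu, hpu, hpuA, hfeq, hpnc⟩ := filter_adj_inner (k := r) hT hud hne (le_of_eq hhu.symm)
    have hdeg1 : degIn T (downStemIter T v (descSet T root v) r) u = 1 := by
      unfold degIn
      rw [hA, hfeq, Finset.card_insert_of_notMem hpnc]
      have hczero : (highChildren T root r u).card = 0 := by
        rcases Nat.eq_zero_or_pos (highChildren T root r u).card with h0 | hpos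
        · exact h0
        · have := (highChildren_card_pos_iff (z := u) (r := r) hT).mp hpos
          omega
      omega
    refine ⟨q, hq, by omega, hsupp, hdeg1, ?_⟩
    intro z hz hznv hznu
    have honz := mem_support_onPath hT q hq hz
    obtain ⟨hvz, hzu⟩ := anc_of_onPath hT hvu honz
    have hzd : z ∈ descSet T root v := mem_descSet.mpr hvz
    have hzh : r ≤ heightAt T root z := by
      have := height_anc_le hT hzu
      omega
    obtain ⟨pz, hpz, hpzA, hfeqz, hpncz⟩ := filter_adj_inner (k := r) hT hzd hznv hzh
    unfold degIn
    rw [hA, hfeqz, Finset.card_insert_of_notMem hpncz]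
    have := hchain z hvz hzu hznv hznu
    omega

end NEchar

section Main

open scoped Classical

variable {V : Type*} [Fintype V] [DecidableEq V] {T : SimpleGraph V} [DecidableRel T.Adj]
  {root : V} {r : ℕ}

lemma resolving_univ (k : ℕ) : IsRelaxedResolving T k ↑(Finset.univ : Finset V) := by
  intro u v h
  have := h v (by simp)
  rw [SimpleGraph.dist_self] at this
  rw [this]
  exact Nat.zero_le _

lemma MDk_le {k : ℕ} {S : Finset V} (hres : IsRelaxedResolving T k ↑S) :
    MDk T k ≤ S.card :=
  Nat.sInf_le ⟨S, hres, rfl⟩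

lemma exists_min_resolving (k : ℕ) :
    ∃ S : Finset V, IsRelaxedResolving T k ↑S ∧ S.card = MDk T k := by
  have hne : {n | ∃ S : Finset V, IsRelaxedResolving T k ↑S ∧ S.card = n}.Nonempty :=
    ⟨(Finset.univ : Finset V).card, Finset.univ, resolving_univ k, rfl⟩
  exact Nat.sInf_mem hne

/-- the set of height-r vertices -/
noncomputable def Hset (T : SimpleGraph V) (root : V) (r : ℕ) : Finset V :=
  Finset.univ.filter fun v => heightAt T root v = r

/-- the set of NE vertices -/
noncomputable def Eset (T : SimpleGraph V) [DecidableRel T.Adj] (root : V) (r : ℕ) : Finset V :=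
  Finset.univ.filter fun v => NEprop T root r v

lemma NL_eq : NL T root r = (Hset T root r).card := rfl

lemma NE_eq : NE T root r = (Eset T root r).card := by
  unfold NE Eset
  rw [← Set.ncard_coe_finset]
  congr 1
  ext v
  simp

lemma mem_Hset {v : V} : v ∈ Hset T root r ↔ heightAt T root v = r := by simp [Hset]

lemma mem_Eset {v : V} : v ∈ Eset T root r ↔ NEprop T root r v := by simp [Eset]

lemma H_antichain (hT : T.IsTree) {v v' : V} (hv : v ∈ Hset T root r)
    (hv' : v' ∈ Hset T root r) (hanc : anc T root v v') : v = v' := by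
  rw [mem_Hset] at hv hv'
  have := height_anc_le hT hanc
  have : T.dist v v' = 0 := by omega
  exact dist_zero hT this

lemma anc_median (hT : T.IsTree) (x y : V) :
    ∃ g, anc T root g x ∧ anc T root g y ∧ T.dist x g + T.dist g y = T.dist x y := by
  obtain ⟨g, h1, h2, h3⟩ := median hT x y root
  have c1 : T.dist x g = T.dist g x := SimpleGraph.dist_comm
  have c2 : T.dist y g = T.dist g y := SimpleGraph.dist_comm
  have c3 : T.dist x root = T.dist root x := SimpleGraph.dist_comm
  have c4 : T.dist y root = T.dist root y := SimpleGraph.dist_comm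
  have c5 : T.dist g root = T.dist root g := SimpleGraph.dist_comm
  exact ⟨g, by unfold anc; omega, by unfold anc; omega, h1⟩

/-- Two incomparable descendant-directions force big distance between deep points. -/
lemma deep_incomparable (hT : T.IsTree) {c c' u₁ u₂ : V}
    (hne : ¬ anc T root c c') (hne' : ¬ anc T root c' c)
    (h1 : anc T root c u₁) (h2 : anc T root c' u₂) :
    T.dist c u₁ + T.dist c' u₂ < T.dist u₁ u₂ + T.dist u₁ u₂ →
    False → False := fun _ h => h

lemma dist_deep (hT : T.IsTree) {c c' u₁ u₂ : V}
    (hcc' : ¬ anc T root c c') (hc'c : ¬ anc T root c' c)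
    (h1 : anc T root c u₁) (h2 : anc T root c' u₂) :
    ∃ g, anc T root g c ∧ anc T root g c' ∧ g ≠ c ∧ g ≠ c' ∧
      T.dist g u₁ + T.dist g u₂ = T.dist u₁ u₂ ∧
      T.dist g c + T.dist c u₁ = T.dist g u₁ ∧
      T.dist g c' + T.dist c' u₂ = T.dist g u₂ := by
  obtain ⟨g, hg1, hg2, hg3⟩ := anc_median (root := root) hT u₁ u₂
  have hgc : anc T root g c := by
    rcases le_total (T.dist root g) (T.dist root c) with h | h
    · exact anc_comparable hT hg1 h1 h
    · exact absurd (anc_trans hT (anc_comparable hT h1 hg1 h) hg2).1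
        (fun hcu => desc_disjoint hT hcc' hc'c hcu h2)
  have hgc' : anc T root g c' := by
    rcases le_total (T.dist root g) (T.dist root c')  with h | h
    · exact anc_comparable hT hg2 h2 h
    · exact absurd (anc_trans hT (anc_comparable hT h2 hg2 h) hg1).1
        (fun hcu => desc_disjoint hT hcc' hc'c h1 hcu)
  have hne1 : g ≠ c := by
    rintro rfl
    exact hcc' (anc_trans hT hgc' (anc_refl c')).1
  have hne2 : g ≠ c' := by
    rintro rfl
    exact hc'c (anc_trans hT hgc (anc_refl c)).1
  have e1 := (anc_trans hT hgc h1).2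
  have e2 := (anc_trans hT hgc' h2).2
  have cg : T.dist u₁ g = T.dist g u₁ := SimpleGraph.dist_comm
  exact ⟨g, hgc, hgc', hne1, hne2, by omega, e1, e2⟩

lemma children_incomparable (hT : T.IsTree) {v c c' : V}
    (h1 : child T root v c) (h2 : child T root v c') (hne : c ≠ c') :
    ¬ anc T root c c' ∧ ¬ anc T root c' c := by
  have d1 : T.dist root c = T.dist root v + 1 := by
    have := h1.1; have := h1.2; unfold anc at *; omega
  have d2 : T.dist root c' = T.dist root v + 1 := by
    have := h2.1; have := h2.2; unfold anc at *; omega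
  constructor
  · intro h
    have := anc_depth_lt hT h hne
    omega
  · intro h
    have := anc_depth_lt hT h hne.symm
    omega

lemma two_highChildren (hT : T.IsTree) {v : V} (h : 2 ≤ (highChildren T root r v).card) :
    ∃ c c', child T root v c ∧ child T root v c' ∧ c ≠ c' ∧
      r ≤ heightAt T root c ∧ r ≤ heightAt T root c' := by
  have h1 : 1 < (highChildren T root r v).card := by omega
  obtain ⟨c, hc, c', hc', hne⟩ := Finset.one_lt_card.mp h1
  rw [mem_highChildren] at hc hc'
  exact ⟨c, c', hc.1, hc'.1, hne, hc.2, hc'.2⟩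

/-- degenerate case: everything within distance 2r -/
lemma degenerate_H (hT : T.IsTree) (hdeg : ∀ a b : V, T.dist a b ≤ 2*r) :
    (Hset T root r).card ≤ 1 := by
  rw [Finset.card_le_one]
  intro v hv v' hv'
  by_contra hne
  obtain ⟨u₁, hu₁, hd₁⟩ := exists_height (T := T) (root := root) v
  obtain ⟨u₂, hu₂, hd₂⟩ := exists_height (T := T) (root := root) v'
  rw [mem_Hset] at hv hv'
  have hnc : ¬ anc T root v v' := fun h => hne (H_antichain hT (mem_Hset.mpr hv) (mem_Hset.mpr hv') h)
  have hnc' : ¬ anc T root v' v := fun h => hne (H_antichain hT (mem_Hset.mpr hv') (mem_Hset.mpr hv) h).symm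
  obtain ⟨g, hgc, hgc', hgne, hgne', hsum, he1, he2⟩ := dist_deep hT hnc hnc' hu₁ hu₂
  have hg1 : 1 ≤ T.dist g v := by
    have : T.dist g v ≠ 0 := fun h => hgne (dist_zero hT h)
    omega
  have hg2 : 1 ≤ T.dist g v' := by
    have : T.dist g v' ≠ 0 := fun h => hgne' (dist_zero hT h)
    omega
  have := hdeg u₁ u₂
  omega

lemma degenerate_E (hT : T.IsTree) (hdeg : ∀ a b : V, T.dist a b ≤ 2*r) :
    Eset T root r = ∅ := by
  rw [Finset.eq_empty_iff_forall_notMem]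
  intro v hv
  rw [mem_Eset, NEprop_iff hT] at hv
  obtain ⟨hcard, -⟩ := hv
  obtain ⟨c, c', hc, hc', hne, hhc, hhc'⟩ := two_highChildren hT hcard
  obtain ⟨u₁, hu₁, hd₁, -⟩ := exists_desc_at_dist hT hhc
  obtain ⟨u₂, hu₂, hd₂, -⟩ := exists_desc_at_dist hT hhc'
  obtain ⟨hic, hic'⟩ := children_incomparable hT hc hc' hne
  obtain ⟨g, hgc, hgc', hgne, hgne', hsum, he1, he2⟩ := dist_deep hT hic hic' hu₁ hu₂
  have hg1 : 1 ≤ T.dist g c := by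
    have : T.dist g c ≠ 0 := fun h => hgne (dist_zero hT h)
    omega
  have hg2 : 1 ≤ T.dist g c' := by
    have : T.dist g c' ≠ 0 := fun h => hgne' (dist_zero hT h)
    omega
  have := hdeg u₁ u₂
  omega

end Main

section Main2

open scoped Classical

variable {V : Type*} [Fintype V] [DecidableEq V] {T : SimpleGraph V} [DecidableRel T.Adj]
  {root : V} {r : ℕ}

lemma exists_height_exact_aux (hT : T.IsTree) :
    ∀ n (x : V), heightAt T root x ≤ n → r ≤ heightAt T root x →
    ∃ u, anc T root x u ∧ heightAt T root u = r := by
  intro n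
  induction n with
  | zero =>
    intro x hle hge
    exact ⟨x, anc_refl x, by omega⟩
  | succ n ih =>
    intro x hle hge
    by_cases heq : heightAt T root x = r
    · exact ⟨x, anc_refl x, heq⟩
    · obtain ⟨c, hc1, hc2, hc3⟩ := exists_desc_at_dist hT
        (show 1 ≤ heightAt T root x by omega)
      have hca : heightAt T root c + T.dist x c ≤ heightAt T root x := height_anc_le hT hc1
      obtain ⟨u, hu1, hu2⟩ := ih c (by omega) (by omega)
      exact ⟨u, (anc_trans hT hc1 hu1).1, hu2⟩

lemma exists_height_exact (hT : T.IsTree) {x : V} (h : r ≤ heightAt T root x) :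
    ∃ u, anc T root x u ∧ heightAt T root u = r :=
  exists_height_exact_aux hT (heightAt T root x) x le_rfl h

lemma walk_parity (hT : T.IsTree) :
    ∀ {a b : V} (p : T.Walk a b), (p.length + T.dist root a + T.dist root b) % 2 = 0 := by
  intro a b p
  induction p with
  | nil => simp only [Walk.length_nil]; omega
  | @cons a b' z hadj q ih =>
    rcases adj_depth (root := root) hT hadj with h | h <;>
      rw [Walk.length_cons] <;> omega

lemma dist_parity (hT : T.IsTree) (a b : V) :
    (T.dist a b + T.dist root a + T.dist root b) % 2 = 0 := by
  obtain ⟨p, -, hl⟩ := exists_geodesic hT a b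
  have := walk_parity (root := root) hT p
  omega

noncomputable def uvMap (T : SimpleGraph V) [Fintype V] (root : V) (r : ℕ) : V → V := fun v =>
  if h : ∃ u, pend T root r v u then h.choose else v

lemma uv_pend (hT : T.IsTree) {v : V} (hv : v ∈ Eset T root r) :
    pend T root r v (uvMap T root r v) := by
  rw [mem_Eset, NEprop_iff hT] at hv
  obtain ⟨-, hex⟩ := hv
  unfold uvMap
  rw [dif_pos hex]
  exact hex.choose_spec

lemma E_two (hT : T.IsTree) {v : V} (hv : v ∈ Eset T root r) :
    2 ≤ (highChildren T root r v).card := by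
  rw [mem_Eset, NEprop_iff hT] at hv
  exact hv.1

lemma two_high_height (hT : T.IsTree) {v : V} (h : 2 ≤ (highChildren T root r v).card) :
    r + 1 ≤ heightAt T root v :=
  (highChildren_card_pos_iff hT).mp (by omega)

lemma uv_inj (hT : T.IsTree) {v v' : V} (hv : v ∈ Eset T root r) (hv' : v' ∈ Eset T root r)
    (heq : uvMap T root r v = uvMap T root r v') : v = v' := by
  have hp := uv_pend hT hv
  have hp' := uv_pend hT hv'
  rw [heq] at hp
  set u := uvMap T root r v' with hu
  by_contra hne
  -- v and v' are both ancestors of u, hence comparable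
  have haux : ∀ a b : V, a ∈ Eset T root r → b ∈ Eset T root r →
      pend T root r a u → pend T root r b u → anc T root a b → a ≠ b → False := by
    intro a b ha hb hpa hpb hab hne
    have hbu : b ≠ u := by
      intro h
      have h1 := two_high_height hT (E_two hT hb)
      rw [h] at h1
      have := hpa.2.2.1
      omega
    have := hpa.2.2.2 b hab hpb.1 (fun h => hne h.symm) hbu
    have := E_two hT hb
    omega
  rcases le_total (T.dist root v) (T.dist root v') with h | h
  · exact haux v v' hv hv' hp hp' (anc_comparable hT hp.1 hp'.1 h) hne
  · exact haux v' v hv' hv hp' hp (anc_comparable hT hp'.1 hp.1 h) (fun h => hne h.symm)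

noncomputable def Dset (T : SimpleGraph V) [Fintype V] [DecidableRel T.Adj] (root : V) (r : ℕ) :
    Finset V :=
  (Eset T root r).image (uvMap T root r)

lemma D_sub_H (hT : T.IsTree) : Dset T root r ⊆ Hset T root r := by
  intro u hu
  rw [Dset, Finset.mem_image] at hu
  obtain ⟨v, hv, rfl⟩ := hu
  exact mem_Hset.mpr (uv_pend hT hv).2.2.1

lemma D_card (hT : T.IsTree) : (Dset T root r).card = (Eset T root r).card :=
  Finset.card_image_of_injOn (fun v hv v' hv' heq => uv_inj hT hv hv' heq)

noncomputable def Sstar (T : SimpleGraph V) [Fintype V] [DecidableRel T.Adj] (root : V) (r : ℕ) :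
    Finset V :=
  insert root (Hset T root r \ Dset T root r)

lemma Sstar_card (hT : T.IsTree) (hroot : r + 1 ≤ heightAt T root root) :
    (Sstar T root r).card = (Hset T root r).card - (Eset T root r).card + 1 := by
  have hnr : root ∉ Hset T root r \ Dset T root r := by
    intro h
    rw [Finset.mem_sdiff, mem_Hset] at h
    omega
  rw [Sstar, Finset.card_insert_of_notMem hnr,
    Finset.card_sdiff_of_subset (D_sub_H hT), D_card hT]

end Main2

section Upper

open scoped Classical

variable {V : Type*} [Fintype V] [DecidableEq V] {T : SimpleGraph V} [DecidableRel T.Adj]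
  {root : V} {r : ℕ}

lemma lemC (hT : T.IsTree) :
    ∀ n (x : V), (descSet T root x).card ≤ n → r ≤ heightAt T root x →
    (∀ s ∈ Sstar T root r, ¬ anc T root x s) →
    ∃ v, v ∈ Eset T root r ∧ anc T root v x ∧ v ≠ x ∧ anc T root x (uvMap T root r v) := by
  intro n
  induction n with
  | zero =>
    intro x hcard _ _
    have := Finset.card_pos.mpr ⟨x, desc_nonempty (T := T) (root := root) x⟩
    omega
  | succ n ih =>
    intro x hcard hhx hfree
    obtain ⟨u₁, hxu₁, hhu₁⟩ := exists_height_exact hT hhx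
    have hu₁H : u₁ ∈ Hset T root r := mem_Hset.mpr hhu₁
    have hu₁nS : u₁ ∉ Sstar T root r := fun h => hfree u₁ h hxu₁
    have hu₁D : u₁ ∈ Dset T root r := by
      by_contra h
      exact hu₁nS (by
        rw [Sstar]
        exact Finset.mem_insert_of_mem (Finset.mem_sdiff.mpr ⟨hu₁H, h⟩))
    obtain ⟨v₁, hv₁E, hv₁u⟩ := Finset.mem_image.mp hu₁D
    have hpend₁ := uv_pend hT hv₁E
    rw [hv₁u] at hpend₁
    by_cases hcase : anc T root v₁ x ∧ v₁ ≠ x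
    · refine ⟨v₁, hv₁E, hcase.1, hcase.2, ?_⟩
      rw [hv₁u]
      exact hxu₁
    · exfalso
      have hanc : anc T root x v₁ := by
        rcases le_total (T.dist root v₁) (T.dist root x) with hdep | hdep
        · have hvx := anc_comparable hT hpend₁.1 hxu₁ hdep
          by_cases hne : v₁ = x
          · rw [← hne]; exact anc_refl v₁
          · exact absurd ⟨hvx, hne⟩ hcase
        · exact anc_comparable hT hxu₁ hpend₁.1 hdep
      obtain ⟨c, c', hc, hc', hnecc, hhc, hhc'⟩ := two_highChildren hT (E_two hT hv₁E)
      obtain ⟨hic, hic'⟩ := children_incomparable hT hc hc' hnecc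
      have hpick : ∃ c₂, child T root v₁ c₂ ∧ r ≤ heightAt T root c₂ ∧ ¬ anc T root c₂ u₁ := by
        by_cases h : anc T root c u₁
        · exact ⟨c', hc', hhc', fun h' => desc_disjoint hT hic hic' h h'⟩
        · exact ⟨c, hc, hhc, h⟩
      obtain ⟨c₂, hc₂, hhc₂, hnc₂u⟩ := hpick
      have hxc₂ : anc T root x c₂ := (anc_trans hT hanc hc₂.1).1
      have hfree₂ : ∀ s ∈ Sstar T root r, ¬ anc T root c₂ s :=
        fun s hs h => hfree s hs (anc_trans hT hxc₂ h).1
      have hsub : descSet T root c₂ ⊆ descSet T root x := by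
        intro z hz
        exact mem_descSet.mpr (anc_trans hT hxc₂ (mem_descSet.mp hz)).1
      have hxnot : x ∉ descSet T root c₂ := by
        intro h
        have h1 : anc T root c₂ x := mem_descSet.mp h
        have h2 : x = c₂ := anc_antisymm hT hxc₂ h1
        have h3 : v₁ = x := anc_antisymm hT (h2 ▸ hc₂.1) hanc
        have := hc₂.2
        rw [h3, ← h2] at this
        simp at this
      have hlt : (descSet T root c₂).card < (descSet T root x).card :=
        Finset.card_lt_card ⟨hsub, fun hsup => hxnot (hsup (desc_nonempty x))⟩
      obtain ⟨v₂, hv₂E, hv₂c₂, hv₂ne, hv₂uv⟩ := ih c₂ (by omega) hhc₂ hfree₂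
      have hdep₂ : T.dist root v₂ ≤ T.dist root v₁ := by
        have l1 : T.dist root v₂ < T.dist root c₂ := anc_depth_lt hT hv₂c₂ hv₂ne
        have l2 : T.dist root c₂ = T.dist root v₁ + 1 := by
          have e1 := hc₂.1
          have e2 := hc₂.2
          unfold anc at e1
          omega
        omega
      have hanc₂ : anc T root v₂ v₁ := anc_comparable hT hv₂c₂ hc₂.1 hdep₂
      by_cases hv21 : v₂ = v₁
      · rw [hv21, hv₁u] at hv₂uv
        exact hnc₂u hv₂uv
      · have hpend₂ := uv_pend hT hv₂E
        have hanc_v₁_uv : anc T root v₁ (uvMap T root r v₂) :=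
          (anc_trans hT hc₂.1 hv₂uv).1
        have hv₁ne_uv : v₁ ≠ uvMap T root r v₂ := by
          intro h
          have h1 := two_high_height hT (E_two hT hv₁E)
          have h2 := hpend₂.2.2.1
          rw [← h] at h2
          omega
        have hone := hpend₂.2.2.2 v₁ hanc₂ hanc_v₁_uv (fun h => hv21 h.symm) hv₁ne_uv
        have := E_two hT hv₁E
        omega

/-- one branch of the resolving argument: if s ∈ S* lies below c, contradiction -/
lemma Sstar_branch_free (hT : T.IsTree) {u w m c : V} {t : ℕ}
    (heq : ∀ s ∈ Sstar T root r, T.dist u s = T.dist w s)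
    (hmc : child T root m c) (hcu : anc T root c u)
    (hdcu : 1 + T.dist c u = T.dist m u) (hdmu : T.dist m u = t) (hdmw : T.dist m w = t)
    (hsum : T.dist u m + T.dist m w = T.dist u w) (ht : 1 ≤ t) :
    ∀ s ∈ Sstar T root r, ¬ anc T root c s := by
  intro s hs hcs
  have hncw : ¬ anc T root c w := by
    intro hcw
    have e1 := (anc_trans hT hmc.1 hcw).2
    have e2 : T.dist u w ≤ T.dist u c + T.dist c w := tri hT u c w
    have e3 : T.dist u c = T.dist c u := SimpleGraph.dist_comm
    have e4 := hmc.2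
    have e6 : T.dist u m = T.dist m u := SimpleGraph.dist_comm
    omega
  have hgate : T.dist w m + 1 + T.dist c s = T.dist w s := gate hT hmc hcs hncw
  have huw := heq s hs
  have e2 : T.dist u s ≤ T.dist u c + T.dist c s := tri hT u c s
  have e3 : T.dist u c = T.dist c u := SimpleGraph.dist_comm
  have e5 : T.dist w m = T.dist m w := SimpleGraph.dist_comm
  omega

lemma Sstar_resolving (hT : T.IsTree) :
    IsRelaxedResolving T (2*r) ↑(Sstar T root r) := by
  intro u w heq'
  have heq : ∀ s ∈ Sstar T root r, T.dist u s = T.dist w s := by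
    intro s hs
    exact heq' s (by exact_mod_cast hs)
  by_contra hgt
  push_neg at hgt
  have hroot : root ∈ Sstar T root r := Finset.mem_insert_self _ _
  have hdroot := heq root hroot
  have hpar := dist_parity (root := root) hT u w
  have hcomm1 : T.dist u root = T.dist root u := SimpleGraph.dist_comm
  have hcomm2 : T.dist w root = T.dist root w := SimpleGraph.dist_comm
  have hdepth : T.dist root u = T.dist root w := by omega
  -- d u w = 2t with t ≥ r+1
  obtain ⟨g, hgu, hgw, hgsum⟩ := anc_median (root := root) hT u w
  have hdg : T.dist g u = T.dist g w := by
    unfold anc at hgu hgw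
    omega
  set t := T.dist g u with htdef
  have ht : r + 1 ≤ t := by
    have hcomm3 : T.dist u g = T.dist g u := SimpleGraph.dist_comm
    omega
  have hgne_u : g ≠ u := by
    intro h
    rw [h] at htdef
    simp [SimpleGraph.dist_self] at htdef
    omega
  have hgne_w : g ≠ w := by
    intro h
    rw [h] at hdg
    simp [SimpleGraph.dist_self] at hdg
    omega
  obtain ⟨c, hc, hcu, hdcu⟩ := exists_child_toward hT hgu hgne_u
  obtain ⟨c', hc', hc'w, hdc'w⟩ := exists_child_toward hT hgw hgne_w
  have hnecc : c ≠ c' := by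
    intro h
    subst h
    have e1 : T.dist u w ≤ T.dist u c + T.dist c w := tri hT u c w
    have e2 : T.dist u c = T.dist c u := SimpleGraph.dist_comm
    have e3 : T.dist u g = T.dist g u := SimpleGraph.dist_comm
    omega
  have hcomm3 : T.dist u g = T.dist g u := SimpleGraph.dist_comm
  have hfree_c : ∀ s ∈ Sstar T root r, ¬ anc T root c s :=
    Sstar_branch_free hT heq hc hcu hdcu rfl hdg.symm (by omega) (by omega)
  have heq2 : ∀ s ∈ Sstar T root r, T.dist w s = T.dist u s := fun s hs => (heq s hs).symm
  have hfree_c' : ∀ s ∈ Sstar T root r, ¬ anc T root c' s := by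
    refine Sstar_branch_free hT heq2 hc' hc'w hdc'w hdg.symm rfl ?_ (by omega)
    have e1 : T.dist w g = T.dist g w := SimpleGraph.dist_comm
    have e2 : T.dist w u = T.dist u w := SimpleGraph.dist_comm
    omega
  have hhc : r ≤ heightAt T root c := by
    have := le_height (mem_descSet.mpr hcu)
    omega
  have hhc' : r ≤ heightAt T root c' := by
    have := le_height (mem_descSet.mpr hc'w)
    have e1 : T.dist w g = T.dist g w := SimpleGraph.dist_comm
    omega
  obtain ⟨v₁, hv₁E, hv₁c, hv₁ne, hv₁uv⟩ := lemC hT _ c le_rfl hhc hfree_c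
  obtain ⟨v₂, hv₂E, hv₂c, hv₂ne, hv₂uv⟩ := lemC hT _ c' le_rfl hhc' hfree_c'
  -- both v₁, v₂ must equal g
  have hkey : ∀ v cc, v ∈ Eset T root r → child T root g cc → anc T root v cc → v ≠ cc →
      anc T root cc (uvMap T root r v) → v = g := by
    intro v cc hvE hgcc hvcc hvne hvuv
    by_contra hvg
    have hdep : T.dist root v ≤ T.dist root g := by
      have l1 : T.dist root v < T.dist root cc := anc_depth_lt hT hvcc hvne
      have e1 := hgcc.1
      have e2 := hgcc.2
      unfold anc at e1
      omega
    have hvganc : anc T root v g := anc_comparable hT hvcc hgcc.1 hdep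
    have hpendv := uv_pend hT hvE
    have hganc_uv : anc T root g (uvMap T root r v) := (anc_trans hT hgcc.1 hvuv).1
    have hgne_uv : g ≠ uvMap T root r v := by
      intro h
      have h1 : heightAt T root (uvMap T root r v) = r := hpendv.2.2.1
      have h2 : r + 1 ≤ heightAt T root g := by
        have l3 := height_anc_le hT hc.1
        have l4 := hc.2
        omega
      rw [← h] at h1
      omega
    have hone := hpendv.2.2.2 g hvganc hganc_uv (fun h => hvg h.symm) hgne_uv
    -- but g has two distinct high children c, c'
    have h2 : 2 ≤ (highChildren T root r g).card := by
      have hmem : c ∈ highChildren T root r g := mem_highChildren.mpr ⟨hc, hhc⟩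
      have hmem' : c' ∈ highChildren T root r g := mem_highChildren.mpr ⟨hc', hhc'⟩
      exact Finset.one_lt_card.mpr ⟨c, hmem, c', hmem', hnecc⟩
    omega
  have hv₁g := hkey v₁ c hv₁E hc hv₁c hv₁ne hv₁uv
  have hv₂g := hkey v₂ c' hv₂E hc' hv₂c hv₂ne hv₂uv
  -- then uv v₁ = uv v₂ lies below both c and c'
  obtain ⟨hic, hic'⟩ := children_incomparable hT hc hc' hnecc
  rw [hv₁g] at hv₁uv
  rw [hv₂g] at hv₂uv
  exact desc_disjoint hT hic hic' hv₁uv hv₂uv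

end Upper

section Lower

open scoped Classical

variable {V : Type*} [Fintype V] [DecidableEq V] {T : SimpleGraph V} [DecidableRel T.Adj]
  {root : V} {r : ℕ}

/-- candidate tops for v : ancestors x of v such that every z with v ⊲ z ⊴ x has exactly
one high child -/
noncomputable def cand (T : SimpleGraph V) [Fintype V] (root : V) (r : ℕ) (v : V) : Finset V :=
  Finset.univ.filter (fun x => anc T root x v ∧
    ∀ z, anc T root z v → anc T root x z → z ≠ v → (highChildren T root r z).card = 1)

lemma self_mem_cand (hT : T.IsTree) (v : V) : v ∈ cand T root r v := by
  rw [cand, Finset.mem_filter]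
  refine ⟨Finset.mem_univ v, anc_refl v, ?_⟩
  intro z hzv hvz hne
  exact absurd (anc_antisymm hT hzv hvz) hne

lemma exists_top (hT : T.IsTree) (v : V) :
    ∃ x ∈ cand T root r v, ∀ y ∈ cand T root r v, T.dist root x ≤ T.dist root y :=
  Finset.exists_min_image (cand T root r v) (fun x => T.dist root x) ⟨v, self_mem_cand hT v⟩

/-- any high vertex in the subtree of a candidate top is comparable with v -/
lemma branch_high (hT : T.IsTree) {v x y : V} (hx : x ∈ cand T root r v)
    (hy : anc T root x y) (hhy : r ≤ heightAt T root y) (hhv : heightAt T root v = r) :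
    anc T root y v ∨ anc T root v y := by
  rw [cand, Finset.mem_filter] at hx
  obtain ⟨-, hxv, hchain⟩ := hx
  obtain ⟨g, hgy, hgv, hgsum⟩ := anc_median (root := root) hT y v
  have hxg : anc T root x g := by
    rcases le_total (T.dist root x) (T.dist root g) with h | h
    · exact anc_comparable hT hxv hgv h
    · have hgx : anc T root g x := anc_comparable hT hgv hxv h
      have e1 := (anc_trans hT hgx hy).2
      have e2 := (anc_trans hT hgx hxv).2
      have e3 := (anc_trans hT hgy (anc_refl y)).1
      have t1 : T.dist y v ≤ T.dist y x + T.dist x v := tri hT y x v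
      have c1 : T.dist y g = T.dist g y := SimpleGraph.dist_comm
      have c2 : T.dist y x = T.dist x y := SimpleGraph.dist_comm
      have hzero : T.dist g x = 0 := by omega
      have := dist_zero hT hzero
      rw [← this]
      exact anc_refl g
  by_cases hgveq : g = v
  · right
    rw [← hgveq]
    exact hgy
  by_cases hgyeq : g = y
  · left
    rw [← hgyeq]
    exact hgv
  · exfalso
    have hone := hchain g hgv hxg hgveq
    obtain ⟨cy, hcy, hcyy, hcyd⟩ := exists_child_toward hT hgy hgyeq
    obtain ⟨cv, hcv, hcvv, hcvd⟩ := exists_child_toward hT hgv hgveq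
    have hnecc : cy ≠ cv := by
      intro h
      subst h
      have e1 : T.dist y v ≤ T.dist y cy + T.dist cy v := tri hT y cy v
      have c1 : T.dist y cy = T.dist cy y := SimpleGraph.dist_comm
      have c2 : T.dist y g = T.dist g y := SimpleGraph.dist_comm
      omega
    have hm1 : cy ∈ highChildren T root r g := by
      rw [mem_highChildren]
      refine ⟨hcy, ?_⟩
      have := height_anc_le hT hcyy
      omega
    have hm2 : cv ∈ highChildren T root r g := by
      rw [mem_highChildren]
      refine ⟨hcv, ?_⟩
      have := height_anc_le hT hcvv
      omega
    have := Finset.one_lt_card.mpr ⟨cy, hm1, cv, hm2, hnecc⟩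
    omega

/-- disjointness of the top-subtrees, one-sided version -/
lemma top_disjoint_aux (hT : T.IsTree) {v v' tv tv' x : V}
    (hv : v ∈ Hset T root r) (hv' : v' ∈ Hset T root r)
    (htv : tv ∈ cand T root r v) (htv' : tv' ∈ cand T root r v')
    (hx : anc T root tv x) (hx' : anc T root tv' x)
    (hdep : T.dist root tv ≤ T.dist root tv') : v = v' := by
  have hanc : anc T root tv tv' := anc_comparable hT hx hx' hdep
  rw [mem_Hset] at hv hv'
  have hhtv' : r ≤ heightAt T root tv' := by
    have hm := (Finset.mem_filter.mp htv').2.1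
    have := height_anc_le hT hm
    rw [cand] at htv'
    omega
  rcases branch_high hT htv hanc hhtv' hv with h | h
  · -- anc tv' v, so v ∈ desc tv', v is high
    rcases branch_high hT htv' ((anc_trans hT (Finset.mem_filter.mp htv').2.1 (anc_refl _)).1) (by omega) hv' with h2 | h2
    all_goals {
      rcases branch_high hT htv' h (le_of_eq hv.symm) hv' with h3 | h3
      · exact (H_antichain hT (mem_Hset.mpr hv) (mem_Hset.mpr hv') h3)
      · exact (H_antichain hT (mem_Hset.mpr hv') (mem_Hset.mpr hv) h3).symm
    }
  · -- anc v tv', then anc v v'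
    have := (anc_trans hT h (Finset.mem_filter.mp htv').2.1).1
    exact H_antichain hT (mem_Hset.mpr hv) (mem_Hset.mpr hv') this

lemma top_disjoint (hT : T.IsTree) {v v' tv tv' x : V}
    (hv : v ∈ Hset T root r) (hv' : v' ∈ Hset T root r)
    (htv : tv ∈ cand T root r v) (htv' : tv' ∈ cand T root r v')
    (hx : anc T root tv x) (hx' : anc T root tv' x) : v = v' := by
  rcases le_total (T.dist root tv) (T.dist root tv') with h | h
  · exact top_disjoint_aux hT hv hv' htv htv' hx hx' h
  · exact (top_disjoint_aux hT hv' hv htv' htv hx' hx h).symm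

/-- main construction for a free vertex : the parent of its top is an NE vertex -/
lemma free_to_E (hT : T.IsTree) {S : Finset V} (hSne : S.Nonempty) {v tv : V}
    (hv : v ∈ Hset T root r) (htv : tv ∈ cand T root r v)
    (htvmin : ∀ y ∈ cand T root r v, T.dist root tv ≤ T.dist root y)
    (hfree : ∀ s ∈ S, ¬ anc T root tv s) :
    ∃ p, NEprop T root r p ∧ child T root p tv := by
  have htvroot : tv ≠ root := by
    intro h
    obtain ⟨s₀, hs₀⟩ := hSne
    exact hfree s₀ hs₀ (h ▸ anc_root hT s₀)
  obtain ⟨p, hp1, hp2, hp3⟩ := exists_parent hT htvroot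
  have hcandtv := Finset.mem_filter.mp htv
  have hptv : child T root p tv := ⟨hp1, hp2⟩
  have hpv : anc T root p v := (anc_trans hT hp1 hcandtv.2.1).1
  have hhtv : r ≤ heightAt T root tv := by
    have := height_anc_le hT hcandtv.2.1
    rw [mem_Hset] at hv
    omega
  have hpnotcand : p ∉ cand T root r v := by
    intro h
    have := htvmin p h
    omega
  have hzfail : ∃ z, anc T root z v ∧ anc T root p z ∧ z ≠ v ∧
      (highChildren T root r z).card ≠ 1 := by
    by_contra hcon
    push_neg at hcon
    exact hpnotcand (by
      rw [cand, Finset.mem_filter]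
      exact ⟨Finset.mem_univ p, hpv, fun z h1 h2 h3 => hcon z h1 h2 h3⟩)
  obtain ⟨z, hz1, hz2, hz3, hz4⟩ := hzfail
  have hzp : z = p := by
    by_contra hne
    have hd : T.dist root tv ≤ T.dist root z := by
      have := anc_depth_lt hT hz2 (fun h => hne h.symm)
      omega
    have hanc : anc T root tv z := anc_comparable hT hcandtv.2.1 hz1 hd
    exact hz4 (hcandtv.2.2 z hz1 hanc hz3)
  subst hzp
  have hmem : tv ∈ highChildren T root r z := mem_highChildren.mpr ⟨hptv, hhtv⟩
  have hcard2 : 2 ≤ (highChildren T root r z).card := by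
    have := Finset.card_pos.mpr ⟨tv, hmem⟩
    omega
  refine ⟨z, (NEprop_iff hT).mpr ⟨hcard2, v, ?_⟩, hptv⟩
  rw [mem_Hset] at hv
  refine ⟨hz1, fun h => hz3 h.symm, hv, ?_⟩
  intro w hzw hwv hwz hwv'
  have hd : T.dist root tv ≤ T.dist root w := by
    have := anc_depth_lt hT hzw (fun h => hwz h.symm)
    omega
  have hanc : anc T root tv w := anc_comparable hT hcandtv.2.1 hwv hd
  exact hcandtv.2.2 w hwv hanc hwv'

/-- two distinct free vertices cannot map to the same parent -/
lemma free_parent_inj (hT : T.IsTree) {S : Finset V}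
    (hres : IsRelaxedResolving T (2*r) ↑S) {v v' tv tv' p : V}
    (hv : v ∈ Hset T root r) (hv' : v' ∈ Hset T root r)
    (htv : tv ∈ cand T root r v) (htv' : tv' ∈ cand T root r v')
    (hfree : ∀ s ∈ S, ¬ anc T root tv s) (hfree' : ∀ s ∈ S, ¬ anc T root tv' s)
    (hp : child T root p tv) (hp' : child T root p tv') : v = v' := by
  by_contra hne
  have hnetv : tv ≠ tv' := by
    intro h
    exact hne (top_disjoint hT hv hv' htv htv' (h ▸ anc_refl tv) (anc_refl tv'))
  obtain ⟨hic, hic'⟩ := children_incomparable hT hp hp' hnetv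
  have hhtv : r ≤ heightAt T root tv := by
    have := height_anc_le hT (Finset.mem_filter.mp htv).2.1
    rw [mem_Hset] at hv
    omega
  have hhtv' : r ≤ heightAt T root tv' := by
    have := height_anc_le hT (Finset.mem_filter.mp htv').2.1
    rw [mem_Hset] at hv'
    omega
  obtain ⟨u₁, hu₁a, hu₁d, -⟩ := exists_desc_at_dist hT hhtv
  obtain ⟨u₂, hu₂a, hu₂d, -⟩ := exists_desc_at_dist hT hhtv'
  have hu₁p : T.dist p u₁ = 1 + r := by
    have := (anc_trans hT hp.1 hu₁a).2
    have e := hp.2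
    omega
  have hu₂p : T.dist p u₂ = 1 + r := by
    have := (anc_trans hT hp'.1 hu₂a).2
    have e := hp'.2
    omega
  have heqs : ∀ s ∈ (S : Set V), T.dist u₁ s = T.dist u₂ s := by
    intro s hs
    have hs' : s ∈ S := hs
    have g1 : T.dist s p + 1 + T.dist tv u₁ = T.dist s u₁ :=
      gate hT hp hu₁a (hfree s hs')
    have g2 : T.dist s p + 1 + T.dist tv' u₂ = T.dist s u₂ :=
      gate hT hp' hu₂a (hfree' s hs')
    have c1 : T.dist u₁ s = T.dist s u₁ := SimpleGraph.dist_comm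
    have c2 : T.dist u₂ s = T.dist s u₂ := SimpleGraph.dist_comm
    omega
  have := hres u₁ u₂ heqs
  have hnc : ¬ anc T root tv u₂ := fun h => desc_disjoint hT hic hic' h hu₂a
  have hgate : T.dist u₂ p + 1 + T.dist tv u₁ = T.dist u₂ u₁ := gate hT hp hu₁a hnc
  have c3 : T.dist u₂ p = T.dist p u₂ := SimpleGraph.dist_comm
  have c4 : T.dist u₁ u₂ = T.dist u₂ u₁ := SimpleGraph.dist_comm
  omega

/-- the lower bound -/
lemma lower_bound (hT : T.IsTree) {S : Finset V}
    (hres : IsRelaxedResolving T (2*r) ↑S) (hSne : S.Nonempty) :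
    (Hset T root r).card ≤ S.card + (Eset T root r).card := by
  have hcand : ∀ v : V, ∃ x, x ∈ cand T root r v ∧
      ∀ y ∈ cand T root r v, T.dist root x ≤ T.dist root y := by
    intro v
    obtain ⟨x, hx, hmin⟩ := exists_top (r := r) hT v
    exact ⟨x, hx, hmin⟩
  choose top htop htopmin using hcand
  set F := (Hset T root r).filter (fun v => ∀ s ∈ S, ¬ anc T root (top v) s) with hF
  set G := (Hset T root r).filter (fun v => ¬ ∀ s ∈ S, ¬ anc T root (top v) s) with hG
  have hsplit : F.card + G.card = (Hset T root r).card := by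
    rw [hF, hG]
    exact Finset.card_filter_add_card_filter_not _
  -- G injects into S
  have hGS : G.card ≤ S.card := by
    have hchoice : ∀ v ∈ G, ∃ s, s ∈ S ∧ anc T root (top v) s := by
      intro v hv
      rw [hG, Finset.mem_filter] at hv
      push_neg at hv
      obtain ⟨s, hs1, hs2⟩ := hv.2
      exact ⟨s, hs1, hs2⟩
    choose sw hsw1 hsw2 using hchoice
    exact Finset.card_le_card_of_injOn (fun v => if h : v ∈ G then sw v h else v)
      (by
        intro v hv
        rw [Finset.mem_coe] at hv ⊢
        simp only [dif_pos hv]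
        exact hsw1 v hv)
      (by
        intro v hv v' hv' heq
        rw [Finset.mem_coe] at hv hv'
        simp only [dif_pos hv, dif_pos hv'] at heq
        have h1 := hsw2 v hv
        have h2 := hsw2 v' hv'
        rw [heq] at h1
        rw [hG, Finset.mem_filter] at hv hv'
        exact top_disjoint hT hv.1 hv'.1 (htop v) (htop v') h1 h2)
  -- F injects into Eset
  have hFE : F.card ≤ (Eset T root r).card := by
    have hchoice : ∀ v ∈ F, ∃ p, NEprop T root r p ∧ child T root p (top v) := by
      intro v hv
      rw [hF, Finset.mem_filter] at hv
      exact free_to_E hT hSne hv.1 (htop v) (htopmin v) hv.2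
    choose pw hpw1 hpw2 using hchoice
    exact Finset.card_le_card_of_injOn (fun v => if h : v ∈ F then pw v h else v)
      (by
        intro v hv
        rw [Finset.mem_coe] at hv ⊢
        simp only [dif_pos hv]
        rw [mem_Eset]
        exact hpw1 v hv)
      (by
        intro v hv v' hv' heq
        rw [Finset.mem_coe] at hv hv'
        simp only [dif_pos hv, dif_pos hv'] at heq
        have h2 := hpw2 v hv
        have h2' := hpw2 v' hv'
        rw [heq] at h2
        rw [hF, Finset.mem_filter] at hv hv'
        exact free_parent_inj hT hres hv.1 hv'.1 (htop v) (htop v') hv.2 hv'.2 h2 h2')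
  omega

end Lower

section Final

open scoped Classical

variable {V : Type*} [Fintype V] [DecidableEq V] {T : SimpleGraph V} [DecidableRel T.Adj]
  {root : V} {r : ℕ}

lemma root_height (hT : T.IsTree) (hmain : ∃ a b : V, 2*r + 1 ≤ T.dist a b) :
    r + 1 ≤ heightAt T root root := by
  obtain ⟨a, b, hab⟩ := hmain
  have t1 : T.dist a b ≤ T.dist a root + T.dist root b := tri hT a root b
  have c1 : T.dist a root = T.dist root a := SimpleGraph.dist_comm
  have h1 : T.dist root a ≤ heightAt T root root :=
    le_height (mem_descSet.mpr (anc_root hT a))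
  have h2 : T.dist root b ≤ heightAt T root root :=
    le_height (mem_descSet.mpr (anc_root hT b))
  omega

end Final

end StmtAux



open StmtAux in
theorem stmt_12_aux {V : Type*} [Fintype V] [DecidableEq V] (T : SimpleGraph V)
    [DecidableRel T.Adj] (hT : T.IsTree) (root : V) (r : ℕ) :
    ∃ ε : ℤ, ε ∈ ({-1, 0, 1} : Set ℤ) ∧
      (MDk T (2 * r) : ℤ) = (NL T root r : ℤ) - (NE T root r : ℤ) + ε := by
  classical
  have h1 : NL T root r = (Hset T root r).card := NL_eq
  have h2 : NE T root r = (Eset T root r).card := NE_eq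
  by_cases hmain : ∃ a b : V, 2*r + 1 ≤ T.dist a b
  · have hht := root_height (root := root) hT hmain
    have hupper : MDk T (2*r) ≤ (Hset T root r).card - (Eset T root r).card + 1 := by
      have := MDk_le (Sstar_resolving (root := root) (r := r) hT)
      rwa [Sstar_card hT hht] at this
    have hEH : (Eset T root r).card ≤ (Hset T root r).card := by
      rw [← D_card (root := root) hT]
      exact Finset.card_le_card (D_sub_H hT)
    have hlower : (Hset T root r).card ≤ MDk T (2*r) + (Eset T root r).card := by
      obtain ⟨S, hres, hcard⟩ := exists_min_resolving (T := T) (2*r)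
      have hSne : S.Nonempty := by
        rcases Finset.eq_empty_or_nonempty S with rfl | h
        · exfalso
          obtain ⟨a, b, hab⟩ := hmain
          have := hres a b (by intro s hs; simp at hs)
          omega
        · exact h
      have := lower_bound (root := root) hT hres hSne
      omega
    refine ⟨(MDk T (2*r) : ℤ) - (NL T root r : ℤ) + (NE T root r : ℤ), ?_, by ring⟩
    simp only [Set.mem_insert_iff, Set.mem_singleton_iff]
    rw [h1, h2]
    omega
  · push_neg at hmain
    have hdeg : ∀ a b : V, T.dist a b ≤ 2*r := by
      intro a b
      have := hmain a b
      omega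
    have hMD : MDk T (2*r) = 0 := by
      have h0 : IsRelaxedResolving T (2*r) ↑(∅ : Finset V) := fun u v _ => hdeg u v
      have := MDk_le h0
      simpa using this
    have hH : NL T root r ≤ 1 := by
      rw [h1]
      exact degenerate_H (root := root) hT hdeg
    have hE : NE T root r = 0 := by
      rw [h2, degenerate_E (root := root) hT hdeg]
      simp
    refine ⟨-(NL T root r : ℤ), ?_, ?_⟩
    · simp only [Set.mem_insert_iff, Set.mem_singleton_iff]
      omega
    · rw [hMD, hE]
      push_cast
      ring

/-- For any finite rooted tree `T` and nonnegative integer `r`,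
`MD_{2r}(T) = N^L_r(T) - N^E_r(T) + ε` for some `ε ∈ {-1, 0, 1}`. -/
theorem stmt_12 {V : Type*} [Fintype V] [DecidableEq V] (T : SimpleGraph V)
    [DecidableRel T.Adj] (hT : T.IsTree) (root : V) (r : ℕ) :
    ∃ ε : ℤ, ε ∈ ({-1, 0, 1} : Set ℤ) ∧
      (MDk T (2 * r) : ℤ) = (NL T root r : ℤ) - (NE T root r : ℤ) + ε :=
  stmt_12_aux T hT root r
end
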